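/- arXiv:1006.0518 — 7 statements merged into one kernel-verified Lean document; each statement's English description precedes it below -/
import Mathlib

section
/- The inclusion-exclusion function Q_ρ is a polynomial; in fact, over the complex numbers, Q_ρ(z) = ∏_ω (z − ω), where the product is taken over all complex roots of unity ω satisfying ω^{n₀} = 1 but ω^{n₀/rᵢ} ≠ 1 for every 1 ≤ i ≤ s. Moreover, the degree of Q_ρ equals φ(ρ) = ∏_{i=1}^{s} (rᵢ − 1). -/
/-!
Write `n_S = ∏_{i ∉ S} rᵢ`. Over `ℂ`, `X ^ n_S - 1` is the product of `X - ω` over the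
`n_S`-th roots of unity, so both sides of the identity are products of linear factors and it
suffices to compare multiplicities. Any `ω` occurring is an `n₀`-th root of unity; if `d` is its
order, pairwise coprimality gives `d ∣ n_S ↔ S ⊆ T := {i | gcd(d, rᵢ) = 1}`. Hence the even side
minus the odd side contains `ω` exactly `∑_{S ⊆ T} (-1)^|S| = [T = ∅]` times, and `T = ∅` says
precisely that `ω ^ (n₀ / rᵢ) ≠ 1` for all `i`. Comparing degrees then gives
`deg Q = ∑_S (-1)^|S| n_S = ∏ᵢ (rᵢ - 1)`.
-/

open Finset Function Polynomial
open scoped Classical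

section Parity

variable {ι R : Type*} [CommRing R]

theorem Finset.sum_filter_even_sub_sum_filter_odd (s : Finset ι) (f : ι → ℕ) (g : ι → R) :
    ∑ i ∈ s with Even (f i), g i - ∑ i ∈ s with Odd (f i), g i =
      ∑ i ∈ s, (-1) ^ f i * g i := by
  have h_even : ∑ i ∈ s with Even (f i), (-1) ^ f i * g i = ∑ i ∈ s with Even (f i), g i :=
    sum_congr rfl fun i hi => by rw [(mem_filter.1 hi).2.neg_one_pow, one_mul]
  have h_odd : ∑ i ∈ s with ¬Even (f i), (-1) ^ f i * g i = -∑ i ∈ s with Odd (f i), g i := by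
    simp only [Nat.not_even_iff_odd, ← sum_neg_distrib]
    exact sum_congr rfl fun i hi => by rw [(mem_filter.1 hi).2.neg_one_pow, neg_one_mul]
  rw [← sum_filter_add_sum_filter_not s (fun i => Even (f i)), h_even, h_odd, sub_eq_add_neg]

variable [Fintype ι] [DecidableEq ι]

theorem Finset.sum_filter_even_sub_sum_filter_odd_prod_compl (x : ι → R) :
    ∑ S : Finset ι with Even #S, ∏ i ∈ Sᶜ, x i - ∑ S : Finset ι with Odd #S, ∏ i ∈ Sᶜ, x i =
      ∏ i, (x i - 1) := by
  rw [sum_filter_even_sub_sum_filter_odd, prod_sub, powerset_univ]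
  simp [compl_eq_univ_sdiff]

theorem Finset.sum_filter_even_sub_sum_filter_odd_indicator_subset (T : Finset ι) :
    ∑ S : Finset ι with Even #S, (if S ⊆ T then 1 else 0 : ℤ) -
        ∑ S : Finset ι with Odd #S, (if S ⊆ T then 1 else 0 : ℤ) =
      if T = ∅ then 1 else 0 := by
  rw [sum_filter_even_sub_sum_filter_odd, ← sum_powerset_neg_one_pow_card, ← filter_subset_univ,
    sum_filter]
  simp only [mul_ite, mul_one, mul_zero]

end Parity

section Coprime

variable {ι : Type*} [Fintype ι] [DecidableEq ι] {r : ι → ℕ}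

theorem Nat.prod_div_prod_eq_prod_compl (S : Finset ι) (hr : ∀ i ∈ S, 0 < r i) :
    (∏ i, r i) / ∏ i ∈ S, r i = ∏ i ∈ Sᶜ, r i := by
  rw [← prod_mul_prod_compl S r, Nat.mul_div_cancel_left _ (prod_pos hr)]

theorem Nat.dvd_prod_compl_iff_forall_coprime (hr : Pairwise (Nat.Coprime on r)) {d : ℕ}
    (hd : d ∣ ∏ i, r i) (S : Finset ι) :
    d ∣ ∏ i ∈ Sᶜ, r i ↔ ∀ i ∈ S, d.Coprime (r i) := by
  refine ⟨fun h i hi => Nat.Coprime.coprime_dvd_left h (Nat.Coprime.prod_left fun k hk => ?_),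
    fun h => ?_⟩
  · exact hr (ne_of_mem_of_not_mem hi (mem_compl.1 hk)).symm
  · rw [← prod_mul_prod_compl S r] at hd
    exact (Nat.Coprime.prod_right h).dvd_of_dvd_mul_left hd

variable {M : Type*} [Monoid M]

theorem pow_prod_compl_eq_one_iff_subset (hr : Pairwise (Nat.Coprime on r)) {x : M}
    (hx : x ^ ∏ i, r i = 1) (S : Finset ι) :
    x ^ ∏ i ∈ Sᶜ, r i = 1 ↔ S ⊆ ({i | (orderOf x).Coprime (r i)} : Finset ι) := by
  rw [← orderOf_dvd_iff_pow_eq_one,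
    Nat.dvd_prod_compl_iff_forall_coprime hr (orderOf_dvd_of_pow_eq_one hx)]
  simp [subset_iff]

theorem pow_eq_one_inclusion_exclusion (hr : Pairwise (Nat.Coprime on r)) (x : M) :
    (if x ^ ∏ i, r i = 1 ∧ ∀ i, x ^ ∏ k ∈ {i}ᶜ, r k ≠ 1 then 1 else 0 : ℤ) +
        ∑ S : Finset ι with Odd #S, (if x ^ ∏ i ∈ Sᶜ, r i = 1 then 1 else 0 : ℤ) =
      ∑ S : Finset ι with Even #S, (if x ^ ∏ i ∈ Sᶜ, r i = 1 then 1 else 0 : ℤ) := by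
  by_cases hx : x ^ ∏ i, r i = 1
  · set T : Finset ι := {i | (orderOf x).Coprime (r i)}
    have hT : (∀ i, x ^ ∏ k ∈ {i}ᶜ, r k ≠ 1) ↔ T = ∅ := by
      simp [pow_prod_compl_eq_one_iff_subset hr hx, T, eq_empty_iff_forall_notMem]
    have h := sum_filter_even_sub_sum_filter_odd_indicator_subset T
    simp only [pow_prod_compl_eq_one_iff_subset hr hx, hx, true_and, hT]
    linarith
  · have hS (S : Finset ι) : x ^ ∏ i ∈ Sᶜ, r i ≠ 1 := fun h =>
      hx (by rw [← prod_mul_prod_compl S r, mul_comm, pow_mul, h, one_pow])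
    simp [hx, hS]

end Coprime

section Polynomial

theorem Polynomial.count_nthRootsFinset {R : Type*} [CommRing R] [IsDomain R] [DecidableEq R]
    {n : ℕ} (hn : 0 < n) (a x : R) :
    (nthRootsFinset n a).val.count x = if x ^ n = a then 1 else 0 := by
  simp only [Multiset.count_eq_of_nodup (nthRootsFinset n a).nodup, mem_val,
    mem_nthRootsFinset hn]

theorem Complex.prod_X_pow_sub_one_eq_prod_sum_nthRootsFinset {α : Type*} (t : Finset α)
    (n : α → ℕ) (hn : ∀ a ∈ t, 0 < n a) :
    ∏ a ∈ t, (X ^ n a - 1 : ℂ[X]) =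
      ((∑ a ∈ t, (nthRootsFinset (n a) (1 : ℂ)).val).map (X - C ·)).prod := by
  rw [← Multiset.coe_mapAddMonoidHom, map_sum, Multiset.prod_sum]
  exact prod_congr rfl fun a ha =>
    X_pow_sub_one_eq_prod (hn a ha) (Complex.isPrimitiveRoot_exp _ (hn a ha).ne')

variable {ι : Type*} [Fintype ι] [DecidableEq ι] {r : ι → ℕ}

theorem prod_X_sub_C_mul_prod_odd_eq_prod_even (hr₀ : ∀ i, 0 < r i)
    (hr : Pairwise (Nat.Coprime on r))
    [DecidablePred fun ω : ℂ => ∀ i, ω ^ ∏ k ∈ {i}ᶜ, r k ≠ 1] :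
    (∏ ω ∈ nthRootsFinset (∏ i, r i) (1 : ℂ) with ∀ i, ω ^ ∏ k ∈ {i}ᶜ, r k ≠ 1, (X - C ω)) *
        ∏ S : Finset ι with Odd #S, (X ^ ∏ i ∈ Sᶜ, r i - 1 : ℂ[X]) =
      ∏ S : Finset ι with Even #S, (X ^ ∏ i ∈ Sᶜ, r i - 1 : ℂ[X]) := by
  have hpos : ∀ S : Finset ι, 0 < ∏ i ∈ Sᶜ, r i := fun S => prod_pos fun i _ => hr₀ i
  rw [Complex.prod_X_pow_sub_one_eq_prod_sum_nthRootsFinset _ _ fun S _ => hpos S,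
    Complex.prod_X_pow_sub_one_eq_prod_sum_nthRootsFinset _ _ fun S _ => hpos S,
    prod_eq_multiset_prod, ← Multiset.prod_add, ← Multiset.map_add]
  congr 2
  ext ω
  rw [Multiset.count_add, Multiset.count_sum', Multiset.count_sum',
    Multiset.count_eq_of_nodup (nodup _)]
  simp only [count_nthRootsFinset (hpos _), mem_val, mem_filter,
    mem_nthRootsFinset (prod_pos fun i _ => hr₀ i)]
  exact_mod_cast pow_eq_one_inclusion_exclusion hr ω

theorem natDegree_eq_prod_sub_one_of_mul_prod_odd_eq_prod_even {R : Type*} [CommRing R]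
    [IsDomain R] (hr₀ : ∀ i, 0 < r i) {Q : R[X]}
    (hQ : Q * ∏ S : Finset ι with Odd #S, (X ^ ∏ i ∈ Sᶜ, r i - 1 : R[X]) =
      ∏ S : Finset ι with Even #S, (X ^ ∏ i ∈ Sᶜ, r i - 1 : R[X])) :
    Q.natDegree = ∏ i, (r i - 1) := by
  have hmonic (S : Finset ι) : (X ^ ∏ i ∈ Sᶜ, r i - 1 : R[X]).Monic := by
    simpa using monic_X_pow_sub_C (1 : R) (prod_pos fun i _ => hr₀ i).ne'
  have hdeg (S : Finset ι) : (X ^ ∏ i ∈ Sᶜ, r i - 1 : R[X]).natDegree = ∏ i ∈ Sᶜ, r i := by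
    simpa using natDegree_X_pow_sub_C (n := ∏ i ∈ Sᶜ, r i) (r := (1 : R))
  have hQ₀ : Q ≠ 0 := by
    rintro rfl
    exact (monic_prod_of_monic _ _ fun S _ => hmonic S).ne_zero (by simpa using hQ.symm)
  have h := congrArg natDegree hQ
  rw [natDegree_mul hQ₀ (monic_prod_of_monic _ _ fun S _ => hmonic S).ne_zero,
    natDegree_prod_of_monic _ _ fun S _ => hmonic S,
    natDegree_prod_of_monic _ _ fun S _ => hmonic S] at h
  simp only [hdeg] at h
  have hZ := sum_filter_even_sub_sum_filter_odd_prod_compl (fun i => (r i : ℤ))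
  zify [fun i => (hr₀ i)] at h ⊢
  linarith

end Polynomial

theorem stmt_0_general (s : ℕ) (r : Fin s → ℕ) (hr : ∀ i, 1 < r i)
    (hcop : ∀ i j, i ≠ j → Nat.Coprime (r i) (r j))
    (n₀ : ℕ) (hn₀ : n₀ = ∏ i, r i)
    (Q : Polynomial ℂ)
    (hQ : Q = ∏ ω ∈ (Polynomial.nthRootsFinset n₀ (1 : ℂ)).filter
        (fun ω => ∀ i, ω ^ (n₀ / r i) ≠ 1), (X - C ω)) :
    Q * (∏ S ∈ Finset.univ.filter (fun S : Finset (Fin s) => Odd S.card),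
        ((X : Polynomial ℂ) ^ (n₀ / ∏ i ∈ S, r i) - 1)) =
      (∏ S ∈ Finset.univ.filter (fun S : Finset (Fin s) => Even S.card),
        ((X : Polynomial ℂ) ^ (n₀ / ∏ i ∈ S, r i) - 1)) ∧
    Q.natDegree = ∏ i, (r i - 1) := by
  subst hn₀
  have hr₀ (i : Fin s) : 0 < r i := zero_lt_one.trans (hr i)
  have hexp (S : Finset (Fin s)) : (∏ i, r i) / ∏ i ∈ S, r i = ∏ i ∈ Sᶜ, r i :=
    Nat.prod_div_prod_eq_prod_compl S fun i _ => hr₀ i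
  have hexp_single (i : Fin s) : (∏ i, r i) / r i = ∏ k ∈ {i}ᶜ, r k := by
    simpa using hexp {i}
  have hroots : Q = ∏ ω ∈ nthRootsFinset (∏ i, r i) (1 : ℂ) with ∀ i, ω ^ ∏ k ∈ {i}ᶜ, r k ≠ 1,
      (X - C ω) := by
    rw [hQ]
    exact prod_congr (filter_congr fun ω _ => by simp only [hexp_single]) fun _ _ => rfl
  subst hroots
  simp only [hexp]
  have key := prod_X_sub_C_mul_prod_odd_eq_prod_even hr₀ fun i j => hcop i j
  exact ⟨key, natDegree_eq_prod_sub_one_of_mul_prod_odd_eq_prod_even hr₀ key⟩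

/-- The inclusion-exclusion function `Q_ρ` is a polynomial: over `ℂ` it equals
`∏_ω (z - ω)`, the product over all roots of unity `ω` with `ω ^ n₀ = 1` but
`ω ^ (n₀ / rᵢ) ≠ 1` for all `i`; moreover its degree is `∏ᵢ (rᵢ - 1)`. -/
theorem stmt_0 (s : ℕ) (hs : 1 ≤ s) (r : Fin s → ℕ) (hr : ∀ i, 1 < r i)
    (hcop : ∀ i j, i ≠ j → Nat.Coprime (r i) (r j))
    (n₀ : ℕ) (hn₀ : n₀ = ∏ i, r i)
    (Q : Polynomial ℂ)
    (hQ : Q = ∏ ω ∈ (Polynomial.nthRootsFinset n₀ (1 : ℂ)).filter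
        (fun ω => ∀ i, ω ^ (n₀ / r i) ≠ 1), (X - C ω)) :
    Q * (∏ S ∈ Finset.univ.filter (fun S : Finset (Fin s) => Odd S.card),
        ((X : Polynomial ℂ) ^ (n₀ / ∏ i ∈ S, r i) - 1)) =
      (∏ S ∈ Finset.univ.filter (fun S : Finset (Fin s) => Even S.card),
        ((X : Polynomial ℂ) ^ (n₀ / ∏ i ∈ S, r i) - 1)) ∧
    Q.natDegree = ∏ i, (r i - 1) :=
  stmt_0_general s r hr hcop n₀ hn₀ Q hQ
end

section
/- Let D = { d : d ∣ n₀ and gcd(d, rᵢ) > 1 for all 1 ≤ i ≤ s }. Then Q_ρ(z) = ∏_{d ∈ D} Φ_d(z), where Φ_d denotes the d-th cyclotomic polynomial. Equivalently, ∏_{|S| even} (z^{n_S} − 1) = (∏_{d ∈ D} Φ_d(z)) · ∏_{|S| odd} (z^{n_S} − 1) as polynomials over ℤ. -/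
open Polynomial

lemma aux_dvd_iff {s : ℕ} (r : Fin s → ℕ) (hr : ∀ i, 1 < r i)
    (hcop : ∀ i j, i ≠ j → Nat.Coprime (r i) (r j)) {d : ℕ} (hd : d ∣ ∏ i, r i)
    (S : Finset (Fin s)) :
    d ∣ (∏ i, r i) / ∏ i ∈ S, r i ↔ ∀ i ∈ S, Nat.Coprime d (r i) := by
  have hmpos : 0 < ∏ i ∈ S, r i := Finset.prod_pos fun i _ => lt_trans one_pos (hr i)
  have hsplit : (∏ i ∈ S, r i) * ∏ i ∈ Sᶜ, r i = ∏ i, r i := Finset.prod_mul_prod_compl S r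
  have hq : (∏ i, r i) / ∏ i ∈ S, r i = ∏ i ∈ Sᶜ, r i := by
    rw [← hsplit, Nat.mul_div_cancel_left _ hmpos]
  rw [hq]
  constructor
  · intro h i hi
    have hci : Nat.Coprime (r i) (∏ j ∈ Sᶜ, r j) :=
      Nat.Coprime.prod_right fun j hj =>
        hcop i j (fun hij => (Finset.mem_compl.mp hj) (hij ▸ hi))
    exact (Nat.Coprime.coprime_dvd_right h hci).symm
  · intro h
    have hcd : Nat.Coprime d (∏ i ∈ S, r i) := Nat.Coprime.prod_right fun i hi => h i hi
    exact hcd.dvd_of_dvd_mul_left (hsplit ▸ hd)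

lemma aux_count {α : Type*} [DecidableEq α] (U : Finset α) :
    (U.powerset.filter fun S => Even S.card).card
      = (if U = ∅ then 1 else 0) + (U.powerset.filter fun S => Odd S.card).card := by
  have h := Finset.sum_powerset_neg_one_pow_card (x := U)
  rw [← Finset.sum_filter_add_sum_filter_not U.powerset (fun S => Even S.card)] at h
  have h1 : ∑ S ∈ U.powerset.filter (fun S => Even S.card), ((-1 : ℤ)) ^ S.card
      = ((U.powerset.filter fun S => Even S.card).card : ℤ) := by
    rw [Finset.sum_congr rfl fun S hS => (Finset.mem_filter.mp hS).2.neg_one_pow,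
      Finset.sum_const, nsmul_eq_mul, mul_one]
  have heq : (U.powerset.filter fun S => ¬ Even S.card)
      = U.powerset.filter fun S => Odd S.card := by
    simp [Nat.not_even_iff_odd]
  have h2 : ∑ S ∈ U.powerset.filter (fun S => ¬ Even S.card), ((-1 : ℤ)) ^ S.card
      = -((U.powerset.filter fun S => Odd S.card).card : ℤ) := by
    rw [heq, Finset.sum_congr rfl fun S hS => (Finset.mem_filter.mp hS).2.neg_one_pow,
      Finset.sum_const, nsmul_eq_mul, mul_neg_one]
  rw [h1, h2] at h
  split_ifs at h ⊢ <;> omega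

/-- `Q_ρ = ∏_{d ∈ D} Φ_d` where `D = { d ∣ n₀ : gcd(d, rᵢ) > 1 for all i }`:
equivalently, `∏_{|S| even} (z^{n_S} - 1) = (∏_{d ∈ D} Φ_d) · ∏_{|S| odd} (z^{n_S} - 1)`
as polynomials over `ℤ`. -/
theorem stmt_1 (s : ℕ) (hs : 1 ≤ s) (r : Fin s → ℕ) (hr : ∀ i, 1 < r i)
    (hcop : ∀ i j, i ≠ j → Nat.Coprime (r i) (r j))
    (n₀ : ℕ) (hn₀ : n₀ = ∏ i, r i)
    (D : Finset ℕ) (hD : D = n₀.divisors.filter (fun d => ∀ i, 1 < Nat.gcd d (r i))) :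
    (∏ S ∈ Finset.univ.filter (fun S : Finset (Fin s) => Even S.card),
        ((X : Polynomial ℤ) ^ (n₀ / ∏ i ∈ S, r i) - 1)) =
      (∏ d ∈ D, Polynomial.cyclotomic d ℤ) *
      (∏ S ∈ Finset.univ.filter (fun S : Finset (Fin s) => Odd S.card),
        ((X : Polynomial ℤ) ^ (n₀ / ∏ i ∈ S, r i) - 1)) := by
  classical
  have hrpos : ∀ i, 0 < r i := fun i => lt_trans one_pos (hr i)
  have hn0pos : 0 < n₀ := hn₀ ▸ Finset.prod_pos fun i _ => hrpos i
  -- expand each `X^{n_S} - 1` as a product of cyclotomics over divisors of n₀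
  have key : ∀ S : Finset (Fin s),
      (X : Polynomial ℤ) ^ (n₀ / ∏ i ∈ S, r i) - 1
        = ∏ d ∈ n₀.divisors,
            if d ∣ n₀ / ∏ i ∈ S, r i then cyclotomic d ℤ else 1 := by
    intro S
    have hm : (∏ i ∈ S, r i) ∣ n₀ := by
      rw [hn₀]
      exact Finset.prod_dvd_prod_of_subset S Finset.univ r (Finset.subset_univ S)
    have hdvd : (n₀ / ∏ i ∈ S, r i) ∣ n₀ := Nat.div_dvd_of_dvd hm
    have hmpos : 0 < ∏ i ∈ S, r i := Finset.prod_pos fun i _ => hrpos i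
    have hpos : 0 < n₀ / ∏ i ∈ S, r i := Nat.div_pos (Nat.le_of_dvd hn0pos hm) hmpos
    rw [← prod_cyclotomic_eq_X_pow_sub_one hpos ℤ,
      ← Nat.divisors_filter_dvd_of_dvd hn0pos.ne' hdvd, Finset.prod_filter]
  have L : ∀ (E : Finset (Finset (Fin s))),
      ∏ S ∈ E, ((X : Polynomial ℤ) ^ (n₀ / ∏ i ∈ S, r i) - 1)
        = ∏ d ∈ n₀.divisors,
            cyclotomic d ℤ ^ (E.filter fun S => d ∣ n₀ / ∏ i ∈ S, r i).card := by
    intro E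
    rw [Finset.prod_congr rfl fun S _ => key S, Finset.prod_comm]
    refine Finset.prod_congr rfl fun d _ => ?_
    rw [Finset.prod_ite, Finset.prod_const, Finset.prod_const_one, mul_one]
  have hDp : ∏ d ∈ D, cyclotomic d ℤ
      = ∏ d ∈ n₀.divisors, if (∀ i, 1 < Nat.gcd d (r i)) then cyclotomic d ℤ else 1 := by
    rw [hD, Finset.prod_filter]
  rw [L, L, hDp, ← Finset.prod_mul_distrib]
  refine Finset.prod_congr rfl fun d hd => ?_
  have hdd : d ∣ n₀ := (Nat.mem_divisors.mp hd).1
  have hdd' : d ∣ ∏ i, r i := hn₀ ▸ hdd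
  set U : Finset (Fin s) := Finset.univ.filter (fun i => Nat.Coprime d (r i)) with hU
  have hfilt : ∀ (P : Finset (Fin s) → Prop) [DecidablePred P],
      ((Finset.univ.filter fun S : Finset (Fin s) => P S).filter
          fun S => d ∣ n₀ / ∏ i ∈ S, r i)
        = U.powerset.filter fun S => P S := by
    intro P _
    rw [Finset.filter_filter]
    ext S
    simp only [Finset.mem_filter, Finset.mem_univ, true_and, Finset.mem_powerset]
    rw [hn₀, aux_dvd_iff r hr hcop hdd']
    constructor
    · rintro ⟨hP, hc⟩
      exact ⟨fun i hi => Finset.mem_filter.mpr ⟨Finset.mem_univ i, hc i hi⟩, hP⟩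
    · rintro ⟨hsub, hP⟩
      exact ⟨hP, fun i hi => (Finset.mem_filter.mp (hsub hi)).2⟩
  rw [hfilt (fun S => Even S.card), hfilt (fun S => Odd S.card)]
  have hUe : (U = ∅) ↔ (∀ i, 1 < Nat.gcd d (r i)) := by
    rw [Finset.filter_eq_empty_iff]
    constructor <;> intro h i
    · have := h (Finset.mem_univ i)
      have hg : 0 < Nat.gcd d (r i) := Nat.gcd_pos_of_pos_right d (hrpos i)
      rw [Nat.coprime_iff_gcd_eq_one] at this
      omega
    · intro _
      have := h i
      rw [Nat.coprime_iff_gcd_eq_one]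
      omega
  have hcount := aux_count U
  rw [hcount, pow_add]
  congr 1
  by_cases h : ∀ i, 1 < Nat.gcd d (r i)
  · rw [if_pos (hUe.mpr h), if_pos h, pow_one]
  · rw [if_neg (fun he => h (hUe.mp he)), if_neg h, pow_zero]
end

section
/- The inclusion-exclusion polynomial Q_ρ is reciprocal: Q_ρ(z) = z^{φ(ρ)} · Q_ρ(1/z), where φ(ρ) = ∏ᵢ (rᵢ − 1) is the degree of Q_ρ. Consequently, its coefficients a_m satisfy a_m = a_{φ(ρ) − m} for all 0 ≤ m ≤ φ(ρ). -/
open Polynomial Finset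

/-!
Each factor `z ^ n - 1` is anti-reciprocal: `z ^ n * ((1 / z) ^ n - 1) = -(z ^ n - 1)`.
Write `n_S = ∏_{i ∉ S} rᵢ`. Expanding `∏ᵢ (rᵢ - 1)` gives `∑_S (-1) ^ |S| n_S`, so the product
`B` over even `S` has degree `φ(ρ)` more than the product `A` over odd `S`. A nonempty set has as
many subsets of even as of odd size, so reflecting `Q * A = B` at `deg B` multiplies `A` and `B`
by the same sign, and cancelling `A` leaves `Q` reflected at `φ(ρ)` equal to `Q`.
-/

section Reflect

variable {R : Type*} [CommRing R]

lemma coeff_eq_coeff_sub_of_reflect_eq {p : R[X]} {N m : ℕ} (hp : p.reflect N = p) (hm : m ≤ N) :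
    p.coeff m = p.coeff (N - m) := by
  rw [← hp, coeff_reflect, revAt_le hm, hp]

lemma natDegree_X_pow_sub_one_le (n : ℕ) : ((X : R[X]) ^ n - 1).natDegree ≤ n :=
  (natDegree_sub_le _ _).trans (by simpa using natDegree_X_pow_le n)

lemma reflect_X_pow_sub_one (n : ℕ) : ((X : R[X]) ^ n - 1).reflect n = -(X ^ n - 1) := by
  rw [reflect_sub, reflect_monomial, reflect_one, revAt_le le_rfl, Nat.sub_self]
  ring

lemma reflect_prod_X_pow_sub_one {ι : Type*} (T : Finset ι) (m : ι → ℕ) :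
    (∏ i ∈ T, ((X : R[X]) ^ m i - 1)).reflect (∑ i ∈ T, m i) =
      (-1) ^ #T * ∏ i ∈ T, ((X : R[X]) ^ m i - 1) := by
  classical
  induction T using Finset.induction_on with
  | empty => simp
  | insert a T ha ih =>
    have hdeg : (∏ i ∈ T, ((X : R[X]) ^ m i - 1)).natDegree ≤ ∑ i ∈ T, m i :=
      (natDegree_prod_le _ _).trans (sum_le_sum fun i _ => natDegree_X_pow_sub_one_le (m i))
    rw [prod_insert ha, sum_insert ha, card_insert_of_notMem ha,
      reflect_mul _ _ (natDegree_X_pow_sub_one_le _) hdeg, ih, reflect_X_pow_sub_one]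
    ring

lemma monic_X_pow_sub_one {n : ℕ} (hn : n ≠ 0) : ((X : R[X]) ^ n - 1).Monic := by
  simpa using monic_X_pow_sub_C (1 : R) hn

lemma monic_prod_X_pow_sub_one {ι : Type*} (T : Finset ι) {m : ι → ℕ} (hm : ∀ i ∈ T, m i ≠ 0) :
    (∏ i ∈ T, ((X : R[X]) ^ m i - 1)).Monic :=
  monic_prod_of_monic _ _ fun i hi => monic_X_pow_sub_one (hm i hi)

lemma natDegree_prod_X_pow_sub_one [Nontrivial R] {ι : Type*} (T : Finset ι) {m : ι → ℕ}
    (hm : ∀ i ∈ T, m i ≠ 0) :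
    (∏ i ∈ T, ((X : R[X]) ^ m i - 1)).natDegree = ∑ i ∈ T, m i := by
  rw [natDegree_prod_of_monic _ _ fun i hi => monic_X_pow_sub_one (hm i hi)]
  exact sum_congr rfl fun i _ => by simpa using natDegree_X_pow_sub_C (n := m i) (r := (1 : R))

lemma reflect_eq_self_of_mul_eq [IsDomain R] {Q A B c : R[X]} {d a : ℕ} (hc : c ≠ 0)
    (hA0 : A ≠ 0) (hA : A.natDegree = a) (hB : B.natDegree = d + a)
    (hAr : A.reflect a = c * A) (hBr : B.reflect (d + a) = c * B) (h : Q * A = B) :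
    Q.reflect d = Q := by
  have hQ : Q.natDegree ≤ d := by
    rcases eq_or_ne Q 0 with rfl | hQ0
    · simp
    · have := natDegree_mul hQ0 hA0
      rw [h, hB, hA] at this
      omega
  apply mul_right_cancel₀ (mul_ne_zero hc hA0)
  calc Q.reflect d * (c * A) = (Q * A).reflect (d + a) := by
        rw [reflect_mul _ _ hQ hA.le, hAr]
    _ = Q * (c * A) := by rw [h, hBr, ← h]; ring

end Reflect

section Parity

variable {ι R : Type*} [CommRing R]

lemma sum_neg_one_pow_mul_eq_sum_even_sub_sum_odd (s : Finset ι) (k : ι → ℕ) (f : ι → R) :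
    ∑ x ∈ s, (-1) ^ k x * f x = ∑ x ∈ s with Even (k x), f x - ∑ x ∈ s with Odd (k x), f x := by
  rw [← sum_filter_add_sum_filter_not s (fun x => Even (k x)), sub_eq_add_neg, ← sum_neg_distrib]
  simp only [Nat.not_even_iff_odd]
  congr 1 <;> refine sum_congr rfl fun x hx => ?_ <;> have := (mem_filter.1 hx).2
  · rw [this.neg_one_pow, one_mul]
  · rw [this.neg_one_pow, neg_one_mul]

variable [Fintype ι]

lemma card_filter_even_card_eq_card_filter_odd_card [Nonempty ι] :
    #{t : Finset ι | Even #t} = #{t : Finset ι | Odd #t} := by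
  have h := sum_neg_one_pow_mul_eq_sum_even_sub_sum_odd univ card (fun _ : Finset ι => (1 : ℤ))
  have h0 := sum_powerset_neg_one_pow_card_of_nonempty (univ_nonempty (α := ι))
  rw [powerset_univ] at h0
  simp only [mul_one, h0, sum_const, nsmul_one] at h
  omega

variable [DecidableEq ι]

lemma prod_sub_one_eq_sum_even_sub_sum_odd (r : ι → R) :
    ∏ i, (r i - 1) = ∑ t : Finset ι with Even #t, ∏ i ∈ tᶜ, r i -
      ∑ t : Finset ι with Odd #t, ∏ i ∈ tᶜ, r i := by
  rw [← sum_neg_one_pow_mul_eq_sum_even_sub_sum_odd, ← powerset_univ]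
  simpa [compl_eq_univ_sdiff] using prod_sub r 1 univ

lemma sum_even_prod_compl_eq (r : ι → ℕ) (hr : ∀ i, 1 ≤ r i) :
    ∑ t : Finset ι with Even #t, ∏ i ∈ tᶜ, r i =
      ∏ i, (r i - 1) + ∑ t : Finset ι with Odd #t, ∏ i ∈ tᶜ, r i := by
  have h := prod_sub_one_eq_sum_even_sub_sum_odd (fun i => (r i : ℤ))
  have hcast : ∏ i, ((r i : ℤ) - 1) = ((∏ i, (r i - 1) : ℕ) : ℤ) := by
    push_cast [Nat.cast_sub (hr _)]
    rfl
  rw [hcast] at h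
  exact_mod_cast eq_add_of_sub_eq h.symm

end Parity

theorem stmt_2_general (s : ℕ) (hs : 1 ≤ s) (r : Fin s → ℕ) (hr : ∀ i, 1 < r i)
    (n₀ : ℕ) (hn₀ : n₀ = ∏ i, r i)
    (Q : Polynomial ℤ)
    (hQ : Q * (∏ S ∈ Finset.univ.filter (fun S : Finset (Fin s) => Odd S.card),
        ((X : Polynomial ℤ) ^ (n₀ / ∏ i ∈ S, r i) - 1)) =
      (∏ S ∈ Finset.univ.filter (fun S : Finset (Fin s) => Even S.card),
        ((X : Polynomial ℤ) ^ (n₀ / ∏ i ∈ S, r i) - 1))) :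
    Q.reflect (∏ i, (r i - 1)) = Q ∧
    ∀ m : ℕ, m ≤ ∏ i, (r i - 1) → Q.coeff m = Q.coeff ((∏ i, (r i - 1)) - m) := by
  have : Nonempty (Fin s) := ⟨⟨0, hs⟩⟩
  have hne (S : Finset (Fin s)) : ∏ i ∈ S, r i ≠ 0 :=
    prod_ne_zero_iff.2 fun i _ => (zero_lt_one.trans (hr i)).ne'
  have hcompl (S : Finset (Fin s)) : n₀ / ∏ i ∈ S, r i = ∏ i ∈ Sᶜ, r i := by
    rw [hn₀, ← prod_mul_prod_compl S r, Nat.mul_div_cancel_left _ (Nat.pos_of_ne_zero (hne S))]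
  simp only [hcompl] at hQ
  have hdeg := sum_even_prod_compl_eq r fun i => (hr i).le
  have hrefl : Q.reflect (∏ i, (r i - 1)) = Q := by
    refine reflect_eq_self_of_mul_eq (pow_ne_zero _ (neg_ne_zero.2 one_ne_zero))
      (monic_prod_X_pow_sub_one _ fun S _ => hne Sᶜ).ne_zero
      (natDegree_prod_X_pow_sub_one _ fun S _ => hne Sᶜ) ?_ (reflect_prod_X_pow_sub_one _ _) ?_ hQ
    · rw [natDegree_prod_X_pow_sub_one _ fun S _ => hne Sᶜ, hdeg]
    · rw [← hdeg, reflect_prod_X_pow_sub_one, card_filter_even_card_eq_card_filter_odd_card]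
  exact ⟨hrefl, fun m hm => coeff_eq_coeff_sub_of_reflect_eq hrefl hm⟩

/-- The inclusion-exclusion polynomial `Q_ρ` is reciprocal:
`Q_ρ(z) = z^{φ(ρ)} Q_ρ(1/z)` where `φ(ρ) = ∏ᵢ (rᵢ - 1)` is the degree;
consequently its coefficients satisfy `a_m = a_{φ(ρ) - m}` for `0 ≤ m ≤ φ(ρ)`. -/
theorem stmt_2 (s : ℕ) (hs : 1 ≤ s) (r : Fin s → ℕ) (hr : ∀ i, 1 < r i)
    (hcop : ∀ i j, i ≠ j → Nat.Coprime (r i) (r j))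
    (n₀ : ℕ) (hn₀ : n₀ = ∏ i, r i)
    (Q : Polynomial ℤ)
    (hQ : Q * (∏ S ∈ Finset.univ.filter (fun S : Finset (Fin s) => Odd S.card),
        ((X : Polynomial ℤ) ^ (n₀ / ∏ i ∈ S, r i) - 1)) =
      (∏ S ∈ Finset.univ.filter (fun S : Finset (Fin s) => Even S.card),
        ((X : Polynomial ℤ) ^ (n₀ / ∏ i ∈ S, r i) - 1))) :
    Q.reflect (∏ i, (r i - 1)) = Q ∧
    ∀ m : ℕ, m ≤ ∏ i, (r i - 1) → Q.coeff m = Q.coeff ((∏ i, (r i - 1)) - m) :=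
  stmt_2_general s hs r hr n₀ hn₀ Q hQ
end

section
/- For every 0 ≤ m ≤ (p−1)(q−1), the coefficient of z^m in the binary inclusion-exclusion polynomial Q_{p,q} equals χ(m) − χ(m−1). In particular, every coefficient of Q_{p,q} lies in {−1, 0, 1}, i.e., Q_{p,q} is flat. -/
open Polynomial
open scoped Classical

/-- The characteristic function of integers representable as `i·q + j·p` with `i, j ≥ 0`. -/
noncomputable def chi2 (p q : ℕ) (n : ℤ) : ℤ :=
  if ∃ i j : ℕ, n = (i * q + j * p : ℕ) then 1 else 0

def Rep2 (p q : ℕ) (n : ℤ) : Prop := ∃ i j : ℕ, n = (i : ℤ) * q + (j : ℤ) * p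

lemma chi2_eq_ite (p q : ℕ) (n : ℤ) : chi2 p q n = if Rep2 p q n then 1 else 0 := by
  have h : (∃ i j : ℕ, n = ((i * q + j * p : ℕ) : ℤ)) ↔ Rep2 p q n :=
    exists_congr fun i => exists_congr fun j => by push_cast; rfl
  simp only [chi2]
  exact if_congr h rfl rfl

lemma Rep2.nonneg {p q : ℕ} {n : ℤ} (h : Rep2 p q n) : 0 ≤ n := by
  obtain ⟨i, j, rfl⟩ := h; positivity

lemma Rep2.addp {p q : ℕ} {n : ℤ} (h : Rep2 p q n) : Rep2 p q (n + p) := by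
  obtain ⟨i, j, rfl⟩ := h; exact ⟨i, j + 1, by push_cast; ring⟩

lemma Rep2.addq {p q : ℕ} {n : ℤ} (h : Rep2 p q n) : Rep2 p q (n + q) := by
  obtain ⟨i, j, rfl⟩ := h; exact ⟨i + 1, j, by push_cast; ring⟩

lemma Rep2.of_sub_p {p q : ℕ} {n : ℤ} (h : Rep2 p q (n - p)) : Rep2 p q n := by
  have := h.addp; simpa using this

lemma Rep2.of_sub_q {p q : ℕ} {n : ℤ} (h : Rep2 p q (n - q)) : Rep2 p q n := by
  have := h.addq; simpa using this

lemma rep_zero (p q : ℕ) : Rep2 p q 0 := ⟨0, 0, by simp⟩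

lemma rep_pq (p q : ℕ) : Rep2 p q ((p : ℤ) * q) := ⟨p, 0, by push_cast; ring⟩

lemma rep_pq_sub_p (p q : ℕ) (hq : 1 ≤ q) : Rep2 p q ((p : ℤ) * q - p) :=
  ⟨0, q - 1, by push_cast [Nat.cast_sub hq]; ring⟩

lemma rep_pq_sub_q (p q : ℕ) (hp : 1 ≤ p) : Rep2 p q ((p : ℤ) * q - q) :=
  ⟨p - 1, 0, by push_cast [Nat.cast_sub hp]; ring⟩

lemma not_rep_frob (p q : ℕ) (hp : 1 < p) (hq : 1 < q) (hpq : Nat.Coprime p q) :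
    ¬ Rep2 p q ((p : ℤ) * q - p - q) := by
  rintro ⟨i, j, h⟩
  have he' : p * q = (i + 1) * q + (j + 1) * p := by
    have : (p : ℤ) * q = ((i : ℤ) + 1) * q + ((j : ℤ) + 1) * p := by linarith
    exact_mod_cast this
  have hd : p ∣ (i + 1) * q := by
    have hle : (j + 1) * p ≤ p * q := by omega
    have hsub : (i + 1) * q = p * q - (j + 1) * p := by omega
    rw [hsub]
    exact Nat.dvd_sub ⟨q, rfl⟩ ⟨j + 1, mul_comm _ _⟩
  have hdi : p ∣ i + 1 := hpq.dvd_of_dvd_mul_right hd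
  have h1 : p ≤ i + 1 := Nat.le_of_dvd (by omega) hdi
  have h2 : p * q ≤ (i + 1) * q := Nat.mul_le_mul_right _ h1
  have h3 : 0 < (j + 1) * p := by positivity
  linarith

lemma rep_eq_zero {p q : ℕ} {n : ℤ} (h1 : Rep2 p q n) (h2 : ¬ Rep2 p q (n - p))
    (h3 : ¬ Rep2 p q (n - q)) : n = 0 := by
  obtain ⟨i, j, rfl⟩ := h1
  match i, j with
  | 0, 0 => simp
  | 0, j + 1 => exact absurd ⟨0, j, by push_cast; ring⟩ h2
  | i + 1, j => exact absurd ⟨i, j, by push_cast; ring⟩ h3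

lemma rep_eq_pq {p q : ℕ} {n : ℤ} (hp : 1 < p) (hq : 1 < q) (hpq : Nat.Coprime p q)
    (h2 : Rep2 p q (n - p)) (h3 : Rep2 p q (n - q)) (h4 : ¬ Rep2 p q (n - p - q)) :
    n = (p : ℤ) * q := by
  obtain ⟨i, j, hij⟩ := h2
  have hi : i = 0 := by
    by_contra h
    obtain ⟨i', rfl⟩ : ∃ i', i = i' + 1 := ⟨i - 1, by omega⟩
    exact h4 ⟨i', j, by push_cast at hij ⊢; linarith⟩
  subst hi
  obtain ⟨i', j', hij'⟩ := h3
  have hj' : j' = 0 := by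
    by_contra h
    obtain ⟨t, rfl⟩ : ∃ t, j' = t + 1 := ⟨j' - 1, by omega⟩
    exact h4 ⟨i', t, by push_cast at hij' ⊢; linarith⟩
  subst hj'
  have hnp : n = ((j : ℤ) + 1) * p := by push_cast at hij; linarith
  have hnq : n = ((i' : ℤ) + 1) * q := by push_cast at hij'; linarith
  have hp0 : (0:ℤ) < p := by exact_mod_cast Nat.lt_of_lt_of_le Nat.zero_lt_one hp.le
  have hq0 : (0:ℤ) < q := by exact_mod_cast Nat.lt_of_lt_of_le Nat.zero_lt_one hq.le
  have hn0 : 0 < n := by rw [hnp]; exact mul_pos (by positivity) hp0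
  have hdp : (p : ℤ) ∣ n := ⟨(j : ℤ) + 1, by linarith⟩
  have hdq : (q : ℤ) ∣ n := ⟨(i' : ℤ) + 1, by linarith⟩
  have hdpn : p ∣ n.toNat := by
    have : (p : ℤ) ∣ (n.toNat : ℤ) := by rwa [Int.toNat_of_nonneg hn0.le]
    exact_mod_cast this
  have hdqn : q ∣ n.toNat := by
    have : (q : ℤ) ∣ (n.toNat : ℤ) := by rwa [Int.toNat_of_nonneg hn0.le]
    exact_mod_cast this
  obtain ⟨k, hk⟩ := hpq.mul_dvd_of_dvd_of_dvd hdpn hdqn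
  have hnk : n = ((p * q * k : ℕ) : ℤ) := by rw [← hk, Int.toNat_of_nonneg hn0.le]
  have hk1 : 1 ≤ k := by
    rcases Nat.eq_zero_or_pos k with h | h
    · subst h; simp at hnk; omega
    · exact h
  rcases Nat.lt_or_ge k 2 with hk2 | hk2
  · have : k = 1 := by omega
    subst this
    rw [hnk]; push_cast; ring
  · exfalso
    refine h4 ⟨p - 1, (q - 1) + (k - 2) * q, ?_⟩
    rw [hnk]
    push_cast [Nat.cast_sub hp.le, Nat.cast_sub hq.le, Nat.cast_sub hk2]
    ring

lemma key (p q : ℕ) (hp : 1 < p) (hq : 1 < q) (hpq : Nat.Coprime p q) (n : ℤ) :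
    chi2 p q n - chi2 p q (n - p) - chi2 p q (n - q) + chi2 p q (n - p - q)
      = (if n = 0 then 1 else 0) - (if n = (p : ℤ) * q then 1 else 0) := by
  have hp0 : (0:ℤ) < p := by exact_mod_cast Nat.lt_of_lt_of_le Nat.zero_lt_one hp.le
  have hq0 : (0:ℤ) < q := by exact_mod_cast Nat.lt_of_lt_of_le Nat.zero_lt_one hq.le
  have hpq0 : (0:ℤ) < (p:ℤ) * q := mul_pos hp0 hq0
  rw [chi2_eq_ite, chi2_eq_ite, chi2_eq_ite, chi2_eq_ite]
  by_cases h1 : Rep2 p q n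
  · by_cases h4 : Rep2 p q (n - p - q)
    · have h2 : Rep2 p q (n - p) := by
        have := h4.addq
        have e : n - p - q + q = n - p := by ring
        rwa [e] at this
      have h3 : Rep2 p q (n - q) := by
        have := h4.addp
        have e : n - p - q + p = n - q := by ring
        rwa [e] at this
      have hn0 : n ≠ 0 := by have := h4.nonneg; omega
      have hnpq : n ≠ (p:ℤ) * q := by
        rintro rfl
        exact not_rep_frob p q hp hq hpq h4
      rw [if_pos h1, if_pos h2, if_pos h3, if_pos h4, if_neg hn0, if_neg hnpq]
      ring
    · by_cases h2 : Rep2 p q (n - p)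
      · by_cases h3 : Rep2 p q (n - q)
        · have hnpq : n = (p:ℤ) * q := rep_eq_pq hp hq hpq h2 h3 h4
          have hn0 : n ≠ 0 := by rw [hnpq]; exact ne_of_gt hpq0
          rw [if_pos h1, if_pos h2, if_pos h3, if_neg h4, if_neg hn0, if_pos hnpq]
          ring
        · have hn0 : n ≠ 0 := by have := h2.nonneg; omega
          have hnpq : n ≠ (p:ℤ) * q := by
            rintro rfl
            exact h3 (rep_pq_sub_q p q hp.le)
          rw [if_pos h1, if_pos h2, if_neg h3, if_neg h4, if_neg hn0, if_neg hnpq]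
          ring
      · by_cases h3 : Rep2 p q (n - q)
        · have hn0 : n ≠ 0 := by have := h3.nonneg; omega
          have hnpq : n ≠ (p:ℤ) * q := by
            rintro rfl
            exact h2 (rep_pq_sub_p p q hq.le)
          rw [if_pos h1, if_neg h2, if_pos h3, if_neg h4, if_neg hn0, if_neg hnpq]
          ring
        · have hn0 : n = 0 := rep_eq_zero h1 h2 h3
          have hnpq : n ≠ (p:ℤ) * q := by rw [hn0]; exact ne_of_lt hpq0
          rw [if_pos h1, if_neg h2, if_neg h3, if_neg h4, if_pos hn0, if_neg hnpq]
          ring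
  · have h2 : ¬ Rep2 p q (n - p) := fun h => h1 h.of_sub_p
    have h3 : ¬ Rep2 p q (n - q) := fun h => h1 h.of_sub_q
    have h4 : ¬ Rep2 p q (n - p - q) := fun h => h2 h.of_sub_q
    have hn0 : n ≠ 0 := by rintro rfl; exact h1 (rep_zero p q)
    have hnpq : n ≠ (p:ℤ) * q := by rintro rfl; exact h1 (rep_pq p q)
    rw [if_neg h1, if_neg h2, if_neg h3, if_neg h4, if_neg hn0, if_neg hnpq]
    ring

lemma coeffQ (p q : ℕ) (Q : Polynomial ℤ)
    (hQ : Q * (((X : Polynomial ℤ) ^ p - 1) * ((X : Polynomial ℤ) ^ q - 1)) =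
      ((X : Polynomial ℤ) ^ (p * q) - 1) * ((X : Polynomial ℤ) - 1)) (n : ℕ) :
    (if p + q ≤ n then Q.coeff (n - (p + q)) else 0)
      - (if p ≤ n then Q.coeff (n - p) else 0)
      - (if q ≤ n then Q.coeff (n - q) else 0)
      + Q.coeff n
      = (if n = p * q + 1 then 1 else 0) - (if n = p * q then 1 else 0)
        - (if n = 1 then 1 else 0) + (if n = 0 then 1 else 0) := by
  have hl : Q * (((X : Polynomial ℤ) ^ p - 1) * ((X : Polynomial ℤ) ^ q - 1))
      = Q * X ^ (p + q) - Q * X ^ p - Q * X ^ q + Q := by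
    rw [pow_add]; ring
  have hr : ((X : Polynomial ℤ) ^ (p * q) - 1) * ((X : Polynomial ℤ) - 1)
      = X ^ (p * q + 1) - X ^ (p * q) - X ^ 1 + 1 := by
    rw [pow_succ, pow_one]; ring
  have h := congrArg (fun f => Polynomial.coeff f n) hQ
  simp only [hl, hr, coeff_sub, coeff_add, coeff_mul_X_pow', coeff_X_pow, coeff_one] at h
  convert h using 2

lemma chi2_neg (p q : ℕ) {n : ℤ} (hn : n < 0) : chi2 p q n = 0 := by
  rw [chi2_eq_ite, if_neg]
  exact fun h => absurd h.nonneg (by omega)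

lemma main_lemma (p q : ℕ) (hp : 1 < p) (hq : 1 < q) (hpq : Nat.Coprime p q)
    (Q : Polynomial ℤ)
    (hQ : Q * (((X : Polynomial ℤ) ^ p - 1) * ((X : Polynomial ℤ) ^ q - 1)) =
      ((X : Polynomial ℤ) ^ (p * q) - 1) * ((X : Polynomial ℤ) - 1)) :
    ∀ m : ℕ, Q.coeff m = chi2 p q (m : ℤ) - chi2 p q ((m : ℤ) - 1) := by
  intro m
  induction m using Nat.strong_induction_on with
  | _ m ih =>
  have step : ∀ k : ℕ, 0 < k →
      (if k ≤ m then Q.coeff (m - k) else 0)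
        = chi2 p q ((m : ℤ) - k) - chi2 p q ((m : ℤ) - k - 1) := by
    intro k hk
    by_cases h : k ≤ m
    · rw [if_pos h, ih (m - k) (by omega)]
      have e : ((m - k : ℕ) : ℤ) = (m : ℤ) - k := by omega
      rw [e]
    · rw [if_neg h, chi2_neg p q (by omega), chi2_neg p q (by omega)]
      ring
  have hrec := coeffQ p q Q hQ m
  rw [step (p + q) (by omega), step p (by omega), step q (by omega)] at hrec
  have e4 : (m : ℤ) - ((p + q : ℕ) : ℤ) = (m : ℤ) - p - q := by push_cast; ring
  rw [e4] at hrec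
  have k1 := key p q hp hq hpq (m : ℤ)
  have k2 := key p q hp hq hpq ((m : ℤ) - 1)
  have e1 : (m : ℤ) - 1 - p = (m : ℤ) - p - 1 := by ring
  have e2 : (m : ℤ) - 1 - q = (m : ℤ) - q - 1 := by ring
  have e3 : (m : ℤ) - p - 1 - q = (m : ℤ) - p - q - 1 := by ring
  rw [e1, e2, e3] at k2
  have hP : (p : ℤ) * q = ((p * q : ℕ) : ℤ) := by push_cast; ring
  rw [hP] at k1 k2
  have c0 : (if (m : ℤ) = 0 then (1:ℤ) else 0) = (if m = 0 then 1 else 0) := by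
    split_ifs <;> omega
  have cpq : (if (m : ℤ) = ((p * q : ℕ) : ℤ) then (1:ℤ) else 0)
      = (if m = p * q then 1 else 0) := by split_ifs <;> omega
  have c1 : (if (m : ℤ) - 1 = 0 then (1:ℤ) else 0) = (if m = 1 then 1 else 0) := by
    split_ifs <;> omega
  have cpq1 : (if (m : ℤ) - 1 = ((p * q : ℕ) : ℤ) then (1:ℤ) else 0)
      = (if m = p * q + 1 then 1 else 0) := by split_ifs <;> omega
  rw [c0, cpq] at k1
  rw [c1, cpq1] at k2
  linarith [k1, k2, hrec]

/-- For `0 ≤ m ≤ (p-1)(q-1)`, the coefficient of `z^m` in the binary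
inclusion-exclusion polynomial `Q_{p,q}` equals `χ(m) - χ(m-1)`; in particular
every coefficient of `Q_{p,q}` lies in `{-1, 0, 1}`. -/
theorem stmt_3 (p q : ℕ) (hp : 1 < p) (hq : 1 < q) (hpq : Nat.Coprime p q)
    (Q : Polynomial ℤ)
    (hQ : Q * (((X : Polynomial ℤ) ^ p - 1) * ((X : Polynomial ℤ) ^ q - 1)) =
      ((X : Polynomial ℤ) ^ (p * q) - 1) * ((X : Polynomial ℤ) - 1)) :
    (∀ m : ℕ, m ≤ (p - 1) * (q - 1) →
        Q.coeff m = chi2 p q (m : ℤ) - chi2 p q ((m : ℤ) - 1)) ∧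
    (∀ m : ℕ, Q.coeff m ∈ ({-1, 0, 1} : Set ℤ)) := by

  have h := main_lemma p q hp hq hpq Q hQ
  constructor
  · exact fun m _ => h m
  · intro m
    rw [h m, chi2_eq_ite, chi2_eq_ite]
    simp only [Set.mem_insert_iff, Set.mem_singleton_iff]
    split_ifs <;> norm_num
end

section
/- The set of coefficients of the ternary inclusion-exclusion polynomial Q_{p,q,r} is a string of consecutive integers: 𝒜(p,q,r) = [A⁻(p,q,r), A⁺(p,q,r)] ∩ ℤ. That is, for every integer c with A⁻(p,q,r) ≤ c ≤ A⁺(p,q,r) there exists an index m with a_m(p,q,r) = c. -/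
open Polynomial
open scoped Classical

/-- The defining identity of the ternary inclusion-exclusion polynomial `Q_{p,q,r}`:
`Q·(z^{qr}-1)(z^{rp}-1)(z^{pq}-1)(z-1) = (z^{pqr}-1)(z^r-1)(z^q-1)(z^p-1)`. -/
def ternaryId (p q r : ℕ) (Q : Polynomial ℤ) : Prop :=
  Q * (((X : Polynomial ℤ) ^ (q * r) - 1) * ((X : Polynomial ℤ) ^ (r * p) - 1) *
      ((X : Polynomial ℤ) ^ (p * q) - 1) * ((X : Polynomial ℤ) - 1)) =
    ((X : Polynomial ℤ) ^ (p * q * r) - 1) * ((X : Polynomial ℤ) ^ r - 1) *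
      ((X : Polynomial ℤ) ^ q - 1) * ((X : Polynomial ℤ) ^ p - 1)

/-- The coefficient `a_m` of `z^m` in `Q`, indexed by `m : ℤ`, with the convention
that `a_m = 0` for `m < 0` (and automatically `a_m = 0` for `m` beyond the degree). -/
def aCoeff (Q : Polynomial ℤ) (m : ℤ) : ℤ :=
  if 0 ≤ m then Q.coeff m.toNat else 0

/-- The characteristic function `χ` of integers representable as
`i·qr + j·rp + k·pq` with integers `i, j, k ≥ 0`. -/
noncomputable def chi (p q r : ℕ) (n : ℤ) : ℤ :=
  if ∃ i j k : ℕ, n = (i * (q * r) + j * (r * p) + k * (p * q) : ℕ) then 1 else 0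


section TIEProof
open Finset
set_option maxHeartbeats 1600000

namespace TIE




/-- residues in `[0,P)` that are congruent mod `P` are equal -/
theorem eq_of_dvd_sub_of_lt {P a b : ℤ} (h : P ∣ a - b) (ha : 0 ≤ a) (ha' : a < P)
    (hb : 0 ≤ b) (hb' : b < P) : a = b := by
  have := Int.eq_zero_of_abs_lt_dvd h (by rw [abs_sub_lt_iff]; omega)
  omega

theorem emod_wrap {P a b : ℤ} (hP : 0 < P) (ha : 0 ≤ a) (ha' : a < P) (hb : 0 ≤ b) (hb' : b < P) :
    (a - b) % P = a - b ∨ (a - b) % P = a - b + P := by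
  rcases le_or_gt b a with h | h
  · left; exact Int.emod_eq_of_lt (by omega) (by omega)
  · right
    have h2 : (a - b) % P = (a - b + P) % P := (Int.add_mul_emod_self_left (a := a - b) (b := P) (c := 1)).symm ▸ by ring_nf
    rw [h2, Int.emod_eq_of_lt (by omega) (by omega)]

/-- the coordinate function: residue of `n * g` mod `P` -/
def co (P g n : ℤ) : ℤ := (n * g) % P

theorem co_nonneg {P : ℤ} (hP : 0 < P) (g n : ℤ) : 0 ≤ co P g n :=
  Int.emod_nonneg _ (by omega)

theorem co_lt {P : ℤ} (hP : 0 < P) (g n : ℤ) : co P g n < P :=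
  Int.emod_lt_of_pos _ hP

/-- key property: `co P g n * e ≡ n (mod P)` when `g` is an inverse of `e` mod `P`. -/
theorem co_spec {P g e : ℤ} (hg : P ∣ g * e - 1) (n : ℤ) : P ∣ co P g n * e - n := by
  have h1 : co P g n = n * g - P * (n * g / P) := by rw [co, Int.emod_def]
  have : co P g n * e - n = n * (g * e - 1) - P * (n * g / P) * e := by rw [h1]; ring
  rw [this]
  exact dvd_sub (Dvd.dvd.mul_left hg n) ⟨n * g / P * e, by ring⟩

theorem co_shift (P g : ℤ) (n t : ℤ) :
    co P g (n - t) = (co P g n - co P g t) % P := by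
  rw [co, co, co, sub_mul, Int.sub_emod]

/-- subtracting a multiple of `P` does not change the coordinate. -/
theorem co_shift_self {P g : ℤ} (hP : 0 < P) (n t : ℤ) (ht : P ∣ t) :
    co P g (n - t) = co P g n := by
  rw [co_shift]
  obtain ⟨c, rfl⟩ := ht
  have h1 : co P g (P * c) = 0 := by
    rw [co, show P * c * g = P * (c * g) by ring, Int.mul_emod_right]
  rw [h1, sub_zero, co, Int.emod_emod_of_dvd _ dvd_rfl]


/-- The key threshold-sum identity: `a₁·rp + a₂·pq = p + pqr` where `a₁, a₂` are the
coordinate shifts on the `y`/`z` coordinates induced by subtracting `p`. -/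
theorem threshold_sum {p q r gy gz : ℤ} (hp : 3 ≤ p) (hq : 3 ≤ q) (hr : 3 ≤ r)
    (hgy : q ∣ gy * (r * p) - 1) (hgz : r ∣ gz * (p * q) - 1)
    (hco_qr : IsCoprime q r) (hco_p_qr : IsCoprime p (q * r)) :
    co q gy p * (r * p) + co r gz p * (p * q) = p + p * q * r := by
  have ha1n : 0 ≤ co q gy p := co_nonneg (by omega) _ _
  have ha1l : co q gy p < q := co_lt (by omega) _ _
  have ha2n : 0 ≤ co r gz p := co_nonneg (by omega) _ _
  have ha2l : co r gz p < r := co_lt (by omega) _ _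
  have hdq : q ∣ co q gy p * (r * p) + co r gz p * (p * q) - p := by
    have h1 := co_spec hgy p
    have h2 : co q gy p * (r * p) + co r gz p * (p * q) - p
        = (co q gy p * (r * p) - p) + q * (co r gz p * p) := by ring
    rw [h2]; exact dvd_add h1 ⟨co r gz p * p, rfl⟩
  have hdr : r ∣ co q gy p * (r * p) + co r gz p * (p * q) - p := by
    have h1 := co_spec hgz p
    have h2 : co q gy p * (r * p) + co r gz p * (p * q) - p
        = (co r gz p * (p * q) - p) + r * (co q gy p * p) := by ring
    rw [h2]; exact dvd_add h1 ⟨co q gy p * p, rfl⟩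
  have hdp : p ∣ co q gy p * (r * p) + co r gz p * (p * q) - p :=
    ⟨co q gy p * r + co r gz p * q - 1, by ring⟩
  have hdall : p * (q * r) ∣ co q gy p * (r * p) + co r gz p * (p * q) - p :=
    hco_p_qr.mul_dvd hdp (hco_qr.mul_dvd hdq hdr)
  obtain ⟨c, hc⟩ := hdall
  have hNpos : (0:ℤ) < p * (q * r) := by positivity
  have hub1 : co q gy p * (r * p) ≤ (q - 1) * (r * p) :=
    mul_le_mul_of_nonneg_right (by omega) (by positivity)
  have hub2 : co r gz p * (p * q) ≤ (r - 1) * (p * q) :=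
    mul_le_mul_of_nonneg_right (by omega) (by positivity)
  have hm1 : 0 ≤ co q gy p * (r * p) := mul_nonneg ha1n (by positivity)
  have hm2 : 0 ≤ co r gz p * (p * q) := mul_nonneg ha2n (by positivity)
  have hplt : p * 1 < p * (q * r) := by
    apply mul_lt_mul_of_pos_left (by nlinarith) (by omega)
  have hrp3 : 3 * p ≤ r * p := mul_le_mul_of_nonneg_right hr (by omega)
  have hpq3 : 3 * p ≤ p * q := by nlinarith
  have hring1 : (q - 1) * (r * p) + (r - 1) * (p * q) = 2 * (p * (q * r)) - r * p - p * q := by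
    ring
  have hclt : c < 2 := by
    by_contra hcge
    have h2c : p * (q * r) * 2 ≤ p * (q * r) * c :=
      mul_le_mul_of_nonneg_left (by omega) (by positivity)
    linarith [hc ▸ h2c]
  have hcgt : 0 ≤ c := by
    by_contra hcle
    have h2c : p * (q * r) * c ≤ p * (q * r) * (-1) :=
      mul_le_mul_of_nonneg_left (by omega) (by positivity)
    linarith [hc ▸ h2c]
  have hcne : c ≠ 0 := by
    intro h0
    rw [h0, mul_zero] at hc
    -- a1 * rp + a2 * pq = p
    rcases eq_or_lt_of_le ha1n with h1 | h1
    · rcases eq_or_lt_of_le ha2n with h2 | h2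
      · rw [← h1, ← h2] at hc; simp at hc; omega
      · have hb : 1 * (p * q) ≤ co r gz p * (p * q) :=
          mul_le_mul_of_nonneg_right (by omega) (by positivity)
        linarith
    · have hb : 1 * (r * p) ≤ co q gy p * (r * p) :=
        mul_le_mul_of_nonneg_right (by omega) (by positivity)
      linarith
  have hceq : c = 1 := by omega
  rw [hceq, mul_one] at hc
  linarith

/-- threshold positivity -/
theorem threshold_pos {p q r gy gz : ℤ} (hp : 3 ≤ p) (hq : 3 ≤ q) (hr : 3 ≤ r)
    (hgy : q ∣ gy * (r * p) - 1) (hgz : r ∣ gz * (p * q) - 1)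
    (hco_qr : IsCoprime q r) (hco_p_qr : IsCoprime p (q * r)) :
    1 ≤ co q gy p ∧ 1 ≤ co r gz p := by
  have hsum := threshold_sum hp hq hr hgy hgz hco_qr hco_p_qr
  have ha1n : 0 ≤ co q gy p := co_nonneg (by omega) _ _
  have ha1l : co q gy p < q := co_lt (by omega) _ _
  have ha2n : 0 ≤ co r gz p := co_nonneg (by omega) _ _
  have ha2l : co r gz p < r := co_lt (by omega) _ _
  have hub1 : co q gy p * (r * p) ≤ (q - 1) * (r * p) :=
    mul_le_mul_of_nonneg_right (by omega) (by positivity)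
  have hub2 : co r gz p * (p * q) ≤ (r - 1) * (p * q) :=
    mul_le_mul_of_nonneg_right (by omega) (by positivity)
  have hring1 : (q - 1) * (r * p) = p * q * r - r * p := by ring
  have hring2 : (r - 1) * (p * q) = p * q * r - p * q := by ring
  have hrppos : (0:ℤ) < r * p := by positivity
  have hpqpos : (0:ℤ) < p * q := by positivity
  constructor
  · by_contra h
    have h0 : co q gy p = 0 := by omega
    rw [h0, zero_mul, zero_add] at hsum
    linarith
  · by_contra h
    have h0 : co r gz p = 0 := by omega
    rw [h0, zero_mul, add_zero] at hsum
    linarith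





noncomputable def Epoly (p q r : ℕ) : Polynomial ℤ :=
  (∑ i ∈ range p, X ^ (q*r*i)) * ((∑ j ∈ range q, X ^ (r*p*j)) * (∑ k ∈ range r, X ^ (p*q*k)))

theorem Epoly_eq (p q r : ℕ) : Epoly p q r =
    ∑ i ∈ range p, ∑ j ∈ range q, ∑ k ∈ range r,
      (X : Polynomial ℤ) ^ (q*r*i + r*p*j + p*q*k) := by
  unfold Epoly
  rw [Finset.sum_mul_sum]
  rw [Finset.sum_mul]
  refine Finset.sum_congr rfl fun i _ => ?_
  rw [Finset.mul_sum]
  refine Finset.sum_congr rfl fun j _ => ?_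
  rw [Finset.mul_sum]
  refine Finset.sum_congr rfl fun k _ => ?_
  rw [pow_add, pow_add]; ring

theorem Epoly_coeff (p q r : ℕ) (n : ℕ) : (Epoly p q r).coeff n =
    ∑ i ∈ range p, ∑ j ∈ range q, ∑ k ∈ range r,
      (if n = q*r*i + r*p*j + p*q*k then (1:ℤ) else 0) := by
  rw [Epoly_eq]
  rw [Polynomial.finset_sum_coeff]
  refine Finset.sum_congr rfl fun i _ => ?_
  rw [Polynomial.finset_sum_coeff]
  refine Finset.sum_congr rfl fun j _ => ?_
  rw [Polynomial.finset_sum_coeff]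
  refine Finset.sum_congr rfl fun k _ => ?_
  rw [Polynomial.coeff_X_pow]



theorem Epoly_coeff_eq (p q r : ℕ) (hp : 0 < p) (hq : 0 < q) (hr : 0 < r) (gx gy gz : ℤ)
    (hgx : (p:ℤ) ∣ gx * ((q:ℤ) * r) - 1) (hgy : (q:ℤ) ∣ gy * ((r:ℤ) * p) - 1)
    (hgz : (r:ℤ) ∣ gz * ((p:ℤ) * q) - 1)
    (hcx : IsCoprime (p:ℤ) ((q:ℤ) * r)) (hcy : IsCoprime (q:ℤ) ((r:ℤ) * p))
    (hcz : IsCoprime (r:ℤ) ((p:ℤ) * q)) (n : ℕ) :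
    (Epoly p q r).coeff n =
      if co p gx n * ((q:ℤ) * r) + co q gy n * ((r:ℤ) * p) + co r gz n * ((p:ℤ) * q) = (n:ℤ)
      then 1 else 0 := by
  have hp' : (0:ℤ) < p := by exact_mod_cast hp
  have hq' : (0:ℤ) < q := by exact_mod_cast hq
  have hr' : (0:ℤ) < r := by exact_mod_cast hr
  -- uniqueness of each coordinate
  have hux : ∀ i j k : ℕ, i < p → n = q*r*i + r*p*j + p*q*k → (i:ℤ) = co p gx n := by
    intro i j k hi hn
    have hd1 : (p:ℤ) ∣ (n:ℤ) - i * ((q:ℤ)*r) := by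
      refine ⟨(j:ℤ) * r + (k:ℤ) * q, ?_⟩
      have : (n:ℤ) = q*r*i + r*p*j + p*q*k := by exact_mod_cast congrArg (Nat.cast : ℕ → ℤ) hn
      rw [this]; push_cast; ring
    have hd2 := co_spec hgx (n:ℤ)
    have hd3 : (p:ℤ) ∣ (co p gx n - i) * ((q:ℤ)*r) := by
      have : (co p gx n - i) * ((q:ℤ)*r) = (co p gx n * ((q:ℤ)*r) - n) + ((n:ℤ) - i * ((q:ℤ)*r)) := by ring
      rw [this]; exact dvd_add hd2 hd1
    have hd4 : (p:ℤ) ∣ co p gx n - i := hcx.dvd_of_dvd_mul_right hd3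
    exact (eq_of_dvd_sub_of_lt hd4 (co_nonneg hp' _ _) (co_lt hp' _ _)
      (by positivity) (by exact_mod_cast hi)).symm
  have huy : ∀ i j k : ℕ, j < q → n = q*r*i + r*p*j + p*q*k → (j:ℤ) = co q gy n := by
    intro i j k hj hn
    have hd1 : (q:ℤ) ∣ (n:ℤ) - j * ((r:ℤ)*p) := by
      refine ⟨(i:ℤ) * r + (k:ℤ) * p, ?_⟩
      have : (n:ℤ) = q*r*i + r*p*j + p*q*k := by exact_mod_cast congrArg (Nat.cast : ℕ → ℤ) hn
      rw [this]; push_cast; ring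
    have hd2 := co_spec hgy (n:ℤ)
    have hd3 : (q:ℤ) ∣ (co q gy n - j) * ((r:ℤ)*p) := by
      have : (co q gy n - j) * ((r:ℤ)*p) = (co q gy n * ((r:ℤ)*p) - n) + ((n:ℤ) - j * ((r:ℤ)*p)) := by ring
      rw [this]; exact dvd_add hd2 hd1
    have hd4 : (q:ℤ) ∣ co q gy n - j := hcy.dvd_of_dvd_mul_right hd3
    exact (eq_of_dvd_sub_of_lt hd4 (co_nonneg hq' _ _) (co_lt hq' _ _)
      (by positivity) (by exact_mod_cast hj)).symm
  have huz : ∀ i j k : ℕ, k < r → n = q*r*i + r*p*j + p*q*k → (k:ℤ) = co r gz n := by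
    intro i j k hk hn
    have hd1 : (r:ℤ) ∣ (n:ℤ) - k * ((p:ℤ)*q) := by
      refine ⟨(i:ℤ) * q + (j:ℤ) * p, ?_⟩
      have : (n:ℤ) = q*r*i + r*p*j + p*q*k := by exact_mod_cast congrArg (Nat.cast : ℕ → ℤ) hn
      rw [this]; push_cast; ring
    have hd2 := co_spec hgz (n:ℤ)
    have hd3 : (r:ℤ) ∣ (co r gz n - k) * ((p:ℤ)*q) := by
      have : (co r gz n - k) * ((p:ℤ)*q) = (co r gz n * ((p:ℤ)*q) - n) + ((n:ℤ) - k * ((p:ℤ)*q)) := by ring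
      rw [this]; exact dvd_add hd2 hd1
    have hd4 : (r:ℤ) ∣ co r gz n - k := hcz.dvd_of_dvd_mul_right hd3
    exact (eq_of_dvd_sub_of_lt hd4 (co_nonneg hr' _ _) (co_lt hr' _ _)
      (by positivity) (by exact_mod_cast hk)).symm
  rw [Epoly_coeff]
  by_cases hrep : co p gx n * ((q:ℤ) * r) + co q gy n * ((r:ℤ) * p) + co r gz n * ((p:ℤ) * q) = (n:ℤ)
  · rw [if_pos hrep]
    set i0 : ℕ := (co p gx n).toNat with hi0
    set j0 : ℕ := (co q gy n).toNat with hj0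
    set k0 : ℕ := (co r gz n).toNat with hk0
    have hi0' : (i0:ℤ) = co p gx n := Int.toNat_of_nonneg (co_nonneg hp' _ _)
    have hj0' : (j0:ℤ) = co q gy n := Int.toNat_of_nonneg (co_nonneg hq' _ _)
    have hk0' : (k0:ℤ) = co r gz n := Int.toNat_of_nonneg (co_nonneg hr' _ _)
    have hi0lt : i0 < p := by have := co_lt hp' gx (n:ℤ); omega
    have hj0lt : j0 < q := by have := co_lt hq' gy (n:ℤ); omega
    have hk0lt : k0 < r := by have := co_lt hr' gz (n:ℤ); omega
    have hnval : n = q*r*i0 + r*p*j0 + p*q*k0 := by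
      have hcast : ((q*r*i0 + r*p*j0 + p*q*k0 : ℕ) : ℤ) = (n:ℤ) := by
        push_cast [hi0', hj0', hk0']
        linear_combination hrep
      exact_mod_cast hcast.symm
    rw [Finset.sum_eq_single_of_mem i0 (Finset.mem_range.2 hi0lt)]
    · rw [Finset.sum_eq_single_of_mem j0 (Finset.mem_range.2 hj0lt)]
      · rw [Finset.sum_eq_single_of_mem k0 (Finset.mem_range.2 hk0lt)]
        · rw [if_pos hnval]
        · intro k hk hkne
          apply if_neg
          intro hcond
          exact hkne (by exact_mod_cast (huz i0 j0 k (Finset.mem_range.1 hk) hcond).trans hk0'.symm)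
      · intro j hj hjne
        apply Finset.sum_eq_zero
        intro k hk
        apply if_neg
        intro hcond
        exact hjne (by exact_mod_cast (huy i0 j k (Finset.mem_range.1 hj) hcond).trans hj0'.symm)
    · intro i hi hine
      apply Finset.sum_eq_zero
      intro j hj
      apply Finset.sum_eq_zero
      intro k hk
      apply if_neg
      intro hcond
      exact hine (by exact_mod_cast (hux i j k (Finset.mem_range.1 hi) hcond).trans hi0'.symm)
  · rw [if_neg hrep]
    apply Finset.sum_eq_zero; intro i hi
    apply Finset.sum_eq_zero; intro j hj
    apply Finset.sum_eq_zero; intro k hk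
    apply if_neg
    intro hcond
    apply hrep
    rw [← hux i j k (Finset.mem_range.1 hi) hcond, ← huy i j k (Finset.mem_range.1 hj) hcond,
        ← huz i j k (Finset.mem_range.1 hk) hcond]
    have : (n:ℤ) = q*r*i + r*p*j + p*q*k := by exact_mod_cast congrArg (Nat.cast : ℕ → ℤ) hcond
    rw [this]; push_cast; ring




theorem geom_aux (a b c : ℕ) :
    (∑ i ∈ range c, (X:Polynomial ℤ) ^ (a*b*i)) * ((X:Polynomial ℤ)^(a*b) - 1)
      = (X:Polynomial ℤ)^(a*b*c) - 1 := by
  have h := geom_sum_mul ((X:Polynomial ℤ)^(a*b)) c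
  simpa [← pow_mul] using h

theorem Xpow_sub_one_ne (n : ℕ) (hn : 0 < n) : ((X:Polynomial ℤ)^n - 1) ≠ 0 := by
  intro h
  have h2 := congrArg (fun f => Polynomial.coeff f 0) h
  simp only [Polynomial.coeff_sub, Polynomial.coeff_X_pow, Polynomial.coeff_zero,
    Polynomial.coeff_one, if_pos rfl] at h2
  rw [if_neg (by omega)] at h2
  norm_num at h2

theorem main_identity (p q r : ℕ) (hp : 0 < p) (hq : 0 < q) (hr : 0 < r) (Q : Polynomial ℤ)
    (hQ : Q * (((X : Polynomial ℤ) ^ (q * r) - 1) * ((X : Polynomial ℤ) ^ (r * p) - 1) *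
        ((X : Polynomial ℤ) ^ (p * q) - 1) * ((X : Polynomial ℤ) - 1)) =
      ((X : Polynomial ℤ) ^ (p * q * r) - 1) * ((X : Polynomial ℤ) ^ r - 1) *
        ((X : Polynomial ℤ) ^ q - 1) * ((X : Polynomial ℤ) ^ p - 1)) :
    Q * ((X:Polynomial ℤ) - 1) * ((X:Polynomial ℤ)^(p*q*r) - 1)^2 =
      ((X:Polynomial ℤ)^r - 1) * ((X:Polynomial ℤ)^q - 1) * ((X:Polynomial ℤ)^p - 1)
        * Epoly p q r := by
  have hne := Xpow_sub_one_ne (p*q*r) (by positivity)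
  apply mul_left_cancel₀ hne
  have e1 : (∑ i ∈ range p, (X:Polynomial ℤ) ^ (q*r*i)) * ((X:Polynomial ℤ)^(q*r) - 1)
      = (X:Polynomial ℤ)^(p*q*r) - 1 := by
    rw [geom_aux q r p, show q*r*p = p*q*r by ring]
  have e2 : (∑ j ∈ range q, (X:Polynomial ℤ) ^ (r*p*j)) * ((X:Polynomial ℤ)^(r*p) - 1)
      = (X:Polynomial ℤ)^(p*q*r) - 1 := by
    rw [geom_aux r p q, show r*p*q = p*q*r by ring]
  have e3 : (∑ k ∈ range r, (X:Polynomial ℤ) ^ (p*q*k)) * ((X:Polynomial ℤ)^(p*q) - 1)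
      = (X:Polynomial ℤ)^(p*q*r) - 1 := by
    rw [geom_aux p q r, show p*q*r = p*q*r by ring]
  have cube : ((X:Polynomial ℤ)^(p*q*r) - 1)^3 =
      ((∑ i ∈ range p, (X:Polynomial ℤ) ^ (q*r*i)) * ((X:Polynomial ℤ)^(q*r) - 1)) *
      ((∑ j ∈ range q, (X:Polynomial ℤ) ^ (r*p*j)) * ((X:Polynomial ℤ)^(r*p) - 1)) *
      ((∑ k ∈ range r, (X:Polynomial ℤ) ^ (p*q*k)) * ((X:Polynomial ℤ)^(p*q) - 1)) := by
    rw [e1, e2, e3]; ring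
  calc ((X:Polynomial ℤ)^(p*q*r) - 1) * (Q * ((X:Polynomial ℤ) - 1) * ((X:Polynomial ℤ)^(p*q*r) - 1)^2)
      = Q * ((X:Polynomial ℤ) - 1) * ((X:Polynomial ℤ)^(p*q*r) - 1)^3 := by ring
    _ = Q * (((X : Polynomial ℤ) ^ (q * r) - 1) * ((X : Polynomial ℤ) ^ (r * p) - 1) *
        ((X : Polynomial ℤ) ^ (p * q) - 1) * ((X : Polynomial ℤ) - 1)) * Epoly p q r := by
        rw [cube]; unfold Epoly; ring
    _ = ((X : Polynomial ℤ) ^ (p * q * r) - 1) * ((X : Polynomial ℤ) ^ r - 1) *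
        ((X : Polynomial ℤ) ^ q - 1) * ((X : Polynomial ℤ) ^ p - 1) * Epoly p q r := by rw [hQ]
    _ = ((X:Polynomial ℤ)^(p*q*r) - 1) * (((X:Polynomial ℤ)^r - 1) * ((X:Polynomial ℤ)^q - 1) *
        ((X:Polynomial ℤ)^p - 1) * Epoly p q r) := by ring



-- coeff of A * X^n at m (alias)
theorem coeff_mul_Xpow (A : Polynomial ℤ) (n m : ℕ) :
    (A * X^n).coeff m = if n ≤ m then A.coeff (m - n) else 0 :=
  Polynomial.coeff_mul_X_pow' A n m

theorem coeff_QX (Q : Polynomial ℤ) (m : ℕ) :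
    (Q * ((X:Polynomial ℤ) - 1)).coeff m
      = (if 1 ≤ m then Q.coeff (m-1) else 0) - Q.coeff m := by
  have h : Q * ((X:Polynomial ℤ) - 1) = Q * X^1 - Q := by ring
  rw [h, Polynomial.coeff_sub, coeff_mul_Xpow]

theorem coeff_lhs (p q r : ℕ) (hp : 0 < p) (hq : 0 < q) (hr : 0 < r)
    (Q E : Polynomial ℤ)
    (hid : Q * ((X:Polynomial ℤ) - 1) * ((X:Polynomial ℤ)^(p*q*r) - 1)^2 =
      ((X:Polynomial ℤ)^r - 1) * ((X:Polynomial ℤ)^q - 1) * ((X:Polynomial ℤ)^p - 1) * E)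
    (m : ℕ) (hm : m < p*q*r) :
    (Q * ((X:Polynomial ℤ) - 1)).coeff m =
      (if p+q+r ≤ m then E.coeff (m-(p+q+r)) else 0)
      - (if p+q ≤ m then E.coeff (m-(p+q)) else 0)
      - (if p+r ≤ m then E.coeff (m-(p+r)) else 0)
      - (if q+r ≤ m then E.coeff (m-(q+r)) else 0)
      + (if p ≤ m then E.coeff (m-p) else 0)
      + (if q ≤ m then E.coeff (m-q) else 0)
      + (if r ≤ m then E.coeff (m-r) else 0)
      - E.coeff m := by
  set A := Q * ((X:Polynomial ℤ) - 1) with hA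
  have expand : A * ((X:Polynomial ℤ)^(p*q*r) - 1)^2 =
      ((A * X^(p*q*r)) * X^(p*q*r) - ((A * X^(p*q*r)) + (A * X^(p*q*r)))) + A := by ring
  have hz : (A * X^(p*q*r)).coeff m = 0 := by rw [coeff_mul_Xpow, if_neg (by omega)]
  have hz2 : ((A * X^(p*q*r)) * X^(p*q*r)).coeff m = 0 := by
    rw [coeff_mul_Xpow, if_neg (by omega)]
  have hL : (A * ((X:Polynomial ℤ)^(p*q*r) - 1)^2).coeff m = A.coeff m := by
    rw [expand, Polynomial.coeff_add, Polynomial.coeff_sub, Polynomial.coeff_add, hz, hz2]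
    ring
  have expandR : ((X:Polynomial ℤ)^r - 1) * ((X:Polynomial ℤ)^q - 1) * ((X:Polynomial ℤ)^p - 1) * E =
      ((((((E * X^(p+q+r) - E * X^(p+q)) - E * X^(p+r)) - E * X^(q+r))
        + E * X^p) + E * X^q) + E * X^r) - E := by ring
  have hR : (((X:Polynomial ℤ)^r - 1) * ((X:Polynomial ℤ)^q - 1) * ((X:Polynomial ℤ)^p - 1) * E).coeff m =
      (if p+q+r ≤ m then E.coeff (m-(p+q+r)) else 0)
      - (if p+q ≤ m then E.coeff (m-(p+q)) else 0)
      - (if p+r ≤ m then E.coeff (m-(p+r)) else 0)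
      - (if q+r ≤ m then E.coeff (m-(q+r)) else 0)
      + (if p ≤ m then E.coeff (m-p) else 0)
      + (if q ≤ m then E.coeff (m-q) else 0)
      + (if r ≤ m then E.coeff (m-r) else 0)
      - E.coeff m := by
    rw [expandR]
    simp only [Polynomial.coeff_sub, Polynomial.coeff_add, coeff_mul_Xpow]
  rw [← hL, hid, hR]


theorem walk_ivt (f : ℕ → ℤ) (a : ℕ) :
    ∀ b : ℕ, a ≤ b →
    (∀ i : ℕ, a ≤ i → i < b → f (i+1) - f i ≤ 1 ∧ f i - f (i+1) ≤ 1) →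
    ∀ c : ℤ, ((f a ≤ c ∧ c ≤ f b) ∨ (f b ≤ c ∧ c ≤ f a)) →
    ∃ k, a ≤ k ∧ k ≤ b ∧ f k = c := by
  intro b
  induction b with
  | zero =>
    intro hab _ c hc
    have ha : a = 0 := by omega
    subst ha
    exact ⟨0, le_refl 0, le_refl 0, by omega⟩
  | succ n ih =>
    intro hab hstep c hc
    by_cases hn : a ≤ n
    · by_cases hcn : (f a ≤ c ∧ c ≤ f n) ∨ (f n ≤ c ∧ c ≤ f a)
      · obtain ⟨k, hk1, hk2, hk3⟩ := ih hn (fun i h1 h2 => hstep i h1 (by omega)) c hcn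
        exact ⟨k, hk1, by omega, hk3⟩
      · have hs := hstep n hn (by omega)
        refine ⟨n+1, by omega, le_refl _, ?_⟩
        omega
    · have ha : a = n + 1 := by omega
      subst ha
      exact ⟨n+1, le_refl _, le_refl _, by omega⟩



set_option maxHeartbeats 16000000 in
theorem core_jump
    (N e1 e2 e3 p q r m : ℤ)
    (X Xq Xr Xqr Y Yp Yr Ypr Z Zp Zq Zpq A1 A2 B1 B2 C1 C2 : ℤ)
    (hp : 1 ≤ p) (hq : 1 ≤ q) (hr : 1 ≤ r)
    (hm : 0 ≤ m ∧ m < N)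
    (hX : 0 ≤ X ∧ X ≤ N - e1) (hXq : 0 ≤ Xq ∧ Xq ≤ N - e1)
    (hXr : 0 ≤ Xr ∧ Xr ≤ N - e1) (hXqr : 0 ≤ Xqr ∧ Xqr ≤ N - e1)
    (hY : 0 ≤ Y ∧ Y ≤ N - e2) (hYp : 0 ≤ Yp ∧ Yp ≤ N - e2)
    (hYr : 0 ≤ Yr ∧ Yr ≤ N - e2) (hYpr : 0 ≤ Ypr ∧ Ypr ≤ N - e2)
    (hZ : 0 ≤ Z ∧ Z ≤ N - e3) (hZp : 0 ≤ Zp ∧ Zp ≤ N - e3)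
    (hZq : 0 ≤ Zq ∧ Zq ≤ N - e3) (hZpq : 0 ≤ Zpq ∧ Zpq ≤ N - e3)
    (hB1 : e1 ≤ B1 ∧ B1 ≤ N - e1) (hC1 : e1 ≤ C1 ∧ C1 ≤ N - e1)
    (hA1 : e2 ≤ A1 ∧ A1 ≤ N - e2) (hC2 : e2 ≤ C2 ∧ C2 ≤ N - e2)
    (hA2 : e3 ≤ A2 ∧ A2 ≤ N - e3) (hB2 : e3 ≤ B2 ∧ B2 ≤ N - e3)
    (wXq : Xq = X - B1 ∨ Xq = X - B1 + N)
    (wXr : Xr = X - C1 ∨ Xr = X - C1 + N)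
    (wXqr : Xqr = Xq - C1 ∨ Xqr = Xq - C1 + N)
    (wYp : Yp = Y - A1 ∨ Yp = Y - A1 + N)
    (wYr : Yr = Y - C2 ∨ Yr = Y - C2 + N)
    (wYpr : Ypr = Yp - C2 ∨ Ypr = Yp - C2 + N)
    (wZp : Zp = Z - A2 ∨ Zp = Z - A2 + N)
    (wZq : Zq = Z - B2 ∨ Zq = Z - B2 + N)
    (wZpq : Zpq = Zp - B2 ∨ Zpq = Zp - B2 + N)
    (hs1 : A1 + A2 = p + N) (hs2 : B1 + B2 = q + N) (hs3 : C1 + C2 = r + N)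
    (s0 sp sq sr spq spr sqr spqr : ℤ)
    (hs0 : (X + Y + Z ≤ m ∧ s0 = 1) ∨ (m < X + Y + Z ∧ s0 = 0))
    (hsp : (X + Yp + Zp ≤ m - p ∧ sp = 1) ∨ (m - p < X + Yp + Zp ∧ sp = 0))
    (hsq : (Xq + Y + Zq ≤ m - q ∧ sq = 1) ∨ (m - q < Xq + Y + Zq ∧ sq = 0))
    (hsr : (Xr + Yr + Z ≤ m - r ∧ sr = 1) ∨ (m - r < Xr + Yr + Z ∧ sr = 0))
    (hspq : (Xq + Yp + Zpq ≤ m - p - q ∧ spq = 1) ∨ (m - p - q < Xq + Yp + Zpq ∧ spq = 0))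
    (hspr : (Xr + Ypr + Zp ≤ m - p - r ∧ spr = 1) ∨ (m - p - r < Xr + Ypr + Zp ∧ spr = 0))
    (hsqr : (Xqr + Yr + Zq ≤ m - q - r ∧ sqr = 1) ∨ (m - q - r < Xqr + Yr + Zq ∧ sqr = 0))
    (hspqr : (Xqr + Ypr + Zpq ≤ m - p - q - r ∧ spqr = 1) ∨ (m - p - q - r < Xqr + Ypr + Zpq ∧ spqr = 0)) :
    -1 ≤ s0 - sp - sq - sr + spq + spr + sqr - spqr ∧
      s0 - sp - sq - sr + spq + spr + sqr - spqr ≤ 1 := by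
  omega

theorem or_scale {a b c P e N : ℤ} (h : a = b - c ∨ a = b - c + P) (hN : P * e = N) :
    a * e = b * e - c * e ∨ a * e = b * e - c * e + N := by
  rcases h with h | h
  · left; rw [h]; ring
  · right; rw [h, ← hN]; ring

theorem co_wrap {P : ℤ} (g : ℤ) (hP : 0 < P) (n t : ℤ) :
    co P g (n - t) = co P g n - co P g t ∨ co P g (n - t) = co P g n - co P g t + P := by
  rw [co_shift]
  exact emod_wrap hP (co_nonneg hP g n) (co_lt hP g n) (co_nonneg hP g t) (co_lt hP g t)

theorem ite_spec (a b : ℤ) :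
    (a ≤ b ∧ (if a ≤ b then (1:ℤ) else 0) = 1) ∨ (b < a ∧ (if a ≤ b then (1:ℤ) else 0) = 0) := by
  by_cases h : a ≤ b
  · exact Or.inl ⟨h, if_pos h⟩
  · exact Or.inr ⟨by omega, if_neg h⟩

theorem scaled_range {P e v : ℤ} (hP : 0 < P) (he : 0 ≤ e) (h0 : 0 ≤ v) (h1 : v < P) :
    0 ≤ v * e ∧ v * e ≤ P * e - e := by
  refine ⟨mul_nonneg h0 he, ?_⟩
  have h2 := mul_le_mul_of_nonneg_right (show v ≤ P - 1 by omega) he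
  nlinarith

theorem thr_range {P e v : ℤ} (hP : 0 < P) (he : 0 ≤ e) (hv1 : 1 ≤ v) (hvP : v < P) :
    e ≤ v * e ∧ v * e ≤ P * e - e := by
  constructor
  · nlinarith
  · have h2 := mul_le_mul_of_nonneg_right (show v ≤ P - 1 by omega) he
    nlinarith

theorem range_conv {A N N' e : ℤ} (h : 0 ≤ A ∧ A ≤ N' - e) (hNN : N' = N) :
    0 ≤ A ∧ A ≤ N - e := by rw [hNN] at h; exact h

theorem thr_conv {A N N' e : ℤ} (h : e ≤ A ∧ A ≤ N' - e) (hNN : N' = N) :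
    e ≤ A ∧ A ≤ N - e := by rw [hNN] at h; exact h

theorem eq_ite_le_ite {Nv B n : ℤ} (hd : Nv ∣ B - n) (hB : 0 ≤ B) (hn : n < Nv) :
    (if B = n then (1:ℤ) else 0) = if B ≤ n then 1 else 0 := by
  by_cases he : B = n
  · rw [if_pos he, if_pos (le_of_eq he)]
  · rw [if_neg he, if_neg ?_]
    intro hle
    have := Int.eq_zero_of_abs_lt_dvd hd (by rw [abs_sub_lt_iff]; omega)
    exact he (by omega)

theorem jump_bound (p q r : ℕ) (hp : 3 ≤ p) (hq : 3 ≤ q) (hr : 3 ≤ r)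
    (hpq : Nat.Coprime p q) (hqr : Nat.Coprime q r) (hrp : Nat.Coprime r p)
    (Q : Polynomial ℤ)
    (hQ : Q * (((X : Polynomial ℤ) ^ (q * r) - 1) * ((X : Polynomial ℤ) ^ (r * p) - 1) *
        ((X : Polynomial ℤ) ^ (p * q) - 1) * ((X : Polynomial ℤ) - 1)) =
      ((X : Polynomial ℤ) ^ (p * q * r) - 1) * ((X : Polynomial ℤ) ^ r - 1) *
        ((X : Polynomial ℤ) ^ q - 1) * ((X : Polynomial ℤ) ^ p - 1))
    (m : ℕ) (hm1 : 1 ≤ m) (hmN : m < p * q * r) :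
    Q.coeff m - Q.coeff (m - 1) ≤ 1 ∧ Q.coeff (m - 1) - Q.coeff m ≤ 1 := by
  have hp' : (0:ℤ) < (p:ℤ) := by exact_mod_cast (by omega : 0 < p)
  have hq' : (0:ℤ) < (q:ℤ) := by exact_mod_cast (by omega : 0 < q)
  have hr' : (0:ℤ) < (r:ℤ) := by exact_mod_cast (by omega : 0 < r)
  have hp3 : (3:ℤ) ≤ (p:ℤ) := by exact_mod_cast hp
  have hq3 : (3:ℤ) ≤ (q:ℤ) := by exact_mod_cast hq
  have hr3 : (3:ℤ) ≤ (r:ℤ) := by exact_mod_cast hr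
  -- coprimality over ℤ
  have cpq : IsCoprime (p:ℤ) (q:ℤ) := Int.isCoprime_iff_gcd_eq_one.2 hpq
  have cqr : IsCoprime (q:ℤ) (r:ℤ) := Int.isCoprime_iff_gcd_eq_one.2 hqr
  have crp : IsCoprime (r:ℤ) (p:ℤ) := Int.isCoprime_iff_gcd_eq_one.2 hrp
  have cp_qr : IsCoprime (p:ℤ) ((q:ℤ) * r) := cpq.mul_right crp.symm
  have cq_rp : IsCoprime (q:ℤ) ((r:ℤ) * p) := cqr.mul_right cpq.symm
  have cr_pq : IsCoprime (r:ℤ) ((p:ℤ) * q) := crp.mul_right cqr.symm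
  -- Bezout inverses
  obtain ⟨ux, gx, hgx0⟩ := id cp_qr
  obtain ⟨uy, gy, hgy0⟩ := id cq_rp
  obtain ⟨uz, gz, hgz0⟩ := id cr_pq
  have hgx : (p:ℤ) ∣ gx * ((q:ℤ) * r) - 1 := ⟨-ux, by linear_combination hgx0⟩
  have hgy : (q:ℤ) ∣ gy * ((r:ℤ) * p) - 1 := ⟨-uy, by linear_combination hgy0⟩
  have hgz : (r:ℤ) ∣ gz * ((p:ℤ) * q) - 1 := ⟨-uz, by linear_combination hgz0⟩
  -- threshold sum identities (three orientations)
  have hsumP := threshold_sum hp3 hq3 hr3 hgy hgz cqr cp_qr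
  have hgx2 : (p:ℤ) ∣ gx * ((r:ℤ) * q) - 1 := by rw [mul_comm (r:ℤ) (q:ℤ)]; exact hgx
  have hgz2 : (r:ℤ) ∣ gz * ((q:ℤ) * p) - 1 := by rw [mul_comm (q:ℤ) (p:ℤ)]; exact hgz
  have hsumQ := threshold_sum hq3 hp3 hr3 hgx2 hgz2 crp.symm (cpq.symm.mul_right cqr)
  have hsumR := threshold_sum hr3 hp3 hq3 hgx hgy cpq cr_pq
  -- threshold positivity
  have hposP := threshold_pos hp3 hq3 hr3 hgy hgz cqr cp_qr
  have hposQ := threshold_pos hq3 hp3 hr3 hgx2 hgz2 crp.symm (cpq.symm.mul_right cqr)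
  have hposR := threshold_pos hr3 hp3 hq3 hgx hgy cpq cr_pq
  -- divisibility of B(n) - n
  have hBd : ∀ n : ℤ, ((p:ℤ) * ((q:ℤ) * r)) ∣
      (co p gx n * ((q:ℤ) * r) + co q gy n * ((r:ℤ) * p) + co r gz n * ((p:ℤ) * q)) - n := by
    intro n
    apply cp_qr.mul_dvd
    · have harr : (co p gx n * ((q:ℤ) * r) + co q gy n * ((r:ℤ) * p) + co r gz n * ((p:ℤ) * q)) - n
          = (co p gx n * ((q:ℤ) * r) - n) + (p:ℤ) * (co q gy n * r + co r gz n * q) := by ring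
      rw [harr]
      exact dvd_add (co_spec hgx n) ⟨co q gy n * r + co r gz n * q, rfl⟩
    · apply cqr.mul_dvd
      · have harr : (co p gx n * ((q:ℤ) * r) + co q gy n * ((r:ℤ) * p) + co r gz n * ((p:ℤ) * q)) - n
            = (co q gy n * ((r:ℤ) * p) - n) + (q:ℤ) * (co p gx n * r + co r gz n * p) := by ring
        rw [harr]
        exact dvd_add (co_spec hgy n) ⟨co p gx n * r + co r gz n * p, rfl⟩
      · have harr : (co p gx n * ((q:ℤ) * r) + co q gy n * ((r:ℤ) * p) + co r gz n * ((p:ℤ) * q)) - n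
            = (co r gz n * ((p:ℤ) * q) - n) + (r:ℤ) * (co p gx n * q + co q gy n * p) := by ring
        rw [harr]
        exact dvd_add (co_spec hgz n) ⟨co p gx n * q + co q gy n * p, rfl⟩
  have hBnn : ∀ n : ℤ, 0 ≤ co p gx n * ((q:ℤ) * r) + co q gy n * ((r:ℤ) * p) + co r gz n * ((p:ℤ) * q) := by
    intro n
    have h1 := mul_nonneg (co_nonneg hp' gx n) (by positivity : (0:ℤ) ≤ (q:ℤ) * r)
    have h2 := mul_nonneg (co_nonneg hq' gy n) (by positivity : (0:ℤ) ≤ (r:ℤ) * p)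
    have h3 := mul_nonneg (co_nonneg hr' gz n) (by positivity : (0:ℤ) ≤ (p:ℤ) * q)
    linarith
  have hmN' : (m:ℤ) < (p:ℤ) * ((q:ℤ) * r) := by
    have : ((p*q*r : ℕ) : ℤ) = (p:ℤ) * ((q:ℤ) * r) := by push_cast; ring
    rw [← this]
    exact_mod_cast hmN
  -- the bridge lemma
  have hbridge : ∀ σ : ℕ, (if σ ≤ m then (Epoly p q r).coeff (m - σ) else 0) =
      if co p gx ((m:ℤ) - σ) * ((q:ℤ) * r) + co q gy ((m:ℤ) - σ) * ((r:ℤ) * p)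
          + co r gz ((m:ℤ) - σ) * ((p:ℤ) * q) ≤ (m:ℤ) - σ then 1 else 0 := by
    intro σ
    by_cases hσ : σ ≤ m
    · rw [if_pos hσ, Epoly_coeff_eq p q r (by omega) (by omega) (by omega) gx gy gz hgx hgy hgz
        cp_qr cq_rp cr_pq (m - σ)]
      rw [Nat.cast_sub hσ]
      exact eq_ite_le_ite (hBd ((m:ℤ) - σ)) (hBnn _) (by
        have : (0:ℤ) ≤ (σ:ℤ) := by positivity
        linarith)
    · rw [if_neg hσ]
      symm
      rw [if_neg ?_]
      intro hle
      have h1 : (m:ℤ) < (σ:ℤ) := by exact_mod_cast (by omega : m < σ)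
      have h2 := hBnn ((m:ℤ) - σ)
      linarith
  have hterm_p : (if p ≤ m then (Epoly p q r).coeff (m - p) else 0) = (if co p gx (m:ℤ) * ((q:ℤ) * r) + co q gy ((m:ℤ) - (p:ℤ)) * ((r:ℤ) * p) + co r gz ((m:ℤ) - (p:ℤ)) * ((p:ℤ) * q) ≤ (m:ℤ) - (p:ℤ) then (1:ℤ) else 0) := by
    have h := hbridge p
    rw [co_shift_self hp' (m:ℤ) (p:ℤ) dvd_rfl] at h
    exact h
  have hterm_q : (if q ≤ m then (Epoly p q r).coeff (m - q) else 0) = (if co p gx ((m:ℤ) - (q:ℤ)) * ((q:ℤ) * r) + co q gy (m:ℤ) * ((r:ℤ) * p) + co r gz ((m:ℤ) - (q:ℤ)) * ((p:ℤ) * q) ≤ (m:ℤ) - (q:ℤ) then (1:ℤ) else 0) := by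
    have h := hbridge q
    rw [co_shift_self hq' (m:ℤ) (q:ℤ) dvd_rfl] at h
    exact h
  have hterm_r : (if r ≤ m then (Epoly p q r).coeff (m - r) else 0) = (if co p gx ((m:ℤ) - (r:ℤ)) * ((q:ℤ) * r) + co q gy ((m:ℤ) - (r:ℤ)) * ((r:ℤ) * p) + co r gz (m:ℤ) * ((p:ℤ) * q) ≤ (m:ℤ) - (r:ℤ) then (1:ℤ) else 0) := by
    have h := hbridge r
    rw [co_shift_self hr' (m:ℤ) (r:ℤ) dvd_rfl] at h
    exact h
  have hterm_pq : (if p + q ≤ m then (Epoly p q r).coeff (m - (p + q)) else 0) = (if co p gx ((m:ℤ) - (q:ℤ)) * ((q:ℤ) * r) + co q gy ((m:ℤ) - (p:ℤ)) * ((r:ℤ) * p) + co r gz ((m:ℤ) - (p:ℤ) - (q:ℤ)) * ((p:ℤ) * q) ≤ (m:ℤ) - (p:ℤ) - (q:ℤ) then (1:ℤ) else 0) := by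
    have h := hbridge (p + q)
    have ex : co p gx ((m:ℤ) - ((p + q : ℕ) : ℤ)) = co p gx ((m:ℤ) - (q:ℤ)) := by
      rw [(by push_cast; ring : ((m:ℤ) - ((p + q : ℕ) : ℤ)) = (m:ℤ) - (q:ℤ) - (p:ℤ))]
      exact co_shift_self hp' _ _ dvd_rfl
    have ey : co q gy ((m:ℤ) - ((p + q : ℕ) : ℤ)) = co q gy ((m:ℤ) - (p:ℤ)) := by
      rw [(by push_cast; ring : ((m:ℤ) - ((p + q : ℕ) : ℤ)) = (m:ℤ) - (p:ℤ) - (q:ℤ))]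
      exact co_shift_self hq' _ _ dvd_rfl
    have ez : co r gz ((m:ℤ) - ((p + q : ℕ) : ℤ)) = co r gz ((m:ℤ) - (p:ℤ) - (q:ℤ)) := by
      rw [(by push_cast; ring : ((m:ℤ) - ((p + q : ℕ) : ℤ)) = (m:ℤ) - (p:ℤ) - (q:ℤ))]
    rw [ex, ey, ez] at h
    rw [(by push_cast; ring : ((m:ℤ) - ((p + q : ℕ) : ℤ)) = (m:ℤ) - (p:ℤ) - (q:ℤ))] at h
    exact h
  have hterm_pr : (if p + r ≤ m then (Epoly p q r).coeff (m - (p + r)) else 0) = (if co p gx ((m:ℤ) - (r:ℤ)) * ((q:ℤ) * r) + co q gy ((m:ℤ) - (p:ℤ) - (r:ℤ)) * ((r:ℤ) * p) + co r gz ((m:ℤ) - (p:ℤ)) * ((p:ℤ) * q) ≤ (m:ℤ) - (p:ℤ) - (r:ℤ) then (1:ℤ) else 0) := by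
    have h := hbridge (p + r)
    have ex : co p gx ((m:ℤ) - ((p + r : ℕ) : ℤ)) = co p gx ((m:ℤ) - (r:ℤ)) := by
      rw [(by push_cast; ring : ((m:ℤ) - ((p + r : ℕ) : ℤ)) = (m:ℤ) - (r:ℤ) - (p:ℤ))]
      exact co_shift_self hp' _ _ dvd_rfl
    have ey : co q gy ((m:ℤ) - ((p + r : ℕ) : ℤ)) = co q gy ((m:ℤ) - (p:ℤ) - (r:ℤ)) := by
      rw [(by push_cast; ring : ((m:ℤ) - ((p + r : ℕ) : ℤ)) = (m:ℤ) - (p:ℤ) - (r:ℤ))]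
    have ez : co r gz ((m:ℤ) - ((p + r : ℕ) : ℤ)) = co r gz ((m:ℤ) - (p:ℤ)) := by
      rw [(by push_cast; ring : ((m:ℤ) - ((p + r : ℕ) : ℤ)) = (m:ℤ) - (p:ℤ) - (r:ℤ))]
      exact co_shift_self hr' _ _ dvd_rfl
    rw [ex, ey, ez] at h
    rw [(by push_cast; ring : ((m:ℤ) - ((p + r : ℕ) : ℤ)) = (m:ℤ) - (p:ℤ) - (r:ℤ))] at h
    exact h
  have hterm_qr : (if q + r ≤ m then (Epoly p q r).coeff (m - (q + r)) else 0) = (if co p gx ((m:ℤ) - (q:ℤ) - (r:ℤ)) * ((q:ℤ) * r) + co q gy ((m:ℤ) - (r:ℤ)) * ((r:ℤ) * p) + co r gz ((m:ℤ) - (q:ℤ)) * ((p:ℤ) * q) ≤ (m:ℤ) - (q:ℤ) - (r:ℤ) then (1:ℤ) else 0) := by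
    have h := hbridge (q + r)
    have ex : co p gx ((m:ℤ) - ((q + r : ℕ) : ℤ)) = co p gx ((m:ℤ) - (q:ℤ) - (r:ℤ)) := by
      rw [(by push_cast; ring : ((m:ℤ) - ((q + r : ℕ) : ℤ)) = (m:ℤ) - (q:ℤ) - (r:ℤ))]
    have ey : co q gy ((m:ℤ) - ((q + r : ℕ) : ℤ)) = co q gy ((m:ℤ) - (r:ℤ)) := by
      rw [(by push_cast; ring : ((m:ℤ) - ((q + r : ℕ) : ℤ)) = (m:ℤ) - (r:ℤ) - (q:ℤ))]
      exact co_shift_self hq' _ _ dvd_rfl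
    have ez : co r gz ((m:ℤ) - ((q + r : ℕ) : ℤ)) = co r gz ((m:ℤ) - (q:ℤ)) := by
      rw [(by push_cast; ring : ((m:ℤ) - ((q + r : ℕ) : ℤ)) = (m:ℤ) - (q:ℤ) - (r:ℤ))]
      exact co_shift_self hr' _ _ dvd_rfl
    rw [ex, ey, ez] at h
    rw [(by push_cast; ring : ((m:ℤ) - ((q + r : ℕ) : ℤ)) = (m:ℤ) - (q:ℤ) - (r:ℤ))] at h
    exact h
  have hterm_pqr : (if p + q + r ≤ m then (Epoly p q r).coeff (m - (p + q + r)) else 0) = (if co p gx ((m:ℤ) - (q:ℤ) - (r:ℤ)) * ((q:ℤ) * r) + co q gy ((m:ℤ) - (p:ℤ) - (r:ℤ)) * ((r:ℤ) * p) + co r gz ((m:ℤ) - (p:ℤ) - (q:ℤ)) * ((p:ℤ) * q) ≤ (m:ℤ) - (p:ℤ) - (q:ℤ) - (r:ℤ) then (1:ℤ) else 0) := by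
    have h := hbridge (p + q + r)
    have ex : co p gx ((m:ℤ) - ((p + q + r : ℕ) : ℤ)) = co p gx ((m:ℤ) - (q:ℤ) - (r:ℤ)) := by
      rw [(by push_cast; ring : ((m:ℤ) - ((p + q + r : ℕ) : ℤ)) = (m:ℤ) - (q:ℤ) - (r:ℤ) - (p:ℤ))]
      exact co_shift_self hp' _ _ dvd_rfl
    have ey : co q gy ((m:ℤ) - ((p + q + r : ℕ) : ℤ)) = co q gy ((m:ℤ) - (p:ℤ) - (r:ℤ)) := by
      rw [(by push_cast; ring : ((m:ℤ) - ((p + q + r : ℕ) : ℤ)) = (m:ℤ) - (p:ℤ) - (r:ℤ) - (q:ℤ))]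
      exact co_shift_self hq' _ _ dvd_rfl
    have ez : co r gz ((m:ℤ) - ((p + q + r : ℕ) : ℤ)) = co r gz ((m:ℤ) - (p:ℤ) - (q:ℤ)) := by
      rw [(by push_cast; ring : ((m:ℤ) - ((p + q + r : ℕ) : ℤ)) = (m:ℤ) - (p:ℤ) - (q:ℤ) - (r:ℤ))]
      exact co_shift_self hr' _ _ dvd_rfl
    rw [ex, ey, ez] at h
    rw [(by push_cast; ring : ((m:ℤ) - ((p + q + r : ℕ) : ℤ)) = (m:ℤ) - (p:ℤ) - (q:ℤ) - (r:ℤ))] at h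
    exact h
  have hterm_0 : (Epoly p q r).coeff m = (if co p gx (m:ℤ) * ((q:ℤ) * r) + co q gy (m:ℤ) * ((r:ℤ) * p) + co r gz (m:ℤ) * ((p:ℤ) * q) ≤ (m:ℤ) then (1:ℤ) else 0) := by
    have h := hbridge 0
    rw [(by push_cast; ring : ((m:ℤ) - ((0:ℕ) : ℤ)) = (m:ℤ))] at h
    rw [if_pos (Nat.zero_le m), Nat.sub_zero] at h
    exact h
  obtain ⟨hlow, hhigh⟩ := core_jump
    (N := (p:ℤ) * ((q:ℤ) * r)) (e1 := (q:ℤ) * r) (e2 := (r:ℤ) * p) (e3 := (p:ℤ) * q)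
    (p := (p:ℤ)) (q := (q:ℤ)) (r := (r:ℤ)) (m := (m:ℤ))
    (X := co p gx (m:ℤ) * ((q:ℤ) * r)) (Xq := co p gx ((m:ℤ) - (q:ℤ)) * ((q:ℤ) * r)) (Xr := co p gx ((m:ℤ) - (r:ℤ)) * ((q:ℤ) * r)) (Xqr := co p gx ((m:ℤ) - (q:ℤ) - (r:ℤ)) * ((q:ℤ) * r))
    (Y := co q gy (m:ℤ) * ((r:ℤ) * p)) (Yp := co q gy ((m:ℤ) - (p:ℤ)) * ((r:ℤ) * p)) (Yr := co q gy ((m:ℤ) - (r:ℤ)) * ((r:ℤ) * p)) (Ypr := co q gy ((m:ℤ) - (p:ℤ) - (r:ℤ)) * ((r:ℤ) * p))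
    (Z := co r gz (m:ℤ) * ((p:ℤ) * q)) (Zp := co r gz ((m:ℤ) - (p:ℤ)) * ((p:ℤ) * q)) (Zq := co r gz ((m:ℤ) - (q:ℤ)) * ((p:ℤ) * q)) (Zpq := co r gz ((m:ℤ) - (p:ℤ) - (q:ℤ)) * ((p:ℤ) * q))
    (A1 := co q gy (p:ℤ) * ((r:ℤ) * p)) (A2 := co r gz (p:ℤ) * ((p:ℤ) * q)) (B1 := co p gx (q:ℤ) * ((q:ℤ) * r)) (B2 := co r gz (q:ℤ) * ((p:ℤ) * q)) (C1 := co p gx (r:ℤ) * ((q:ℤ) * r)) (C2 := co q gy (r:ℤ) * ((r:ℤ) * p))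
    (hp := by linarith) (hq := by linarith) (hr := by linarith)
    (hm := ⟨by positivity, hmN'⟩)
    (hX := range_conv (scaled_range hp' (by positivity) (co_nonneg hp' gx _) (co_lt hp' gx _)) (by ring))
    (hXq := range_conv (scaled_range hp' (by positivity) (co_nonneg hp' gx _) (co_lt hp' gx _)) (by ring))
    (hXr := range_conv (scaled_range hp' (by positivity) (co_nonneg hp' gx _) (co_lt hp' gx _)) (by ring))
    (hXqr := range_conv (scaled_range hp' (by positivity) (co_nonneg hp' gx _) (co_lt hp' gx _)) (by ring))
    (hY := range_conv (scaled_range hq' (by positivity) (co_nonneg hq' gy _) (co_lt hq' gy _)) (by ring))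
    (hYp := range_conv (scaled_range hq' (by positivity) (co_nonneg hq' gy _) (co_lt hq' gy _)) (by ring))
    (hYr := range_conv (scaled_range hq' (by positivity) (co_nonneg hq' gy _) (co_lt hq' gy _)) (by ring))
    (hYpr := range_conv (scaled_range hq' (by positivity) (co_nonneg hq' gy _) (co_lt hq' gy _)) (by ring))
    (hZ := range_conv (scaled_range hr' (by positivity) (co_nonneg hr' gz _) (co_lt hr' gz _)) (by ring))
    (hZp := range_conv (scaled_range hr' (by positivity) (co_nonneg hr' gz _) (co_lt hr' gz _)) (by ring))
    (hZq := range_conv (scaled_range hr' (by positivity) (co_nonneg hr' gz _) (co_lt hr' gz _)) (by ring))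
    (hZpq := range_conv (scaled_range hr' (by positivity) (co_nonneg hr' gz _) (co_lt hr' gz _)) (by ring))
    (hB1 := thr_conv (thr_range hp' (by positivity) hposQ.1 (co_lt hp' gx _)) (by ring))
    (hC1 := thr_conv (thr_range hp' (by positivity) hposR.1 (co_lt hp' gx _)) (by ring))
    (hA1 := thr_conv (thr_range hq' (by positivity) hposP.1 (co_lt hq' gy _)) (by ring))
    (hC2 := thr_conv (thr_range hq' (by positivity) hposR.2 (co_lt hq' gy _)) (by ring))
    (hA2 := thr_conv (thr_range hr' (by positivity) hposP.2 (co_lt hr' gz _)) (by ring))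
    (hB2 := thr_conv (thr_range hr' (by positivity) hposQ.2 (co_lt hr' gz _)) (by ring))
    (wXq := or_scale (co_wrap gx hp' (m:ℤ) (q:ℤ)) (by ring))
    (wXr := or_scale (co_wrap gx hp' (m:ℤ) (r:ℤ)) (by ring))
    (wXqr := or_scale (co_wrap gx hp' ((m:ℤ) - (q:ℤ)) (r:ℤ)) (by ring))
    (wYp := or_scale (co_wrap gy hq' (m:ℤ) (p:ℤ)) (by ring))
    (wYr := or_scale (co_wrap gy hq' (m:ℤ) (r:ℤ)) (by ring))
    (wYpr := or_scale (co_wrap gy hq' ((m:ℤ) - (p:ℤ)) (r:ℤ)) (by ring))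
    (wZp := or_scale (co_wrap gz hr' (m:ℤ) (p:ℤ)) (by ring))
    (wZq := or_scale (co_wrap gz hr' (m:ℤ) (q:ℤ)) (by ring))
    (wZpq := or_scale (co_wrap gz hr' ((m:ℤ) - (p:ℤ)) (q:ℤ)) (by ring))
    (hs1 := by linear_combination hsumP)
    (hs2 := by linear_combination hsumQ)
    (hs3 := by linear_combination hsumR)
    (s0 := if co p gx (m:ℤ) * ((q:ℤ) * r) + co q gy (m:ℤ) * ((r:ℤ) * p) + co r gz (m:ℤ) * ((p:ℤ) * q) ≤ (m:ℤ) then (1:ℤ) else 0)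
    (sp := if co p gx (m:ℤ) * ((q:ℤ) * r) + co q gy ((m:ℤ) - (p:ℤ)) * ((r:ℤ) * p) + co r gz ((m:ℤ) - (p:ℤ)) * ((p:ℤ) * q) ≤ (m:ℤ) - (p:ℤ) then (1:ℤ) else 0)
    (sq := if co p gx ((m:ℤ) - (q:ℤ)) * ((q:ℤ) * r) + co q gy (m:ℤ) * ((r:ℤ) * p) + co r gz ((m:ℤ) - (q:ℤ)) * ((p:ℤ) * q) ≤ (m:ℤ) - (q:ℤ) then (1:ℤ) else 0)
    (sr := if co p gx ((m:ℤ) - (r:ℤ)) * ((q:ℤ) * r) + co q gy ((m:ℤ) - (r:ℤ)) * ((r:ℤ) * p) + co r gz (m:ℤ) * ((p:ℤ) * q) ≤ (m:ℤ) - (r:ℤ) then (1:ℤ) else 0)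
    (spq := if co p gx ((m:ℤ) - (q:ℤ)) * ((q:ℤ) * r) + co q gy ((m:ℤ) - (p:ℤ)) * ((r:ℤ) * p) + co r gz ((m:ℤ) - (p:ℤ) - (q:ℤ)) * ((p:ℤ) * q) ≤ (m:ℤ) - (p:ℤ) - (q:ℤ) then (1:ℤ) else 0)
    (spr := if co p gx ((m:ℤ) - (r:ℤ)) * ((q:ℤ) * r) + co q gy ((m:ℤ) - (p:ℤ) - (r:ℤ)) * ((r:ℤ) * p) + co r gz ((m:ℤ) - (p:ℤ)) * ((p:ℤ) * q) ≤ (m:ℤ) - (p:ℤ) - (r:ℤ) then (1:ℤ) else 0)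
    (sqr := if co p gx ((m:ℤ) - (q:ℤ) - (r:ℤ)) * ((q:ℤ) * r) + co q gy ((m:ℤ) - (r:ℤ)) * ((r:ℤ) * p) + co r gz ((m:ℤ) - (q:ℤ)) * ((p:ℤ) * q) ≤ (m:ℤ) - (q:ℤ) - (r:ℤ) then (1:ℤ) else 0)
    (spqr := if co p gx ((m:ℤ) - (q:ℤ) - (r:ℤ)) * ((q:ℤ) * r) + co q gy ((m:ℤ) - (p:ℤ) - (r:ℤ)) * ((r:ℤ) * p) + co r gz ((m:ℤ) - (p:ℤ) - (q:ℤ)) * ((p:ℤ) * q) ≤ (m:ℤ) - (p:ℤ) - (q:ℤ) - (r:ℤ) then (1:ℤ) else 0)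
    (hs0 := ite_spec _ _) (hsp := ite_spec _ _) (hsq := ite_spec _ _) (hsr := ite_spec _ _)
    (hspq := ite_spec _ _) (hspr := ite_spec _ _) (hsqr := ite_spec _ _) (hspqr := ite_spec _ _)
  have hid := main_identity p q r (by omega) (by omega) (by omega) Q hQ
  have hfinal := coeff_lhs p q r (by omega) (by omega) (by omega) Q (Epoly p q r) hid m hmN
  rw [hterm_pqr, hterm_pq, hterm_pr, hterm_qr, hterm_p, hterm_q, hterm_r, hterm_0] at hfinal
  have hqx := coeff_QX Q m
  rw [if_pos hm1] at hqx
  constructor <;> linarith [hlow, hhigh, hfinal, hqx]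

theorem deg_lt (p q r : ℕ) (hp : 3 ≤ p) (hq : 3 ≤ q) (hr : 3 ≤ r) :
    (p - 1) * (q - 1) * (r - 1) < p * q * r := by
  rcases Nat.exists_eq_add_of_le hp with ⟨a, rfl⟩
  rcases Nat.exists_eq_add_of_le hq with ⟨b, rfl⟩
  rcases Nat.exists_eq_add_of_le hr with ⟨c, rfl⟩
  simp only [show 3 + a - 1 = 2 + a by omega, show 3 + b - 1 = 2 + b by omega,
    show 3 + c - 1 = 2 + c by omega]
  nlinarith

end TIE

open TIE in
theorem stmt_4' (p q r : ℕ) (hp : 3 ≤ p) (hq : 3 ≤ q) (hr : 3 ≤ r)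
    (hpq : Nat.Coprime p q) (hqr : Nat.Coprime q r) (hrp : Nat.Coprime r p)
    (Q : Polynomial ℤ)
    (hQ : Q * (((X : Polynomial ℤ) ^ (q * r) - 1) * ((X : Polynomial ℤ) ^ (r * p) - 1) *
        ((X : Polynomial ℤ) ^ (p * q) - 1) * ((X : Polynomial ℤ) - 1)) =
      ((X : Polynomial ℤ) ^ (p * q * r) - 1) * ((X : Polynomial ℤ) ^ r - 1) *
        ((X : Polynomial ℤ) ^ q - 1) * ((X : Polynomial ℤ) ^ p - 1))
    (Aplus Aminus : ℤ)
    (hmax : IsGreatest {a : ℤ | ∃ m ≤ (p - 1) * (q - 1) * (r - 1), Q.coeff m = a} Aplus)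
    (hmin : IsLeast {a : ℤ | ∃ m ≤ (p - 1) * (q - 1) * (r - 1), Q.coeff m = a} Aminus) :
    {a : ℤ | ∃ m ≤ (p - 1) * (q - 1) * (r - 1), Q.coeff m = a} = Set.Icc Aminus Aplus := by
  have hD : (p - 1) * (q - 1) * (r - 1) < p * q * r := deg_lt p q r hp hq hr
  apply Set.Subset.antisymm
  · intro a ha
    exact ⟨hmin.2 ha, hmax.2 ha⟩
  · intro c hc
    obtain ⟨m1, hm1le, hm1⟩ := hmin.1
    obtain ⟨m2, hm2le, hm2⟩ := hmax.1
    have hstep : ∀ i : ℕ, i + 1 ≤ (p - 1) * (q - 1) * (r - 1) →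
        (Q.coeff (i+1) - Q.coeff i ≤ 1 ∧ Q.coeff i - Q.coeff (i+1) ≤ 1) := by
      intro i hi
      have h := jump_bound p q r hp hq hr hpq hqr hrp Q hQ (i+1) (by omega) (by omega)
      rwa [Nat.add_sub_cancel] at h
    rcases le_or_gt m1 m2 with hle | hlt
    · obtain ⟨k, _, hk2, hk3⟩ := walk_ivt (fun k => Q.coeff k) m1 m2 hle
        (fun i h1 h2 => hstep i (by omega)) c
        (Or.inl ⟨hm1.le.trans hc.1, hc.2.trans hm2.ge⟩)
      exact ⟨k, by omega, hk3⟩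
    · obtain ⟨k, _, hk2, hk3⟩ := walk_ivt (fun k => Q.coeff k) m2 m1 (by omega)
        (fun i h1 h2 => hstep i (by omega)) c
        (Or.inr ⟨hm1.le.trans hc.1, hc.2.trans hm2.ge⟩)
      exact ⟨k, by omega, hk3⟩

end TIEProof

/-- The set of coefficients of `Q_{p,q,r}` is a string of consecutive integers:
`𝒜(p,q,r) = [A⁻(p,q,r), A⁺(p,q,r)] ∩ ℤ`. -/
theorem stmt_4 (p q r : ℕ) (hp : 3 ≤ p) (hq : 3 ≤ q) (hr : 3 ≤ r)
    (hpq : Nat.Coprime p q) (hqr : Nat.Coprime q r) (hrp : Nat.Coprime r p)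
    (Q : Polynomial ℤ) (hQ : ternaryId p q r Q)
    (Aplus Aminus : ℤ)
    (hmax : IsGreatest {a : ℤ | ∃ m ≤ (p - 1) * (q - 1) * (r - 1), Q.coeff m = a} Aplus)
    (hmin : IsLeast {a : ℤ | ∃ m ≤ (p - 1) * (q - 1) * (r - 1), Q.coeff m = a} Aminus) :
    {a : ℤ | ∃ m ≤ (p - 1) * (q - 1) * (r - 1), Q.coeff m = a} = Set.Icc Aminus Aplus := by
  have hQ2 := hQ
  unfold ternaryId at hQ2
  exact stmt_4' p q r hp hq hr hpq hqr hrp Q hQ2 Aplus Aminus hmax hmin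
end

section
/- For all integers n with n < r₁r₂r₃, |χ(n) − Σᵢ χ(n − rᵢ) + Σ_{i<j} χ(n − rᵢ − rⱼ) − χ(n − r₁ − r₂ − r₃)| ≤ 1, where the sums run over 1 ≤ i ≤ 3 and 1 ≤ i < j ≤ 3 respectively. -/
open Polynomial
open scoped Classical

lemma mul_window (p t a b : ℤ) (hp : 0 < p) (h1 : a * p < p * t) (h2 : p * t < b * p) :
    a < t ∧ t < b := by
  constructor
  · by_contra hh; push_neg at hh
    have h3 : p * t ≤ p * a := mul_le_mul_of_nonneg_left hh hp.le
    nlinarith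
  · by_contra hh; push_neg at hh
    have h3 : p * b ≤ p * t := mul_le_mul_of_nonneg_left hh hp.le
    nlinarith

lemma res_spec (p k u c m : ℤ) (hp : 0 < p) (h : u * p + c * k = 1) :
    ∃ I : ℤ, 0 ≤ I ∧ I < p ∧ p ∣ I * k - m := by
  refine ⟨(m * c) % p, Int.emod_nonneg _ hp.ne', Int.emod_lt_of_pos _ hp,
    ⟨-(m * u) - (m * c / p) * k, ?_⟩⟩
  rw [Int.emod_def]
  linear_combination m * h

lemma shift_pos (p k m s : ℤ) (h3 : 3 ≤ p) (hcop : IsCoprime p m) (h0 : 0 ≤ s)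
    (hd : p ∣ s * k - m) : 1 ≤ s := by
  rcases h0.lt_or_eq with h | h
  · omega
  · exfalso
    rw [← h] at hd
    simp at hd
    have hu := hcop.isUnit_of_dvd hd
    rw [Int.isUnit_iff] at hu
    omega

lemma inv_identity (q r x y : ℤ) (h3q : 3 ≤ q) (h3r : 3 ≤ r)
    (hcop : IsCoprime q r)
    (hx0 : 1 ≤ x) (hx1 : x < q) (hy0 : 1 ≤ y) (hy1 : y < r)
    (hdq : q ∣ x * r - 1) (hdr : r ∣ y * q - 1) :
    x * r + y * q = 1 + q * r := by
  have h1 : q ∣ x * r + y * q - 1 := by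
    obtain ⟨t, ht⟩ := hdq; exact ⟨t + y, by linear_combination ht⟩
  have h2 : r ∣ x * r + y * q - 1 := by
    obtain ⟨t, ht⟩ := hdr; exact ⟨t + x, by linear_combination ht⟩
  obtain ⟨w, hw⟩ := hcop.mul_dvd h1 h2
  have hb1 : 0 * (q * r) < (q * r) * w := by rw [← hw]; nlinarith
  have hb2 : (q * r) * w < 2 * (q * r) := by rw [← hw]; nlinarith
  have hqr : 0 < q * r := by nlinarith
  have hww := mul_window (q * r) w 0 2 hqr hb1 (by linarith)
  have hw1 : w = 1 := by omega
  rw [hw1, mul_one] at hw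
  linarith

lemma if01 (x E : ℤ) (h : x = if E = 0 then 1 else 0) :
    (E = 0 ∧ x = 1) ∨ (E ≠ 0 ∧ x = 0) := by
  by_cases hE : E = 0
  · exact Or.inl ⟨hE, by rw [h, if_pos hE]⟩
  · exact Or.inr ⟨hE, by rw [h, if_neg hE]⟩

lemma if_shift (M g m E : ℤ) (hM : 0 < M) (hg : g = m + M * E) :
    (if g = m then (1:ℤ) else 0) = if E = 0 then 1 else 0 := by
  by_cases hE : E = 0
  · rw [if_pos hE, if_pos (by rw [hg, hE]; ring)]
  · rw [if_neg hE, if_neg]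
    intro hgm
    apply hE
    have h0 : M * E = 0 := by linarith [hg, hgm]
    rcases mul_eq_zero.mp h0 with h | h
    · omega
    · exact h

lemma E_nonneg (M g m E : ℤ) (hM : 0 < M) (hg : g = m + M * E) (hg0 : 0 ≤ g)
    (hm : m < M) : 0 ≤ E := by
  by_contra hh; push_neg at hh
  have h1 : E ≤ -1 := by omega
  have h2 : M * E ≤ M * (-1) := mul_le_mul_of_nonneg_left h1 hM.le
  nlinarith

lemma chi_neg (p q r : ℕ) (m : ℤ) (hm : m < 0) : chi p q r m = 0 := by
  simp only [chi]
  rw [if_neg]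
  rintro ⟨i, j, k, hijk⟩
  have h0 : (0:ℤ) ≤ m := by rw [hijk]; positivity
  omega

lemma chi_eq (p q r : ℕ) (m I J K : ℤ)
    (h3p : 3 ≤ p) (h3q : 3 ≤ q) (h3r : 3 ≤ r)
    (hm : m < (p:ℤ) * q * r)
    (hcp : IsCoprime (p:ℤ) ((q:ℤ) * r))
    (hcq : IsCoprime (q:ℤ) ((r:ℤ) * p))
    (hcr : IsCoprime (r:ℤ) ((p:ℤ) * q))
    (hI0 : 0 ≤ I) (hI1 : I < (p:ℤ)) (hId : (p:ℤ) ∣ I * ((q:ℤ) * r) - m)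
    (hJ0 : 0 ≤ J) (hJ1 : J < (q:ℤ)) (hJd : (q:ℤ) ∣ J * ((r:ℤ) * p) - m)
    (hK0 : 0 ≤ K) (hK1 : K < (r:ℤ)) (hKd : (r:ℤ) ∣ K * ((p:ℤ) * q) - m) :
    chi p q r m = if I * ((q:ℤ) * r) + J * ((r:ℤ) * p) + K * ((p:ℤ) * q) = m then 1 else 0 := by
  have hp' : (0:ℤ) < p := by exact_mod_cast (by omega : 0 < p)
  have hq' : (0:ℤ) < q := by exact_mod_cast (by omega : 0 < q)
  have hr' : (0:ℤ) < r := by exact_mod_cast (by omega : 0 < r)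
  by_cases h : I * ((q:ℤ) * r) + J * ((r:ℤ) * p) + K * ((p:ℤ) * q) = m
  · have hex : ∃ i j k : ℕ, m = ((i * (q * r) + j * (r * p) + k * (p * q) : ℕ) : ℤ) := by
      refine ⟨I.toNat, J.toNat, K.toNat, ?_⟩
      push_cast [Int.toNat_of_nonneg hI0, Int.toNat_of_nonneg hJ0, Int.toNat_of_nonneg hK0]
      linarith
    simp only [chi]
    rw [if_pos hex, if_pos h]
  · have hnex : ¬ ∃ i j k : ℕ, m = ((i * (q * r) + j * (r * p) + k * (p * q) : ℕ) : ℤ) := by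
      rintro ⟨i, j, k, hijk⟩
      push_cast at hijk
      have hip : (i:ℤ) < p := by
        by_contra hc; push_neg at hc
        have hb1 : (p:ℤ) * ((q:ℤ) * r) ≤ (i:ℤ) * ((q:ℤ) * r) :=
          mul_le_mul_of_nonneg_right hc (by positivity)
        have hb2 : (0:ℤ) ≤ (j:ℤ) * ((r:ℤ) * p) := by positivity
        have hb3 : (0:ℤ) ≤ (k:ℤ) * ((p:ℤ) * q) := by positivity
        nlinarith
      have hjq : (j:ℤ) < q := by
        by_contra hc; push_neg at hc
        have hb1 : (q:ℤ) * ((r:ℤ) * p) ≤ (j:ℤ) * ((r:ℤ) * p) :=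
          mul_le_mul_of_nonneg_right hc (by positivity)
        have hb2 : (0:ℤ) ≤ (i:ℤ) * ((q:ℤ) * r) := by positivity
        have hb3 : (0:ℤ) ≤ (k:ℤ) * ((p:ℤ) * q) := by positivity
        nlinarith
      have hkr : (k:ℤ) < r := by
        by_contra hc; push_neg at hc
        have hb1 : (r:ℤ) * ((p:ℤ) * q) ≤ (k:ℤ) * ((p:ℤ) * q) :=
          mul_le_mul_of_nonneg_right hc (by positivity)
        have hb2 : (0:ℤ) ≤ (i:ℤ) * ((q:ℤ) * r) := by positivity
        have hb3 : (0:ℤ) ≤ (j:ℤ) * ((r:ℤ) * p) := by positivity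
        nlinarith
      have hiI : (i:ℤ) = I := by
        have hd1 : (p:ℤ) ∣ ((i:ℤ) - I) * ((q:ℤ) * r) := by
          obtain ⟨t, ht⟩ := hId
          exact ⟨-((j:ℤ) * r) - (k:ℤ) * q - t, by linear_combination -hijk - ht⟩
        obtain ⟨t, ht⟩ := hcp.dvd_of_dvd_mul_right hd1
        have hb1 : (-1) * (p:ℤ) < (p:ℤ) * t := by
          rw [← ht]; linarith [Int.natCast_nonneg i]
        have hb2 : (p:ℤ) * t < 1 * p := by rw [← ht]; linarith
        have ht0 : t = 0 := by have := mul_window _ _ _ _ hp' hb1 hb2; omega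
        rw [ht0, mul_zero] at ht; linarith
      have hjJ : (j:ℤ) = J := by
        have hd1 : (q:ℤ) ∣ ((j:ℤ) - J) * ((r:ℤ) * p) := by
          obtain ⟨t, ht⟩ := hJd
          exact ⟨-((i:ℤ) * r) - (k:ℤ) * p - t, by linear_combination -hijk - ht⟩
        obtain ⟨t, ht⟩ := hcq.dvd_of_dvd_mul_right hd1
        have hb1 : (-1) * (q:ℤ) < (q:ℤ) * t := by
          rw [← ht]; linarith [Int.natCast_nonneg j]
        have hb2 : (q:ℤ) * t < 1 * q := by rw [← ht]; linarith
        have ht0 : t = 0 := by have := mul_window _ _ _ _ hq' hb1 hb2; omega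
        rw [ht0, mul_zero] at ht; linarith
      have hkK : (k:ℤ) = K := by
        have hd1 : (r:ℤ) ∣ ((k:ℤ) - K) * ((p:ℤ) * q) := by
          obtain ⟨t, ht⟩ := hKd
          exact ⟨-((i:ℤ) * q) - (j:ℤ) * p - t, by linear_combination -hijk - ht⟩
        obtain ⟨t, ht⟩ := hcr.dvd_of_dvd_mul_right hd1
        have hb1 : (-1) * (r:ℤ) < (r:ℤ) * t := by
          rw [← ht]; linarith [Int.natCast_nonneg k]
        have hb2 : (r:ℤ) * t < 1 * r := by rw [← ht]; linarith
        have ht0 : t = 0 := by have := mul_window _ _ _ _ hr' hb1 hb2; omega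
        rw [ht0, mul_zero] at ht; linarith
      apply h
      rw [← hiI, ← hjJ, ← hkK]
      linarith
    simp only [chi]
    rw [if_neg hnex, if_neg h]
set_option maxHeartbeats 1000000 in
lemma final_comb (e0 a1 b1 c1 a2 b2 c2 a3 b3 c3
    x000 x100 x010 x001 x110 x101 x011 x111 : ℤ)
    (hbe0 : -1 < e0 ∧ e0 < 3)
    (hba1 : -1 < a1 ∧ a1 < 2) (hbb1 : -1 < b1 ∧ b1 < 2) (hbc1 : -1 < c1 ∧ c1 < 3)
    (hba2 : -1 < a2 ∧ a2 < 2) (hbb2 : -1 < b2 ∧ b2 < 2) (hbc2 : -1 < c2 ∧ c2 < 3)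
    (hba3 : -1 < a3 ∧ a3 < 2) (hbb3 : -1 < b3 ∧ b3 < 2) (hbc3 : -1 < c3 ∧ c3 < 3)
    (hdca1 : -1 < c1 - a1 ∧ c1 - a1 < 2) (hdcb1 : -1 < c1 - b1 ∧ c1 - b1 < 2)
    (hdca2 : -1 < c2 - a2 ∧ c2 - a2 < 2) (hdcb2 : -1 < c2 - b2 ∧ c2 - b2 < 2)
    (hdca3 : -1 < c3 - a3 ∧ c3 - a3 < 2) (hdcb3 : -1 < c3 - b3 ∧ c3 - b3 < 2)
    (hnn100 : 0 ≤ e0 - 1 + a2 + a3) (hnn010 : 0 ≤ e0 - 1 + a1 + b3)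
    (hnn001 : 0 ≤ e0 - 1 + b1 + b2) (hnn110 : 0 ≤ e0 - 2 + a1 + a2 + c3)
    (hnn101 : 0 ≤ e0 - 2 + b1 + c2 + a3) (hnn011 : 0 ≤ e0 - 2 + c1 + b2 + b3)
    (hnn111 : 0 ≤ e0 - 3 + c1 + c2 + c3)
    (d000 : (e0 = 0 ∧ x000 = 1) ∨ (e0 ≠ 0 ∧ x000 = 0))
    (d100 : (e0 - 1 + a2 + a3 = 0 ∧ x100 = 1) ∨ (e0 - 1 + a2 + a3 ≠ 0 ∧ x100 = 0))
    (d010 : (e0 - 1 + a1 + b3 = 0 ∧ x010 = 1) ∨ (e0 - 1 + a1 + b3 ≠ 0 ∧ x010 = 0))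
    (d001 : (e0 - 1 + b1 + b2 = 0 ∧ x001 = 1) ∨ (e0 - 1 + b1 + b2 ≠ 0 ∧ x001 = 0))
    (d110 : (e0 - 2 + a1 + a2 + c3 = 0 ∧ x110 = 1) ∨ (e0 - 2 + a1 + a2 + c3 ≠ 0 ∧ x110 = 0))
    (d101 : (e0 - 2 + b1 + c2 + a3 = 0 ∧ x101 = 1) ∨ (e0 - 2 + b1 + c2 + a3 ≠ 0 ∧ x101 = 0))
    (d011 : (e0 - 2 + c1 + b2 + b3 = 0 ∧ x011 = 1) ∨ (e0 - 2 + c1 + b2 + b3 ≠ 0 ∧ x011 = 0))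
    (d111 : (e0 - 3 + c1 + c2 + c3 = 0 ∧ x111 = 1) ∨ (e0 - 3 + c1 + c2 + c3 ≠ 0 ∧ x111 = 0)) :
    |x000 - (x100 + x010 + x001) + (x110 + x101 + x011) - x111| ≤ 1 := by
  rw [abs_le]
  omega

set_option maxHeartbeats 2000000 in
/-- For `n < r₁r₂r₃`, the alternating inclusion-exclusion sum of `χ` over the
sums of subsets of `{r₁, r₂, r₃}` has absolute value at most 1. -/
theorem stmt_8 (r₁ r₂ r₃ : ℕ) (h1 : 3 ≤ r₁) (h2 : 3 ≤ r₂) (h3 : 3 ≤ r₃)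
    (h12 : Nat.Coprime r₁ r₂) (h23 : Nat.Coprime r₂ r₃) (h31 : Nat.Coprime r₃ r₁)
    (n : ℤ) (hn : n < ((r₁ * r₂ * r₃ : ℕ) : ℤ)) :
    |chi r₁ r₂ r₃ n
        - (chi r₁ r₂ r₃ (n - r₁) + chi r₁ r₂ r₃ (n - r₂) + chi r₁ r₂ r₃ (n - r₃))
        + (chi r₁ r₂ r₃ (n - r₁ - r₂) + chi r₁ r₂ r₃ (n - r₁ - r₃) +
            chi r₁ r₂ r₃ (n - r₂ - r₃))
        - chi r₁ r₂ r₃ (n - r₁ - r₂ - r₃)| ≤ 1 := by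
  by_cases hneg : n < 0
  · rw [chi_neg r₁ r₂ r₃ n hneg, chi_neg r₁ r₂ r₃ _ (by omega), chi_neg r₁ r₂ r₃ _ (by omega),
      chi_neg r₁ r₂ r₃ _ (by omega), chi_neg r₁ r₂ r₃ _ (by omega),
      chi_neg r₁ r₂ r₃ _ (by omega), chi_neg r₁ r₂ r₃ _ (by omega),
      chi_neg r₁ r₂ r₃ _ (by omega)]
    norm_num
  push_neg at hneg
  push_cast at hn
  have h3P : (3:ℤ) ≤ (r₁:ℤ) := by exact_mod_cast h1
  have h3Q : (3:ℤ) ≤ (r₂:ℤ) := by exact_mod_cast h2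
  have h3R : (3:ℤ) ≤ (r₃:ℤ) := by exact_mod_cast h3
  have hp' : (0:ℤ) < (r₁:ℤ) := by linarith
  have hq' : (0:ℤ) < (r₂:ℤ) := by linarith
  have hr' : (0:ℤ) < (r₃:ℤ) := by linarith
  have hQR0 : (0:ℤ) < (r₂:ℤ) * r₃ := by positivity
  have hRP0 : (0:ℤ) < (r₃:ℤ) * r₁ := by positivity
  have hPQ0 : (0:ℤ) < (r₁:ℤ) * r₂ := by positivity
  have hMpos : (0:ℤ) < (r₁:ℤ) * r₂ * r₃ := by positivity
  have c12 : IsCoprime ((r₁:ℕ):ℤ) ((r₂:ℕ):ℤ) := by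
    rw [Nat.isCoprime_iff_coprime]; exact h12
  have c23 : IsCoprime ((r₂:ℕ):ℤ) ((r₃:ℕ):ℤ) := by
    rw [Nat.isCoprime_iff_coprime]; exact h23
  have c31 : IsCoprime ((r₃:ℕ):ℤ) ((r₁:ℕ):ℤ) := by
    rw [Nat.isCoprime_iff_coprime]; exact h31
  have c21 := c12.symm
  have c32 := c23.symm
  have c13 := c31.symm
  have hc_p : IsCoprime ((r₁:ℕ):ℤ) (((r₂:ℕ):ℤ) * ((r₃:ℕ):ℤ)) := c12.mul_right c13
  have hc_q : IsCoprime ((r₂:ℕ):ℤ) (((r₃:ℕ):ℤ) * ((r₁:ℕ):ℤ)) := c23.mul_right c21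
  have hc_r : IsCoprime ((r₃:ℕ):ℤ) (((r₁:ℕ):ℤ) * ((r₂:ℕ):ℤ)) := c31.mul_right c32
  obtain ⟨up, cp, hup⟩ := id hc_p
  obtain ⟨uq, cq, huq⟩ := id hc_q
  obtain ⟨ur, cr, hur⟩ := id hc_r
  -- residues mod r₁
  obtain ⟨Ia, hIa0, hIa1, hIad⟩ := res_spec (r₁:ℤ) ((r₂:ℤ) * r₃) up cp n hp' hup
  obtain ⟨Ib, hIb0, hIb1, hIbd⟩ := res_spec (r₁:ℤ) ((r₂:ℤ) * r₃) up cp (n - (r₂:ℤ)) hp' hup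
  obtain ⟨Ic, hIc0, hIc1, hIcd⟩ := res_spec (r₁:ℤ) ((r₂:ℤ) * r₃) up cp (n - (r₃:ℤ)) hp' hup
  obtain ⟨Iw, hIw0, hIw1, hIwd⟩ := res_spec (r₁:ℤ) ((r₂:ℤ) * r₃) up cp (n - (r₂:ℤ) - (r₃:ℤ)) hp' hup
  obtain ⟨spq, hspq0, hspq1, hspqd⟩ := res_spec (r₁:ℤ) ((r₂:ℤ) * r₃) up cp (r₂:ℤ) hp' hup
  obtain ⟨spr, hspr0, hspr1, hsprd⟩ := res_spec (r₁:ℤ) ((r₂:ℤ) * r₃) up cp (r₃:ℤ) hp' hup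
  -- residues mod r₂
  obtain ⟨Ja, hJa0, hJa1, hJad⟩ := res_spec (r₂:ℤ) ((r₃:ℤ) * r₁) uq cq n hq' huq
  obtain ⟨Jb, hJb0, hJb1, hJbd⟩ := res_spec (r₂:ℤ) ((r₃:ℤ) * r₁) uq cq (n - (r₁:ℤ)) hq' huq
  obtain ⟨Jc, hJc0, hJc1, hJcd⟩ := res_spec (r₂:ℤ) ((r₃:ℤ) * r₁) uq cq (n - (r₃:ℤ)) hq' huq
  obtain ⟨Jw, hJw0, hJw1, hJwd⟩ := res_spec (r₂:ℤ) ((r₃:ℤ) * r₁) uq cq (n - (r₁:ℤ) - (r₃:ℤ)) hq' huq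
  obtain ⟨sqp, hsqp0, hsqp1, hsqpd⟩ := res_spec (r₂:ℤ) ((r₃:ℤ) * r₁) uq cq (r₁:ℤ) hq' huq
  obtain ⟨sqr, hsqr0, hsqr1, hsqrd⟩ := res_spec (r₂:ℤ) ((r₃:ℤ) * r₁) uq cq (r₃:ℤ) hq' huq
  -- residues mod r₃
  obtain ⟨Ka, hKa0, hKa1, hKad⟩ := res_spec (r₃:ℤ) ((r₁:ℤ) * r₂) ur cr n hr' hur
  obtain ⟨Kb, hKb0, hKb1, hKbd⟩ := res_spec (r₃:ℤ) ((r₁:ℤ) * r₂) ur cr (n - (r₁:ℤ)) hr' hur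
  obtain ⟨Kc, hKc0, hKc1, hKcd⟩ := res_spec (r₃:ℤ) ((r₁:ℤ) * r₂) ur cr (n - (r₂:ℤ)) hr' hur
  obtain ⟨Kw, hKw0, hKw1, hKwd⟩ := res_spec (r₃:ℤ) ((r₁:ℤ) * r₂) ur cr (n - (r₁:ℤ) - (r₂:ℤ)) hr' hur
  obtain ⟨srp, hsrp0, hsrp1, hsrpd⟩ := res_spec (r₃:ℤ) ((r₁:ℤ) * r₂) ur cr (r₁:ℤ) hr' hur
  obtain ⟨srq, hsrq0, hsrq1, hsrqd⟩ := res_spec (r₃:ℤ) ((r₁:ℤ) * r₂) ur cr (r₂:ℤ) hr' hur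
  -- shift constants are ≥ 1
  have hspqP : 1 ≤ spq := shift_pos _ _ _ _ h3P c12 hspq0 hspqd
  have hsprP : 1 ≤ spr := shift_pos _ _ _ _ h3P c13 hspr0 hsprd
  have hsqpP : 1 ≤ sqp := shift_pos _ _ _ _ h3Q c21 hsqp0 hsqpd
  have hsqrP : 1 ≤ sqr := shift_pos _ _ _ _ h3Q c23 hsqr0 hsqrd
  have hsrpP : 1 ≤ srp := shift_pos _ _ _ _ h3R c31 hsrp0 hsrpd
  have hsrqP : 1 ≤ srq := shift_pos _ _ _ _ h3R c32 hsrq0 hsrqd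
  -- witnesses
  obtain ⟨tIa, htIa⟩ := hIad
  obtain ⟨tIb, htIb⟩ := hIbd
  obtain ⟨tIc, htIc⟩ := hIcd
  obtain ⟨tIw, htIw⟩ := hIwd
  obtain ⟨tspq, htspq⟩ := hspqd
  obtain ⟨tspr, htspr⟩ := hsprd
  obtain ⟨tJa, htJa⟩ := hJad
  obtain ⟨tJb, htJb⟩ := hJbd
  obtain ⟨tJc, htJc⟩ := hJcd
  obtain ⟨tJw, htJw⟩ := hJwd
  obtain ⟨tsqp, htsqp⟩ := hsqpd
  obtain ⟨tsqr, htsqr⟩ := hsqrd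
  obtain ⟨tKa, htKa⟩ := hKad
  obtain ⟨tKb, htKb⟩ := hKbd
  obtain ⟨tKc, htKc⟩ := hKcd
  obtain ⟨tKw, htKw⟩ := hKwd
  obtain ⟨tsrp, htsrp⟩ := hsrpd
  obtain ⟨tsrq, htsrq⟩ := hsrqd
  -- the three key inverse identities
  have hId1 : sqp * (r₃:ℤ) + srp * (r₂:ℤ) = 1 + (r₂:ℤ) * r₃ := by
    refine inv_identity _ _ _ _ h3Q h3R c23 hsqpP hsqp1 hsrpP hsrp1 ?_ ?_
    · exact c21.dvd_of_dvd_mul_left ⟨tsqp, by linear_combination htsqp⟩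
    · exact c31.dvd_of_dvd_mul_left ⟨tsrp, by linear_combination htsrp⟩
  have hId2 : spq * (r₃:ℤ) + srq * (r₁:ℤ) = 1 + (r₁:ℤ) * r₃ := by
    refine inv_identity _ _ _ _ h3P h3R c13 hspqP hspq1 hsrqP hsrq1 ?_ ?_
    · exact c12.dvd_of_dvd_mul_left ⟨tspq, by linear_combination htspq⟩
    · exact c32.dvd_of_dvd_mul_left ⟨tsrq, by linear_combination htsrq⟩
  have hId3 : spr * (r₂:ℤ) + sqr * (r₁:ℤ) = 1 + (r₁:ℤ) * r₂ := by
    refine inv_identity _ _ _ _ h3P h3Q c12 hsprP hspr1 hsqrP hsqr1 ?_ ?_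
    · exact c13.dvd_of_dvd_mul_left ⟨tspr, by linear_combination htspr⟩
    · exact c23.dvd_of_dvd_mul_left ⟨tsqr, by linear_combination htsqr⟩
  -- carries mod r₁
  obtain ⟨a1, ha1⟩ : ((r₁:ℕ):ℤ) ∣ Ib - Ia + spq :=
    hc_p.dvd_of_dvd_mul_right ⟨tIb - tIa + tspq, by linear_combination htIb - htIa + htspq⟩
  obtain ⟨b1, hb1⟩ : ((r₁:ℕ):ℤ) ∣ Ic - Ia + spr :=
    hc_p.dvd_of_dvd_mul_right ⟨tIc - tIa + tspr, by linear_combination htIc - htIa + htspr⟩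
  obtain ⟨c1, hc1⟩ : ((r₁:ℕ):ℤ) ∣ Iw - Ia + spq + spr :=
    hc_p.dvd_of_dvd_mul_right
      ⟨tIw - tIa + tspq + tspr, by linear_combination htIw - htIa + htspq + htspr⟩
  -- carries mod r₂
  obtain ⟨a2, ha2⟩ : ((r₂:ℕ):ℤ) ∣ Jb - Ja + sqp :=
    hc_q.dvd_of_dvd_mul_right ⟨tJb - tJa + tsqp, by linear_combination htJb - htJa + htsqp⟩
  obtain ⟨b2, hb2⟩ : ((r₂:ℕ):ℤ) ∣ Jc - Ja + sqr :=
    hc_q.dvd_of_dvd_mul_right ⟨tJc - tJa + tsqr, by linear_combination htJc - htJa + htsqr⟩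
  obtain ⟨c2, hc2⟩ : ((r₂:ℕ):ℤ) ∣ Jw - Ja + sqp + sqr :=
    hc_q.dvd_of_dvd_mul_right
      ⟨tJw - tJa + tsqp + tsqr, by linear_combination htJw - htJa + htsqp + htsqr⟩
  -- carries mod r₃
  obtain ⟨a3, ha3⟩ : ((r₃:ℕ):ℤ) ∣ Kb - Ka + srp :=
    hc_r.dvd_of_dvd_mul_right ⟨tKb - tKa + tsrp, by linear_combination htKb - htKa + htsrp⟩
  obtain ⟨b3, hb3⟩ : ((r₃:ℕ):ℤ) ∣ Kc - Ka + srq :=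
    hc_r.dvd_of_dvd_mul_right ⟨tKc - tKa + tsrq, by linear_combination htKc - htKa + htsrq⟩
  obtain ⟨c3, hc3⟩ : ((r₃:ℕ):ℤ) ∣ Kw - Ka + srp + srq :=
    hc_r.dvd_of_dvd_mul_right
      ⟨tKw - tKa + tsrp + tsrq, by linear_combination htKw - htKa + htsrp + htsrq⟩
  -- carry bounds
  have hba1 := mul_window (r₁:ℤ) a1 (-1) 2 hp' (by rw [← ha1]; linarith) (by rw [← ha1]; linarith)
  have hbb1 := mul_window (r₁:ℤ) b1 (-1) 2 hp' (by rw [← hb1]; linarith) (by rw [← hb1]; linarith)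
  have hbc1 := mul_window (r₁:ℤ) c1 (-1) 3 hp' (by rw [← hc1]; linarith) (by rw [← hc1]; linarith)
  have hba2 := mul_window (r₂:ℤ) a2 (-1) 2 hq' (by rw [← ha2]; linarith) (by rw [← ha2]; linarith)
  have hbb2 := mul_window (r₂:ℤ) b2 (-1) 2 hq' (by rw [← hb2]; linarith) (by rw [← hb2]; linarith)
  have hbc2 := mul_window (r₂:ℤ) c2 (-1) 3 hq' (by rw [← hc2]; linarith) (by rw [← hc2]; linarith)
  have hba3 := mul_window (r₃:ℤ) a3 (-1) 2 hr' (by rw [← ha3]; linarith) (by rw [← ha3]; linarith)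
  have hbb3 := mul_window (r₃:ℤ) b3 (-1) 2 hr' (by rw [← hb3]; linarith) (by rw [← hb3]; linarith)
  have hbc3 := mul_window (r₃:ℤ) c3 (-1) 3 hr' (by rw [← hc3]; linarith) (by rw [← hc3]; linarith)
  -- difference bounds c - a, c - b
  have hca1 : Iw - Ib + spr = (r₁:ℤ) * (c1 - a1) := by linear_combination hc1 - ha1
  have hcb1 : Iw - Ic + spq = (r₁:ℤ) * (c1 - b1) := by linear_combination hc1 - hb1
  have hca2 : Jw - Jb + sqr = (r₂:ℤ) * (c2 - a2) := by linear_combination hc2 - ha2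
  have hcb2 : Jw - Jc + sqp = (r₂:ℤ) * (c2 - b2) := by linear_combination hc2 - hb2
  have hca3 : Kw - Kb + srq = (r₃:ℤ) * (c3 - a3) := by linear_combination hc3 - ha3
  have hcb3 : Kw - Kc + srp = (r₃:ℤ) * (c3 - b3) := by linear_combination hc3 - hb3
  have hdca1 := mul_window (r₁:ℤ) (c1 - a1) (-1) 2 hp'
    (by rw [← hca1]; linarith) (by rw [← hca1]; linarith)
  have hdcb1 := mul_window (r₁:ℤ) (c1 - b1) (-1) 2 hp'
    (by rw [← hcb1]; linarith) (by rw [← hcb1]; linarith)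
  have hdca2 := mul_window (r₂:ℤ) (c2 - a2) (-1) 2 hq'
    (by rw [← hca2]; linarith) (by rw [← hca2]; linarith)
  have hdcb2 := mul_window (r₂:ℤ) (c2 - b2) (-1) 2 hq'
    (by rw [← hcb2]; linarith) (by rw [← hcb2]; linarith)
  have hdca3 := mul_window (r₃:ℤ) (c3 - a3) (-1) 2 hr'
    (by rw [← hca3]; linarith) (by rw [← hca3]; linarith)
  have hdcb3 := mul_window (r₃:ℤ) (c3 - b3) (-1) 2 hr'
    (by rw [← hcb3]; linarith) (by rw [← hcb3]; linarith)
  -- e0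
  obtain ⟨e0, he0⟩ : ((r₁:ℤ) * r₂ * r₃) ∣
      Ia * ((r₂:ℤ) * r₃) + Ja * ((r₃:ℤ) * r₁) + Ka * ((r₁:ℤ) * r₂) - n := by
    refine (IsCoprime.mul_left c13 c23).mul_dvd (c12.mul_dvd ?_ ?_) ?_
    · exact ⟨tIa + Ja * (r₃:ℤ) + Ka * (r₂:ℤ), by linear_combination htIa⟩
    · exact ⟨tJa + Ia * (r₃:ℤ) + Ka * (r₁:ℤ), by linear_combination htJa⟩
    · exact ⟨tKa + Ia * (r₂:ℤ) + Ja * (r₁:ℤ), by linear_combination htKa⟩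
  have hg00 : (0:ℤ) ≤ Ia * ((r₂:ℤ) * r₃) + Ja * ((r₃:ℤ) * r₁) + Ka * ((r₁:ℤ) * r₂) :=
    add_nonneg (add_nonneg (mul_nonneg hIa0 hQR0.le) (mul_nonneg hJa0 hRP0.le))
      (mul_nonneg hKa0 hPQ0.le)
  have hup1 : Ia * ((r₂:ℤ) * r₃) ≤ ((r₁:ℤ) - 1) * ((r₂:ℤ) * r₃) :=
    mul_le_mul_of_nonneg_right (by linarith) hQR0.le
  have hup2 : Ja * ((r₃:ℤ) * r₁) ≤ ((r₂:ℤ) - 1) * ((r₃:ℤ) * r₁) :=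
    mul_le_mul_of_nonneg_right (by linarith) hRP0.le
  have hup3 : Ka * ((r₁:ℤ) * r₂) ≤ ((r₃:ℤ) - 1) * ((r₁:ℤ) * r₂) :=
    mul_le_mul_of_nonneg_right (by linarith) hPQ0.le
  have hbe0 := mul_window ((r₁:ℤ) * r₂ * r₃) e0 (-1) 3 hMpos
    (by rw [← he0]; linarith) (by rw [← he0]; linarith)
  -- the eight g-identities
  have hg000 : Ia * ((r₂:ℤ) * r₃) + Ja * ((r₃:ℤ) * r₁) + Ka * ((r₁:ℤ) * r₂) =
      n + ((r₁:ℤ) * r₂ * r₃) * e0 := by linear_combination he0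
  have hg100 : Ia * ((r₂:ℤ) * r₃) + Jb * ((r₃:ℤ) * r₁) + Kb * ((r₁:ℤ) * r₂) =
      (n - (r₁:ℤ)) + ((r₁:ℤ) * r₂ * r₃) * (e0 - 1 + a2 + a3) := by
    linear_combination ((r₃:ℤ) * r₁) * ha2 + ((r₁:ℤ) * r₂) * ha3 + he0 - (r₁:ℤ) * hId1
  have hg010 : Ib * ((r₂:ℤ) * r₃) + Ja * ((r₃:ℤ) * r₁) + Kc * ((r₁:ℤ) * r₂) =
      (n - (r₂:ℤ)) + ((r₁:ℤ) * r₂ * r₃) * (e0 - 1 + a1 + b3) := by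
    linear_combination ((r₂:ℤ) * r₃) * ha1 + ((r₁:ℤ) * r₂) * hb3 + he0 - (r₂:ℤ) * hId2
  have hg001 : Ic * ((r₂:ℤ) * r₃) + Jc * ((r₃:ℤ) * r₁) + Ka * ((r₁:ℤ) * r₂) =
      (n - (r₃:ℤ)) + ((r₁:ℤ) * r₂ * r₃) * (e0 - 1 + b1 + b2) := by
    linear_combination ((r₂:ℤ) * r₃) * hb1 + ((r₃:ℤ) * r₁) * hb2 + he0 - (r₃:ℤ) * hId3
  have hg110 : Ib * ((r₂:ℤ) * r₃) + Jb * ((r₃:ℤ) * r₁) + Kw * ((r₁:ℤ) * r₂) =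
      (n - (r₁:ℤ) - (r₂:ℤ)) + ((r₁:ℤ) * r₂ * r₃) * (e0 - 2 + a1 + a2 + c3) := by
    linear_combination ((r₂:ℤ) * r₃) * ha1 + ((r₃:ℤ) * r₁) * ha2 + ((r₁:ℤ) * r₂) * hc3 +
      he0 - (r₁:ℤ) * hId1 - (r₂:ℤ) * hId2
  have hg101 : Ic * ((r₂:ℤ) * r₃) + Jw * ((r₃:ℤ) * r₁) + Kb * ((r₁:ℤ) * r₂) =
      (n - (r₁:ℤ) - (r₃:ℤ)) + ((r₁:ℤ) * r₂ * r₃) * (e0 - 2 + b1 + c2 + a3) := by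
    linear_combination ((r₂:ℤ) * r₃) * hb1 + ((r₃:ℤ) * r₁) * hc2 + ((r₁:ℤ) * r₂) * ha3 +
      he0 - (r₁:ℤ) * hId1 - (r₃:ℤ) * hId3
  have hg011 : Iw * ((r₂:ℤ) * r₃) + Jc * ((r₃:ℤ) * r₁) + Kc * ((r₁:ℤ) * r₂) =
      (n - (r₂:ℤ) - (r₃:ℤ)) + ((r₁:ℤ) * r₂ * r₃) * (e0 - 2 + c1 + b2 + b3) := by
    linear_combination ((r₂:ℤ) * r₃) * hc1 + ((r₃:ℤ) * r₁) * hb2 + ((r₁:ℤ) * r₂) * hb3 +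
      he0 - (r₂:ℤ) * hId2 - (r₃:ℤ) * hId3
  have hg111 : Iw * ((r₂:ℤ) * r₃) + Jw * ((r₃:ℤ) * r₁) + Kw * ((r₁:ℤ) * r₂) =
      (n - (r₁:ℤ) - (r₂:ℤ) - (r₃:ℤ)) + ((r₁:ℤ) * r₂ * r₃) * (e0 - 3 + c1 + c2 + c3) := by
    linear_combination ((r₂:ℤ) * r₃) * hc1 + ((r₃:ℤ) * r₁) * hc2 + ((r₁:ℤ) * r₂) * hc3 +
      he0 - (r₁:ℤ) * hId1 - (r₂:ℤ) * hId2 - (r₃:ℤ) * hId3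
  -- nonnegativity of the eight exponents
  have hnn000 : 0 ≤ e0 := by linarith [hbe0.1]
  have hnn100 : 0 ≤ e0 - 1 + a2 + a3 :=
    E_nonneg _ _ _ _ hMpos hg100
      (add_nonneg (add_nonneg (mul_nonneg hIa0 hQR0.le) (mul_nonneg hJb0 hRP0.le))
        (mul_nonneg hKb0 hPQ0.le)) (by linarith)
  have hnn010 : 0 ≤ e0 - 1 + a1 + b3 :=
    E_nonneg _ _ _ _ hMpos hg010
      (add_nonneg (add_nonneg (mul_nonneg hIb0 hQR0.le) (mul_nonneg hJa0 hRP0.le))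
        (mul_nonneg hKc0 hPQ0.le)) (by linarith)
  have hnn001 : 0 ≤ e0 - 1 + b1 + b2 :=
    E_nonneg _ _ _ _ hMpos hg001
      (add_nonneg (add_nonneg (mul_nonneg hIc0 hQR0.le) (mul_nonneg hJc0 hRP0.le))
        (mul_nonneg hKa0 hPQ0.le)) (by linarith)
  have hnn110 : 0 ≤ e0 - 2 + a1 + a2 + c3 :=
    E_nonneg _ _ _ _ hMpos hg110
      (add_nonneg (add_nonneg (mul_nonneg hIb0 hQR0.le) (mul_nonneg hJb0 hRP0.le))
        (mul_nonneg hKw0 hPQ0.le)) (by linarith)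
  have hnn101 : 0 ≤ e0 - 2 + b1 + c2 + a3 :=
    E_nonneg _ _ _ _ hMpos hg101
      (add_nonneg (add_nonneg (mul_nonneg hIc0 hQR0.le) (mul_nonneg hJw0 hRP0.le))
        (mul_nonneg hKb0 hPQ0.le)) (by linarith)
  have hnn011 : 0 ≤ e0 - 2 + c1 + b2 + b3 :=
    E_nonneg _ _ _ _ hMpos hg011
      (add_nonneg (add_nonneg (mul_nonneg hIw0 hQR0.le) (mul_nonneg hJc0 hRP0.le))
        (mul_nonneg hKc0 hPQ0.le)) (by linarith)
  have hnn111 : 0 ≤ e0 - 3 + c1 + c2 + c3 :=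
    E_nonneg _ _ _ _ hMpos hg111
      (add_nonneg (add_nonneg (mul_nonneg hIw0 hQR0.le) (mul_nonneg hJw0 hRP0.le))
        (mul_nonneg hKw0 hPQ0.le)) (by linarith)
  -- the eight chi computations
  have hchi000 : chi r₁ r₂ r₃ n = if e0 = 0 then 1 else 0 := by
    rw [chi_eq r₁ r₂ r₃ n Ia Ja Ka h1 h2 h3 (by linarith) hc_p hc_q hc_r
      hIa0 hIa1 ⟨tIa, by linear_combination htIa⟩
      hJa0 hJa1 ⟨tJa, by linear_combination htJa⟩
      hKa0 hKa1 ⟨tKa, by linear_combination htKa⟩]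
    exact if_shift _ _ _ _ hMpos hg000
  have hchi100 : chi r₁ r₂ r₃ (n - (r₁:ℤ)) = if e0 - 1 + a2 + a3 = 0 then 1 else 0 := by
    rw [chi_eq r₁ r₂ r₃ (n - (r₁:ℤ)) Ia Jb Kb h1 h2 h3 (by linarith) hc_p hc_q hc_r
      hIa0 hIa1 ⟨tIa + 1, by linear_combination htIa⟩
      hJb0 hJb1 ⟨tJb, by linear_combination htJb⟩
      hKb0 hKb1 ⟨tKb, by linear_combination htKb⟩]
    exact if_shift _ _ _ _ hMpos hg100
  have hchi010 : chi r₁ r₂ r₃ (n - (r₂:ℤ)) = if e0 - 1 + a1 + b3 = 0 then 1 else 0 := by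
    rw [chi_eq r₁ r₂ r₃ (n - (r₂:ℤ)) Ib Ja Kc h1 h2 h3 (by linarith) hc_p hc_q hc_r
      hIb0 hIb1 ⟨tIb, by linear_combination htIb⟩
      hJa0 hJa1 ⟨tJa + 1, by linear_combination htJa⟩
      hKc0 hKc1 ⟨tKc, by linear_combination htKc⟩]
    exact if_shift _ _ _ _ hMpos hg010
  have hchi001 : chi r₁ r₂ r₃ (n - (r₃:ℤ)) = if e0 - 1 + b1 + b2 = 0 then 1 else 0 := by
    rw [chi_eq r₁ r₂ r₃ (n - (r₃:ℤ)) Ic Jc Ka h1 h2 h3 (by linarith) hc_p hc_q hc_r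
      hIc0 hIc1 ⟨tIc, by linear_combination htIc⟩
      hJc0 hJc1 ⟨tJc, by linear_combination htJc⟩
      hKa0 hKa1 ⟨tKa + 1, by linear_combination htKa⟩]
    exact if_shift _ _ _ _ hMpos hg001
  have hchi110 : chi r₁ r₂ r₃ (n - (r₁:ℤ) - (r₂:ℤ)) =
      if e0 - 2 + a1 + a2 + c3 = 0 then 1 else 0 := by
    rw [chi_eq r₁ r₂ r₃ (n - (r₁:ℤ) - (r₂:ℤ)) Ib Jb Kw h1 h2 h3 (by linarith) hc_p hc_q hc_r
      hIb0 hIb1 ⟨tIb + 1, by linear_combination htIb⟩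
      hJb0 hJb1 ⟨tJb + 1, by linear_combination htJb⟩
      hKw0 hKw1 ⟨tKw, by linear_combination htKw⟩]
    exact if_shift _ _ _ _ hMpos hg110
  have hchi101 : chi r₁ r₂ r₃ (n - (r₁:ℤ) - (r₃:ℤ)) =
      if e0 - 2 + b1 + c2 + a3 = 0 then 1 else 0 := by
    rw [chi_eq r₁ r₂ r₃ (n - (r₁:ℤ) - (r₃:ℤ)) Ic Jw Kb h1 h2 h3 (by linarith) hc_p hc_q hc_r
      hIc0 hIc1 ⟨tIc + 1, by linear_combination htIc⟩
      hJw0 hJw1 ⟨tJw, by linear_combination htJw⟩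
      hKb0 hKb1 ⟨tKb + 1, by linear_combination htKb⟩]
    exact if_shift _ _ _ _ hMpos hg101
  have hchi011 : chi r₁ r₂ r₃ (n - (r₂:ℤ) - (r₃:ℤ)) =
      if e0 - 2 + c1 + b2 + b3 = 0 then 1 else 0 := by
    rw [chi_eq r₁ r₂ r₃ (n - (r₂:ℤ) - (r₃:ℤ)) Iw Jc Kc h1 h2 h3 (by linarith) hc_p hc_q hc_r
      hIw0 hIw1 ⟨tIw, by linear_combination htIw⟩
      hJc0 hJc1 ⟨tJc + 1, by linear_combination htJc⟩
      hKc0 hKc1 ⟨tKc + 1, by linear_combination htKc⟩]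
    exact if_shift _ _ _ _ hMpos hg011
  have hchi111 : chi r₁ r₂ r₃ (n - (r₁:ℤ) - (r₂:ℤ) - (r₃:ℤ)) =
      if e0 - 3 + c1 + c2 + c3 = 0 then 1 else 0 := by
    rw [chi_eq r₁ r₂ r₃ (n - (r₁:ℤ) - (r₂:ℤ) - (r₃:ℤ)) Iw Jw Kw h1 h2 h3 (by linarith)
      hc_p hc_q hc_r
      hIw0 hIw1 ⟨tIw + 1, by linear_combination htIw⟩
      hJw0 hJw1 ⟨tJw + 1, by linear_combination htJw⟩
      hKw0 hKw1 ⟨tKw + 1, by linear_combination htKw⟩]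
    exact if_shift _ _ _ _ hMpos hg111
  rw [hchi000, hchi100, hchi010, hchi001, hchi110, hchi101, hchi011, hchi111]
  exact final_comb e0 a1 b1 c1 a2 b2 c2 a3 b3 c3 _ _ _ _ _ _ _ _
    ⟨hbe0.1, hbe0.2⟩ hba1 hbb1 hbc1 hba2 hbb2 hbc2 hba3 hbb3 hbc3
    hdca1 hdcb1 hdca2 hdcb2 hdca3 hdcb3
    hnn100 hnn010 hnn001 hnn110 hnn101 hnn011 hnn111
    (if01 _ _ rfl) (if01 _ _ rfl) (if01 _ _ rfl) (if01 _ _ rfl)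
    (if01 _ _ rfl) (if01 _ _ rfl) (if01 _ _ rfl) (if01 _ _ rfl)
end

section
/- For every integer m, consecutive coefficients of Q_{p,q,r} differ by at most 1: |a_m(p,q,r) − a_{m−1}(p,q,r)| ≤ 1. -/
open Polynomial
open scoped Classical

/- ### Auxiliary machinery -/

noncomputable def ind (s : ℤ) : ℤ := if s = 0 then 1 else 0

lemma ind_spec (s : ℤ) : (s = 0 ∧ ind s = 1) ∨ (s ≠ 0 ∧ ind s = 0) := by
  unfold ind; split_ifs with h
  · exact Or.inl ⟨h, rfl⟩
  · exact Or.inr ⟨h, rfl⟩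

theorem absLemma (t a1 a2 a12 b1 b2 b12 c1 c2 c12 : ℤ)
    (ha1 : a1 = 0 ∨ a1 = 1) (ha2 : a2 = 0 ∨ a2 = 1)
    (hb1 : b1 = 0 ∨ b1 = 1) (hb2 : b2 = 0 ∨ b2 = 1)
    (hc1 : c1 = 0 ∨ c1 = 1) (hc2 : c2 = 0 ∨ c2 = 1)
    (ha12 : a1 ≤ a12 ∧ a2 ≤ a12 ∧ a12 ≤ a1 + 1 ∧ a12 ≤ a2 + 1)
    (hb12 : b1 ≤ b12 ∧ b2 ≤ b12 ∧ b12 ≤ b1 + 1 ∧ b12 ≤ b2 + 1)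
    (hc12 : c1 ≤ c12 ∧ c2 ≤ c12 ∧ c12 ≤ c1 + 1 ∧ c12 ≤ c2 + 1)
    (h0 : t ≤ 0) (h1 : t + 1 - a1 - c1 ≤ 0) (h2 : t + 1 - b1 - c2 ≤ 0)
    (h3 : t + 1 - a2 - b2 ≤ 0) (h4 : t + 2 - a1 - b1 - c12 ≤ 0)
    (h5 : t + 2 - a12 - b2 - c1 ≤ 0) (h6 : t + 2 - a2 - b12 - c2 ≤ 0)
    (h7 : t + 3 - a12 - b12 - c12 ≤ 0) :
    |ind t - ind (t + 1 - a1 - c1) - ind (t + 1 - b1 - c2) - ind (t + 1 - a2 - b2)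
      + ind (t + 2 - a1 - b1 - c12) + ind (t + 2 - a12 - b2 - c1)
      + ind (t + 2 - a2 - b12 - c2) - ind (t + 3 - a12 - b12 - c12)| ≤ 1 := by
  rw [abs_le]
  have s0 := ind_spec t
  have s1 := ind_spec (t + 1 - a1 - c1)
  have s2 := ind_spec (t + 1 - b1 - c2)
  have s3 := ind_spec (t + 1 - a2 - b2)
  have s4 := ind_spec (t + 2 - a1 - b1 - c12)
  have s5 := ind_spec (t + 2 - a12 - b2 - c1)
  have s6 := ind_spec (t + 2 - a2 - b12 - c2)
  have s7 := ind_spec (t + 3 - a12 - b12 - c12)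
  omega

lemma dvd_small {p d : ℤ} (hp : 0 < p) (h : p ∣ d) (h1 : -p < d) (h2 : d < p) : d = 0 := by
  obtain ⟨c, rfl⟩ := h
  have hc1 : c < 1 := by nlinarith
  have hc2 : -1 < c := by nlinarith
  have : c = 0 := by omega
  simp [this]

lemma uniq {p q r : ℤ} (hp : 0 < p) (hq : 0 < q) (hr : 0 < r)
    (cpq : IsCoprime p q) (cpr : IsCoprime p r) (cqr : IsCoprime q r)
    {i j k t i' j' k' t' : ℤ}
    (hi : 0 ≤ i) (hi2 : i < p) (hj : 0 ≤ j) (hj2 : j < q) (hk : 0 ≤ k) (hk2 : k < r)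
    (hi' : 0 ≤ i') (hi2' : i' < p) (hj' : 0 ≤ j') (hj2' : j' < q) (hk' : 0 ≤ k') (hk2' : k' < r)
    (heq : i*(q*r) + j*(r*p) + k*(p*q) + t*(p*q*r)
         = i'*(q*r) + j'*(r*p) + k'*(p*q) + t'*(p*q*r)) :
    i = i' ∧ j = j' ∧ k = k' ∧ t = t' := by
  have d1 : p ∣ (i - i') * (q*r) :=
    ⟨(j' - j)*r + (k' - k)*q + (t' - t)*(q*r), by linear_combination heq⟩
  have e1 : i = i' := by
    have := dvd_small hp ((cpq.mul_right cpr).dvd_of_dvd_mul_right d1) (by omega) (by omega)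
    omega
  have d2 : q ∣ (j - j') * (p*r) :=
    ⟨(i' - i)*r + (k' - k)*p + (t' - t)*(r*p), by linear_combination heq⟩
  have e2 : j = j' := by
    have := dvd_small hq ((cpq.symm.mul_right cqr).dvd_of_dvd_mul_right d2) (by omega) (by omega)
    omega
  have d3 : r ∣ (k - k') * (p*q) :=
    ⟨(i' - i)*q + (j' - j)*p + (t' - t)*(p*q), by linear_combination heq⟩
  have e3 : k = k' := by
    have := dvd_small hr ((cpr.symm.mul_right cqr.symm).dvd_of_dvd_mul_right d3) (by omega) (by omega)
    omega
  refine ⟨e1, e2, e3, ?_⟩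
  have h5 : (t - t') * (p*q*r) = 0 := by
    linear_combination heq - (q*r)*e1 - (r*p)*e2 - (p*q)*e3
  have hpos : 0 < p*q*r := by positivity
  rcases mul_eq_zero.mp h5 with h | h
  · omega
  · omega

lemma exrep {p q r : ℤ} (hp : 0 < p) (hq : 0 < q) (hr : 0 < r)
    (cpq : IsCoprime p q) (cpr : IsCoprime p r) (cqr : IsCoprime q r) (n : ℤ) :
    ∃ i j k t : ℤ, 0 ≤ i ∧ i < p ∧ 0 ≤ j ∧ j < q ∧ 0 ≤ k ∧ k < r ∧
      n = i*(q*r) + j*(r*p) + k*(p*q) + t*(p*q*r) := by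
  obtain ⟨a, b, hab⟩ := cpq.mul_right cpr
  obtain ⟨a', b', hab'⟩ := cpq.symm.mul_right cqr
  obtain ⟨a'', b'', hab''⟩ := cpr.symm.mul_right cqr.symm
  refine ⟨(n*b) % p, (n*b') % q, (n*b'') % r, ?_⟩
  set i := (n*b) % p with hidef
  set j := (n*b') % q with hjdef
  set k := (n*b'') % r with hkdef
  have hi0 : 0 ≤ i := Int.emod_nonneg _ (ne_of_gt hp)
  have hi1 : i < p := Int.emod_lt_of_pos _ hp
  have hj0 : 0 ≤ j := Int.emod_nonneg _ (ne_of_gt hq)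
  have hj1 : j < q := Int.emod_lt_of_pos _ hq
  have hk0 : 0 ≤ k := Int.emod_nonneg _ (ne_of_gt hr)
  have hk1 : k < r := Int.emod_lt_of_pos _ hr
  have hie : i = n*b - p*((n*b)/p) := Int.emod_def (n*b) p
  have hje : j = n*b' - q*((n*b')/q) := Int.emod_def (n*b') q
  have hke : k = n*b'' - r*((n*b'')/r) := Int.emod_def (n*b'') r
  have hdp : p ∣ n - (i*(q*r) + j*(r*p) + k*(p*q)) := by
    refine ⟨n*a + ((n*b)/p)*(q*r) - j*r - k*q, ?_⟩
    linear_combination (-(q*r))*hie - n*hab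
  have hdq : q ∣ n - (i*(q*r) + j*(r*p) + k*(p*q)) := by
    refine ⟨n*a' + ((n*b')/q)*(r*p) - i*r - k*p, ?_⟩
    linear_combination (-(r*p))*hje - n*hab'
  have hdr : r ∣ n - (i*(q*r) + j*(r*p) + k*(p*q)) := by
    refine ⟨n*a'' + ((n*b'')/r)*(p*q) - i*q - j*p, ?_⟩
    linear_combination (-(p*q))*hke - n*hab''
  have hdpq : p*q ∣ n - (i*(q*r) + j*(r*p) + k*(p*q)) := cpq.mul_dvd hdp hdq
  have hdpqr : p*q*r ∣ n - (i*(q*r) + j*(r*p) + k*(p*q)) :=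
    (cpr.mul_left cqr).mul_dvd hdpq hdr
  obtain ⟨t, ht⟩ := hdpqr
  exact ⟨t, hi0, hi1, hj0, hj1, hk0, hk1, by linear_combination ht⟩

lemma thresh {a b : ℤ} (ha : 3 ≤ a) (hb : 3 ≤ b) (hab : IsCoprime a b) :
    ∃ A C : ℤ, 1 ≤ A ∧ A ≤ a - 1 ∧ 1 ≤ C ∧ C ≤ b - 1 ∧ A * b + C * a = a * b + 1 := by
  obtain ⟨u, v, huv⟩ := hab.symm
  obtain ⟨A, hAdef⟩ : ∃ A : ℤ, A = 1 + (u - 1) % a := ⟨_, rfl⟩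
  have hA0 : 1 ≤ A := by
    have := Int.emod_nonneg (u-1) (by omega : a ≠ 0)
    omega
  have hAa : A ≤ a := by
    have := Int.emod_lt_of_pos (u-1) (by omega : 0 < a)
    omega
  have hAe : A = u - a*((u-1)/a) := by
    have := Int.emod_def (u-1) a
    omega
  have hCd : a ∣ a*b + 1 - A*b := by
    refine ⟨b + v + ((u-1)/a)*b, ?_⟩
    linear_combination (-b)*hAe - huv
  obtain ⟨C, hC⟩ := hCd
  have hid : A * b + C * a = a * b + 1 := by linear_combination -hC
  have hAne : A ≠ a := by
    intro h
    have hCa : C * a = 1 := by rw [h] at hid; linear_combination hid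
    have : a ≤ 1 := Int.le_of_dvd one_pos ⟨C, by linear_combination -hCa⟩
    omega
  have hC1 : 1 ≤ C := by
    rcases le_or_gt 1 C with h1 | h1
    · exact h1
    · exfalso; nlinarith
  have hC2 : C ≤ b - 1 := by
    rcases le_or_gt C (b-1) with h1 | h1
    · exact h1
    · exfalso; nlinarith
  exact ⟨A, C, hA0, by omega, hC1, hC2, hid⟩

lemma wrapstep {q A x : ℤ} (hq : 0 < q) (hA1 : 1 ≤ A) (hA2 : A ≤ q - 1)
    (hx1 : 0 ≤ x) (hx2 : x < q) :
    ∃ w x' : ℤ, (w = 0 ∨ w = 1) ∧ (w = 1 ↔ x < A) ∧ 0 ≤ x' ∧ x' < q ∧ x' = x - A + q*w := by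
  by_cases h : x < A
  · exact ⟨1, x - A + q, Or.inr rfl, by omega, by omega, by omega, by ring⟩
  · exact ⟨0, x - A, Or.inl rfl, by omega, by omega, by omega, by ring⟩

lemma tle {g1 g2 g3 P i j k T n : ℤ} (hP : 0 < P) (hg1 : 0 ≤ g1) (hg2 : 0 ≤ g2) (hg3 : 0 ≤ g3)
    (hi : 0 ≤ i) (hj : 0 ≤ j) (hk : 0 ≤ k)
    (hrep : n = i*g1 + j*g2 + k*g3 + T*P) (hn : n < P) : T ≤ 0 := by
  have h1 : 0 ≤ i*g1 := mul_nonneg hi hg1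
  have h2 : 0 ≤ j*g2 := mul_nonneg hj hg2
  have h3 : 0 ≤ k*g3 := mul_nonneg hk hg3
  have hTP : T*P < 1*P := by rw [one_mul]; linarith
  have := lt_of_mul_lt_mul_right hTP (le_of_lt hP)
  omega

lemma wrapPattern {q A1 A2 x x1 w1 w2 w12 : ℤ}
    (h1o : w1 = 0 ∨ w1 = 1) (h2o : w2 = 0 ∨ w2 = 1) (h12o : w12 = 0 ∨ w12 = 1)
    (h1i : w1 = 1 ↔ x < A1) (h2i : w2 = 1 ↔ x < A2) (h12i : w12 = 1 ↔ x1 < A2)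
    (hx1e : x1 = x - A1 + q*w1)
    (hA1a : 1 ≤ A1) (hA1b : A1 ≤ q - 1) (hA2a : 1 ≤ A2) (hA2b : A2 ≤ q - 1)
    (hx0 : 0 ≤ x) (hxq : x < q) :
    w1 ≤ w1 + w12 ∧ w2 ≤ w1 + w12 ∧ w1 + w12 ≤ w1 + 1 ∧ w1 + w12 ≤ w2 + 1 := by
  rcases h1o with h | h <;> subst h <;> rcases h12o with h' | h' <;> subst h' <;>
    simp only [mul_zero, mul_one] at hx1e <;> omega

noncomputable def boxE (p q r : ℕ) : Polynomial ℤ :=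
  ∑ x ∈ (Finset.range p ×ˢ Finset.range q ×ˢ Finset.range r),
    Polynomial.X ^ (x.1 * (q*r) + x.2.1 * (r*p) + x.2.2 * (p*q))

lemma aCoeff_neg (Q : Polynomial ℤ) (m : ℤ) (h : m < 0) : aCoeff Q m = 0 := by
  unfold aCoeff; rw [if_neg (by omega)]

lemma aCoeff_shift (A : Polynomial ℤ) (d : ℕ) (m : ℤ) :
    aCoeff (A * X ^ d) m = aCoeff A (m - d) := by
  unfold aCoeff
  by_cases h : 0 ≤ m
  · rw [if_pos h, Polynomial.coeff_mul_X_pow']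
    by_cases h2 : (d : ℤ) ≤ m
    · rw [if_pos (by omega), if_pos (by omega)]
      congr 1
      omega
    · rw [if_neg (by omega), if_neg (by omega)]
  · rw [if_neg h, if_neg (by omega)]

lemma aCoeff_mul_X_pow_sub_one (A : Polynomial ℤ) (d : ℕ) (m : ℤ) :
    aCoeff ((X ^ d - 1) * A) m = aCoeff A (m - d) - aCoeff A m := by
  have : (X ^ d - 1) * A = A * X ^ d - A := by ring
  rw [this, ← aCoeff_shift A d m]
  unfold aCoeff
  by_cases h : 0 ≤ m
  · simp [if_pos h, Polynomial.coeff_sub]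
  · simp [if_neg h]

lemma boxE_coeff (p q r : ℕ) (hp : 0 < p) (hq : 0 < q) (hr : 0 < r)
    (cpq : IsCoprime (p:ℤ) (q:ℤ)) (cpr : IsCoprime (p:ℤ) (r:ℤ)) (cqr : IsCoprime (q:ℤ) (r:ℤ))
    (n i j k t : ℤ) (hi : 0 ≤ i) (hi2 : i < p) (hj : 0 ≤ j) (hj2 : j < q)
    (hk : 0 ≤ k) (hk2 : k < r)
    (hrep : n = i*((q:ℤ)*r) + j*((r:ℤ)*p) + k*((p:ℤ)*q) + t*((p:ℤ)*q*r)) :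
    aCoeff (boxE p q r) n = ind t := by
  have hpz : (0:ℤ) < p := by exact_mod_cast hp
  have hqz : (0:ℤ) < q := by exact_mod_cast hq
  have hrz : (0:ℤ) < r := by exact_mod_cast hr
  by_cases ht : t = 0
  · subst ht
    have hn0 : 0 ≤ n := by
      rw [hrep]
      have h1 : 0 ≤ i*((q:ℤ)*r) := mul_nonneg hi (by positivity)
      have h2 : 0 ≤ j*((r:ℤ)*p) := mul_nonneg hj (by positivity)
      have h3 : 0 ≤ k*((p:ℤ)*q) := mul_nonneg hk (by positivity)
      omega
    rw [ind, if_pos rfl]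
    unfold aCoeff boxE
    rw [if_pos hn0, Polynomial.finset_sum_coeff]
    simp only [Polynomial.coeff_X_pow]
    rw [Finset.sum_eq_single_of_mem (⟨i.toNat, j.toNat, k.toNat⟩ : ℕ × ℕ × ℕ)]
    · rw [if_pos]
      have : (n.toNat : ℤ) = ((i.toNat * (q*r) + j.toNat * (r*p) + k.toNat * (p*q) : ℕ) : ℤ) := by
        push_cast
        rw [Int.toNat_of_nonneg hn0, Int.toNat_of_nonneg hi, Int.toNat_of_nonneg hj,
          Int.toNat_of_nonneg hk]
        linear_combination hrep
      exact_mod_cast this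
    · simp only [Finset.mem_product, Finset.mem_range]
      refine ⟨by omega, by omega, by omega⟩
    · intro x hx hne
      simp only [Finset.mem_product, Finset.mem_range] at hx
      rw [if_neg]
      intro hcon
      have hxz : n = (x.1:ℤ)*((q:ℤ)*r) + (x.2.1:ℤ)*((r:ℤ)*p) + (x.2.2:ℤ)*((p:ℤ)*q)
          + 0*((p:ℤ)*q*r) := by
        have : (n.toNat : ℤ) = ((x.1 * (q*r) + x.2.1 * (r*p) + x.2.2 * (p*q) : ℕ) : ℤ) := by
          exact_mod_cast congrArg (Nat.cast : ℕ → ℤ) hcon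
        rw [Int.toNat_of_nonneg hn0] at this
        push_cast at this
        linear_combination this
      obtain ⟨e1, e2, e3, -⟩ := uniq (i := (x.1:ℤ)) (j := (x.2.1:ℤ)) (k := (x.2.2:ℤ)) (t := 0)
        (i' := i) (j' := j) (k' := k) (t' := 0) hpz hqz hrz cpq cpr cqr
        (by positivity) (by exact_mod_cast hx.1) (by positivity) (by exact_mod_cast hx.2.1)
        (by positivity) (by exact_mod_cast hx.2.2) hi hi2 hj hj2 hk hk2
        (by linear_combination hrep - hxz)
      apply hne
      have : x.1 = i.toNat ∧ x.2.1 = j.toNat ∧ x.2.2 = k.toNat := by omega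
      obtain ⟨f1, f2, f3⟩ := this
      ext <;> simp [f1, f2, f3]
  · rw [ind, if_neg ht]
    unfold aCoeff
    by_cases hn0 : 0 ≤ n
    · rw [if_pos hn0]
      unfold boxE
      rw [Polynomial.finset_sum_coeff]
      simp only [Polynomial.coeff_X_pow]
      apply Finset.sum_eq_zero
      intro x hx
      simp only [Finset.mem_product, Finset.mem_range] at hx
      rw [if_neg]
      intro hcon
      have hxz : n = (x.1:ℤ)*((q:ℤ)*r) + (x.2.1:ℤ)*((r:ℤ)*p) + (x.2.2:ℤ)*((p:ℤ)*q)
          + 0*((p:ℤ)*q*r) := by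
        have : (n.toNat : ℤ) = ((x.1 * (q*r) + x.2.1 * (r*p) + x.2.2 * (p*q) : ℕ) : ℤ) := by
          exact_mod_cast congrArg (Nat.cast : ℕ → ℤ) hcon
        rw [Int.toNat_of_nonneg hn0] at this
        push_cast at this
        linear_combination this
      obtain ⟨-, -, -, e4⟩ := uniq (i := (x.1:ℤ)) (j := (x.2.1:ℤ)) (k := (x.2.2:ℤ)) (t := 0)
        (i' := i) (j' := j) (k' := k) (t' := t) hpz hqz hrz cpq cpr cqr
        (by positivity) (by exact_mod_cast hx.1) (by positivity) (by exact_mod_cast hx.2.1)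
        (by positivity) (by exact_mod_cast hx.2.2) hi hi2 hj hj2 hk hk2
        (by linear_combination hrep - hxz)
      exact ht e4.symm
    · rw [if_neg hn0]

lemma key_identity (p q r : ℕ) (hp : 3 ≤ p) (hq : 3 ≤ q) (hr : 3 ≤ r)
    (Q : Polynomial ℤ) (hQ : ternaryId p q r Q) :
    Q * ((X:Polynomial ℤ) - 1) * ((X:Polynomial ℤ)^(p*q*r) - 1)^2 =
      ((X:Polynomial ℤ)^r - 1) * (((X:Polynomial ℤ)^q - 1) * (((X:Polynomial ℤ)^p - 1)
        * boxE p q r)) := by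
  have hGp : (∑ i ∈ Finset.range p, ((X:Polynomial ℤ)^(q*r))^i) * ((X:Polynomial ℤ)^(q*r) - 1)
      = (X:Polynomial ℤ)^(p*q*r) - 1 := by
    have h := geom_sum_mul ((X:Polynomial ℤ)^(q*r)) p
    rw [← pow_mul, show q*r*p = p*q*r by ring] at h
    exact h
  have hGq : (∑ i ∈ Finset.range q, ((X:Polynomial ℤ)^(r*p))^i) * ((X:Polynomial ℤ)^(r*p) - 1)
      = (X:Polynomial ℤ)^(p*q*r) - 1 := by
    have h := geom_sum_mul ((X:Polynomial ℤ)^(r*p)) q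
    rw [← pow_mul, show r*p*q = p*q*r by ring] at h
    exact h
  have hGr : (∑ i ∈ Finset.range r, ((X:Polynomial ℤ)^(p*q))^i) * ((X:Polynomial ℤ)^(p*q) - 1)
      = (X:Polynomial ℤ)^(p*q*r) - 1 := by
    have h := geom_sum_mul ((X:Polynomial ℤ)^(p*q)) r
    rw [← pow_mul] at h
    exact h
  have hbox : boxE p q r = ∑ i ∈ Finset.range p, ∑ j ∈ Finset.range q, ∑ k ∈ Finset.range r,
      (X:Polynomial ℤ)^(i*(q*r) + j*(r*p) + k*(p*q)) := by
    unfold boxE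
    simp only [Finset.sum_product]
  have hGE : (∑ i ∈ Finset.range p, ((X:Polynomial ℤ)^(q*r))^i)
      * ((∑ i ∈ Finset.range q, ((X:Polynomial ℤ)^(r*p))^i)
      * (∑ i ∈ Finset.range r, ((X:Polynomial ℤ)^(p*q))^i)) = boxE p q r := by
    rw [hbox, Finset.sum_mul]
    apply Finset.sum_congr rfl
    intro i _
    rw [Finset.sum_mul, Finset.mul_sum]
    apply Finset.sum_congr rfl
    intro j _
    rw [Finset.mul_sum, Finset.mul_sum]
    apply Finset.sum_congr rfl
    intro k _
    rw [← pow_mul, ← pow_mul, ← pow_mul, ← pow_add, ← pow_add]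
    congr 1
    ring
  have hXP : ((X:Polynomial ℤ)^(p*q*r) - 1) ≠ 0 := by
    rw [← Polynomial.C_1]
    exact Polynomial.X_pow_sub_C_ne_zero (by positivity) 1
  apply mul_left_cancel₀ hXP
  unfold ternaryId at hQ
  linear_combination (-(Q * ((X:Polynomial ℤ) - 1) * ((X:Polynomial ℤ)^(p*q*r) - 1)^2)) * hGp
    - (Q * ((X:Polynomial ℤ) - 1) * ((∑ i ∈ Finset.range p, ((X:Polynomial ℤ)^(q*r))^i)
        * ((X:Polynomial ℤ)^(q*r) - 1)) * ((X:Polynomial ℤ)^(p*q*r) - 1)) * hGq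
    - (Q * ((X:Polynomial ℤ) - 1) * ((∑ i ∈ Finset.range p, ((X:Polynomial ℤ)^(q*r))^i)
        * ((X:Polynomial ℤ)^(q*r) - 1)) * ((∑ i ∈ Finset.range q, ((X:Polynomial ℤ)^(r*p))^i)
        * ((X:Polynomial ℤ)^(r*p) - 1))) * hGr
    + ((∑ i ∈ Finset.range p, ((X:Polynomial ℤ)^(q*r))^i)
        * ((∑ i ∈ Finset.range q, ((X:Polynomial ℤ)^(r*p))^i)
        * (∑ i ∈ Finset.range r, ((X:Polynomial ℤ)^(p*q))^i))) * hQ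
    + (((X:Polynomial ℤ)^(p*q*r) - 1) * ((X:Polynomial ℤ)^r - 1) * ((X:Polynomial ℤ)^q - 1)
        * ((X:Polynomial ℤ)^p - 1)) * hGE

lemma partA (p q r : ℕ) (hp : 3 ≤ p) (hq : 3 ≤ q) (hr : 3 ≤ r)
    (Q : Polynomial ℤ) (hQ : ternaryId p q r Q)
    (m : ℤ) (hm0 : 0 ≤ m) (hm1 : m < ((p*q*r : ℕ) : ℤ)) :
    aCoeff Q m - aCoeff Q (m - 1) =
      aCoeff (boxE p q r) m - aCoeff (boxE p q r) (m - p) - aCoeff (boxE p q r) (m - q)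
      - aCoeff (boxE p q r) (m - r) + aCoeff (boxE p q r) (m - q - p)
      + aCoeff (boxE p q r) (m - r - p) + aCoeff (boxE p q r) (m - r - q)
      - aCoeff (boxE p q r) (m - r - q - p) := by
  have hk := key_identity p q r hp hq hr Q hQ
  have h1 : aCoeff (Q * ((X:Polynomial ℤ) - 1) * ((X:Polynomial ℤ)^(p*q*r) - 1)^2) m
      = aCoeff (((X:Polynomial ℤ)^r - 1) * (((X:Polynomial ℤ)^q - 1)
        * (((X:Polynomial ℤ)^p - 1) * boxE p q r))) m := by rw [hk]
  have e : Q * ((X:Polynomial ℤ) - 1) * ((X:Polynomial ℤ)^(p*q*r) - 1)^2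
      = ((X:Polynomial ℤ)^(p*q*r) - 1) * (((X:Polynomial ℤ)^(p*q*r) - 1)
        * (((X:Polynomial ℤ)^(1:ℕ) - 1) * Q)) := by ring
  rw [e] at h1
  simp only [aCoeff_mul_X_pow_sub_one, Nat.cast_one] at h1
  rw [aCoeff_neg Q (m - ((p*q*r:ℕ):ℤ) - ((p*q*r:ℕ):ℤ) - 1) (by omega),
      aCoeff_neg Q (m - ((p*q*r:ℕ):ℤ) - ((p*q*r:ℕ):ℤ)) (by omega),
      aCoeff_neg Q (m - ((p*q*r:ℕ):ℤ) - 1) (by omega),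
      aCoeff_neg Q (m - ((p*q*r:ℕ):ℤ)) (by omega)] at h1
  linarith [h1]

lemma degQ_coeff_zero (p q r : ℕ) (hp : 3 ≤ p) (hq : 3 ≤ q) (hr : 3 ≤ r)
    (Q : Polynomial ℤ) (hQ : ternaryId p q r Q) :
    ∀ nn : ℕ, p*q*r ≤ nn + 1 → Q.coeff nn = 0 := by
  have hx : ∀ n : ℕ, 0 < n → ((X:Polynomial ℤ)^n - 1) ≠ 0 := by
    intro n hn; rw [← Polynomial.C_1]; exact Polynomial.X_pow_sub_C_ne_zero hn 1
  have hdx : ∀ n : ℕ, 0 < n → ((X:Polynomial ℤ)^n - 1).natDegree = n := by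
    intro n hn; rw [← Polynomial.C_1]; exact Polynomial.natDegree_X_pow_sub_C
  have hX1 : ((X:Polynomial ℤ) - 1) ≠ 0 := by
    rw [← Polynomial.C_1]; exact Polynomial.X_sub_C_ne_zero 1
  have hdX1 : ((X:Polynomial ℤ) - 1).natDegree = 1 := by
    rw [← Polynomial.C_1]; exact Polynomial.natDegree_X_sub_C 1
  have h1 : (0:ℕ) < q*r := by positivity
  have h2 : (0:ℕ) < r*p := by positivity
  have h3 : (0:ℕ) < p*q := by positivity
  have h4 : (0:ℕ) < p*q*r := by positivity
  have hQ0 : Q ≠ 0 := by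
    intro h
    unfold ternaryId at hQ
    rw [h, zero_mul] at hQ
    exact (mul_ne_zero (mul_ne_zero (mul_ne_zero (hx _ h4) (hx r (by omega)))
      (hx q (by omega))) (hx p (by omega))) hQ.symm
  unfold ternaryId at hQ
  have hL := congrArg Polynomial.natDegree hQ
  rw [Polynomial.natDegree_mul hQ0
      (mul_ne_zero (mul_ne_zero (mul_ne_zero (hx _ h1) (hx _ h2)) (hx _ h3)) hX1),
    Polynomial.natDegree_mul (mul_ne_zero (mul_ne_zero (hx _ h1) (hx _ h2)) (hx _ h3)) hX1,
    Polynomial.natDegree_mul (mul_ne_zero (hx _ h1) (hx _ h2)) (hx _ h3),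
    Polynomial.natDegree_mul (hx _ h1) (hx _ h2),
    Polynomial.natDegree_mul (mul_ne_zero (mul_ne_zero (hx _ h4) (hx r (by omega)))
      (hx q (by omega))) (hx p (by omega)),
    Polynomial.natDegree_mul (mul_ne_zero (hx _ h4) (hx r (by omega))) (hx q (by omega)),
    Polynomial.natDegree_mul (hx _ h4) (hx r (by omega)),
    hdx _ h1, hdx _ h2, hdx _ h3, hdx _ h4, hdX1,
    hdx r (by omega), hdx q (by omega), hdx p (by omega)] at hL
  have hb1 : 3*r ≤ q*r := Nat.mul_le_mul_right r hq
  have hb2 : 3*p ≤ r*p := Nat.mul_le_mul_right p hr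
  have hb3 : 3*q ≤ p*q := Nat.mul_le_mul_right q hp
  have key : Q.natDegree + 4 ≤ p*q*r := by linarith
  intro nn hnn
  exact Polynomial.coeff_eq_zero_of_natDegree_lt (by linarith)

set_option maxHeartbeats 2000000 in
/-- Consecutive coefficients of `Q_{p,q,r}` differ by at most 1. -/
theorem stmt_9 (p q r : ℕ) (hp : 3 ≤ p) (hq : 3 ≤ q) (hr : 3 ≤ r)
    (hpq : Nat.Coprime p q) (hqr : Nat.Coprime q r) (hrp : Nat.Coprime r p)
    (Q : Polynomial ℤ) (hQ : ternaryId p q r Q) :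
    ∀ m : ℤ, |aCoeff Q m - aCoeff Q (m - 1)| ≤ 1 := by
  intro m
  have cpq : IsCoprime (p:ℤ) (q:ℤ) := Nat.isCoprime_iff_coprime.mpr hpq
  have cqr : IsCoprime (q:ℤ) (r:ℤ) := Nat.isCoprime_iff_coprime.mpr hqr
  have cpr : IsCoprime (p:ℤ) (r:ℤ) := (Nat.isCoprime_iff_coprime.mpr hrp).symm
  have hpz : (0:ℤ) < p := by exact_mod_cast (by omega : 0 < p)
  have hqz : (0:ℤ) < q := by exact_mod_cast (by omega : 0 < q)
  have hrz : (0:ℤ) < r := by exact_mod_cast (by omega : 0 < r)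
  obtain ⟨N, hN⟩ : ∃ N : ℕ, N = p*q*r := ⟨_, rfl⟩
  have hNc : ((N:ℕ):ℤ) = (p:ℤ)*q*r := by rw [hN]; push_cast; ring
  by_cases hm0 : 0 ≤ m
  · by_cases hm1 : m < ((p*q*r : ℕ) : ℤ)
    · -- main case
      have hA := partA p q r hp hq hr Q hQ m hm0 hm1
      have hmN : m < (p:ℤ)*q*r := by rw [← hNc]; rw [← hN] at hm1; exact hm1
      obtain ⟨i, j, k, t, hi0, hi1, hj0, hj1, hk0, hk1, hrep⟩ :=
        exrep hpz hqz hrz cpq cpr cqr m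
      obtain ⟨A1, C1, hA1a, hA1b, hC1a, hC1b, hid1⟩ :=
        thresh (by exact_mod_cast hq) (by exact_mod_cast hr) cqr
      obtain ⟨B1, C2, hB1a, hB1b, hC2a, hC2b, hid2⟩ :=
        thresh (by exact_mod_cast hp) (by exact_mod_cast hr) cpr
      obtain ⟨B2, A2, hB2a, hB2b, hA2a, hA2b, hid3⟩ :=
        thresh (by exact_mod_cast hp) (by exact_mod_cast hq) cpq
      obtain ⟨a1, j1, ha1o, ha1i, hj1a, hj1b, hj1e⟩ := wrapstep hqz hA1a hA1b hj0 hj1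
      obtain ⟨a2, j2, ha2o, ha2i, hj2a, hj2b, hj2e⟩ := wrapstep hqz hA2a hA2b hj0 hj1
      obtain ⟨a12, j12, ha12o, ha12i, hj12a, hj12b, hj12e⟩ := wrapstep hqz hA2a hA2b hj1a hj1b
      obtain ⟨b1, i1, hb1o, hb1i, hi1a, hi1b, hi1e⟩ := wrapstep hpz hB1a hB1b hi0 hi1
      obtain ⟨b2, i2, hb2o, hb2i, hi2a, hi2b, hi2e⟩ := wrapstep hpz hB2a hB2b hi0 hi1
      obtain ⟨b12, i12, hb12o, hb12i, hi12a, hi12b, hi12e⟩ := wrapstep hpz hB2a hB2b hi1a hi1b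
      obtain ⟨c1, k1, hc1o, hc1i, hk1a, hk1b, hk1e⟩ := wrapstep hrz hC1a hC1b hk0 hk1
      obtain ⟨c2, k2, hc2o, hc2i, hk2a, hk2b, hk2e⟩ := wrapstep hrz hC2a hC2b hk0 hk1
      obtain ⟨c12, k12, hc12o, hc12i, hk12a, hk12b, hk12e⟩ := wrapstep hrz hC2a hC2b hk1a hk1b
      -- corner representations
      have R1 : m - (p:ℤ) = i*((q:ℤ)*r) + j1*((r:ℤ)*p) + k1*((p:ℤ)*q)
          + (t + 1 - a1 - c1)*((p:ℤ)*q*r) := by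
        linear_combination hrep - ((r:ℤ)*p)*hj1e - ((p:ℤ)*q)*hk1e + (p:ℤ)*hid1
      have R2 : m - (q:ℤ) = i1*((q:ℤ)*r) + j*((r:ℤ)*p) + k2*((p:ℤ)*q)
          + (t + 1 - b1 - c2)*((p:ℤ)*q*r) := by
        linear_combination hrep - ((q:ℤ)*r)*hi1e - ((p:ℤ)*q)*hk2e + (q:ℤ)*hid2
      have R3 : m - (r:ℤ) = i2*((q:ℤ)*r) + j2*((r:ℤ)*p) + k*((p:ℤ)*q)
          + (t + 1 - a2 - b2)*((p:ℤ)*q*r) := by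
        linear_combination hrep - ((q:ℤ)*r)*hi2e - ((r:ℤ)*p)*hj2e + (r:ℤ)*hid3
      have R4 : m - (q:ℤ) - (p:ℤ) = i1*((q:ℤ)*r) + j1*((r:ℤ)*p) + k12*((p:ℤ)*q)
          + (t + 2 - a1 - b1 - (c1 + c12))*((p:ℤ)*q*r) := by
        linear_combination hrep - ((q:ℤ)*r)*hi1e - ((r:ℤ)*p)*hj1e
          - ((p:ℤ)*q)*(hk12e) - ((p:ℤ)*q)*(hk1e) + (p:ℤ)*hid1 + (q:ℤ)*hid2
      have R5 : m - (r:ℤ) - (p:ℤ) = i2*((q:ℤ)*r) + j12*((r:ℤ)*p) + k1*((p:ℤ)*q)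
          + (t + 2 - (a1 + a12) - b2 - c1)*((p:ℤ)*q*r) := by
        linear_combination hrep - ((q:ℤ)*r)*hi2e - ((r:ℤ)*p)*(hj12e) - ((r:ℤ)*p)*(hj1e)
          - ((p:ℤ)*q)*hk1e + (p:ℤ)*hid1 + (r:ℤ)*hid3
      have R6 : m - (r:ℤ) - (q:ℤ) = i12*((q:ℤ)*r) + j2*((r:ℤ)*p) + k2*((p:ℤ)*q)
          + (t + 2 - a2 - (b1 + b12) - c2)*((p:ℤ)*q*r) := by
        linear_combination hrep - ((q:ℤ)*r)*(hi12e) - ((q:ℤ)*r)*(hi1e) - ((r:ℤ)*p)*hj2e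
          - ((p:ℤ)*q)*hk2e + (q:ℤ)*hid2 + (r:ℤ)*hid3
      have R7 : m - (r:ℤ) - (q:ℤ) - (p:ℤ) = i12*((q:ℤ)*r) + j12*((r:ℤ)*p) + k12*((p:ℤ)*q)
          + (t + 3 - (a1 + a12) - (b1 + b12) - (c1 + c12))*((p:ℤ)*q*r) := by
        linear_combination hrep - ((q:ℤ)*r)*(hi12e) - ((q:ℤ)*r)*(hi1e)
          - ((r:ℤ)*p)*(hj12e) - ((r:ℤ)*p)*(hj1e) - ((p:ℤ)*q)*(hk12e) - ((p:ℤ)*q)*(hk1e)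
          + (p:ℤ)*hid1 + (q:ℤ)*hid2 + (r:ℤ)*hid3
      -- coefficient evaluations
      have hp0 : 0 < p := by omega
      have hq0 : 0 < q := by omega
      have hr0 : 0 < r := by omega
      have E0 : aCoeff (boxE p q r) m = ind t :=
        boxE_coeff p q r hp0 hq0 hr0 cpq cpr cqr m i j k t hi0 hi1 hj0 hj1 hk0 hk1 hrep
      have E1 : aCoeff (boxE p q r) (m - (p:ℤ)) = ind (t + 1 - a1 - c1) :=
        boxE_coeff p q r hp0 hq0 hr0 cpq cpr cqr _ i j1 k1 _ hi0 hi1 hj1a hj1b hk1a hk1b R1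
      have E2 : aCoeff (boxE p q r) (m - (q:ℤ)) = ind (t + 1 - b1 - c2) :=
        boxE_coeff p q r hp0 hq0 hr0 cpq cpr cqr _ i1 j k2 _ hi1a hi1b hj0 hj1 hk2a hk2b R2
      have E3 : aCoeff (boxE p q r) (m - (r:ℤ)) = ind (t + 1 - a2 - b2) :=
        boxE_coeff p q r hp0 hq0 hr0 cpq cpr cqr _ i2 j2 k _ hi2a hi2b hj2a hj2b hk0 hk1 R3
      have E4 : aCoeff (boxE p q r) (m - (q:ℤ) - (p:ℤ)) = ind (t + 2 - a1 - b1 - (c1 + c12)) :=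
        boxE_coeff p q r hp0 hq0 hr0 cpq cpr cqr _ i1 j1 k12 _ hi1a hi1b hj1a hj1b hk12a hk12b R4
      have E5 : aCoeff (boxE p q r) (m - (r:ℤ) - (p:ℤ))
          = ind (t + 2 - (a1 + a12) - b2 - c1) :=
        boxE_coeff p q r hp0 hq0 hr0 cpq cpr cqr _ i2 j12 k1 _ hi2a hi2b hj12a hj12b hk1a hk1b R5
      have E6 : aCoeff (boxE p q r) (m - (r:ℤ) - (q:ℤ))
          = ind (t + 2 - a2 - (b1 + b12) - c2) :=
        boxE_coeff p q r hp0 hq0 hr0 cpq cpr cqr _ i12 j2 k2 _ hi12a hi12b hj2a hj2b hk2a hk2b R6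
      have E7 : aCoeff (boxE p q r) (m - (r:ℤ) - (q:ℤ) - (p:ℤ))
          = ind (t + 3 - (a1 + a12) - (b1 + b12) - (c1 + c12)) :=
        boxE_coeff p q r hp0 hq0 hr0 cpq cpr cqr _ i12 j12 k12 _ hi12a hi12b hj12a hj12b
          hk12a hk12b R7
      -- t bounds
      have hg1 : (0:ℤ) ≤ (q:ℤ)*r := by positivity
      have hg2 : (0:ℤ) ≤ (r:ℤ)*p := by positivity
      have hg3 : (0:ℤ) ≤ (p:ℤ)*q := by positivity
      have hPpos : (0:ℤ) < (p:ℤ)*q*r := by positivity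
      have T0 : t ≤ 0 := tle hPpos hg1 hg2 hg3 hi0 hj0 hk0 hrep hmN
      have T1 : t + 1 - a1 - c1 ≤ 0 :=
        tle hPpos hg1 hg2 hg3 hi0 hj1a hk1a R1 (by linarith)
      have T2 : t + 1 - b1 - c2 ≤ 0 :=
        tle hPpos hg1 hg2 hg3 hi1a hj0 hk2a R2 (by linarith)
      have T3 : t + 1 - a2 - b2 ≤ 0 :=
        tle hPpos hg1 hg2 hg3 hi2a hj2a hk0 R3 (by linarith)
      have T4 : t + 2 - a1 - b1 - (c1 + c12) ≤ 0 :=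
        tle hPpos hg1 hg2 hg3 hi1a hj1a hk12a R4 (by linarith)
      have T5 : t + 2 - (a1 + a12) - b2 - c1 ≤ 0 :=
        tle hPpos hg1 hg2 hg3 hi2a hj12a hk1a R5 (by linarith)
      have T6 : t + 2 - a2 - (b1 + b12) - c2 ≤ 0 :=
        tle hPpos hg1 hg2 hg3 hi12a hj2a hk2a R6 (by linarith)
      have T7 : t + 3 - (a1 + a12) - (b1 + b12) - (c1 + c12) ≤ 0 :=
        tle hPpos hg1 hg2 hg3 hi12a hj12a hk12a R7 (by linarith)
      -- wrap pattern constraints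
      have hpatA := wrapPattern ha1o ha2o ha12o ha1i ha2i ha12i hj1e hA1a hA1b hA2a hA2b hj0 hj1
      have hpatB := wrapPattern hb1o hb2o hb12o hb1i hb2i hb12i hi1e hB1a hB1b hB2a hB2b hi0 hi1
      have hpatC := wrapPattern hc1o hc2o hc12o hc1i hc2i hc12i hk1e hC1a hC1b hC2a hC2b hk0 hk1
      rw [hA, E0, E1, E2, E3, E4, E5, E6, E7]
      exact absLemma t a1 a2 (a1 + a12) b1 b2 (b1 + b12) c1 c2 (c1 + c12)
        ha1o ha2o hb1o hb2o hc1o hc2o hpatA hpatB hpatC T0 T1 T2 T3 T4 T5 T6 T7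
    · -- m ≥ pqr : both coefficients vanish
      push_neg at hm1
      have hmN : ((N:ℕ):ℤ) ≤ m := by rw [hN]; exact hm1
      have hz := degQ_coeff_zero p q r hp hq hr Q hQ
      have c1 : aCoeff Q m = 0 := by
        unfold aCoeff
        rw [if_pos hm0, hz m.toNat (by rw [← hN]; omega)]
      have c2 : aCoeff Q (m - 1) = 0 := by
        have hN3 : 3 ≤ N := by
          rw [hN]; calc 3 ≤ 3*3*3 := by norm_num
            _ ≤ p*q*r := Nat.mul_le_mul (Nat.mul_le_mul hp hq) hr
        unfold aCoeff
        rw [if_pos (by omega), hz (m-1).toNat (by rw [← hN]; omega)]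
      rw [c1, c2]
      norm_num
  · -- m < 0
    rw [aCoeff_neg Q m (by omega), aCoeff_neg Q (m - 1) (by omega)]
    norm_num
end
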